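/- arXiv:2603.06005 — 14 statements merged into one kernel-verified Lean document; each statement's English description precedes it below -/
import Mathlib

section
/- Let L be a Lie algebra with center Z(L), δ a complex number, and f a δ-biderivation of L. Then f(α,y) = 0 and f(y,α) = 0 for any α ∈ Z(L) and any y in the derived subalgebra [L,L]. -/
/-- A `δ`-biderivation of a complex Lie algebra `L`. -/
def IsBider (δ : ℂ) {L : Type*} [LieRing L] [LieAlgebra ℂ L]
    (f : L →ₗ[ℂ] L →ₗ[ℂ] L) : Prop :=
  (∀ x y z : L, δ • ⁅x, f y z⁆ + δ • ⁅f x z, y⁆ = f ⁅x, y⁆ z) ∧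
  (∀ x y z : L, δ • ⁅f x y, z⁆ + δ • ⁅y, f x z⁆ = f x ⁅y, z⁆)

theorem stmt1 {L : Type*} [LieRing L] [LieAlgebra ℂ L]
    (δ : ℂ) (f : L →ₗ[ℂ] L →ₗ[ℂ] L) (hf : IsBider δ f)
    (α y : L) (hα : α ∈ LieAlgebra.center ℂ L)
    (hy : y ∈ ⁅(⊤ : LieIdeal ℂ L), (⊤ : LieIdeal ℂ L)⁆) :
    f α y = 0 ∧ f y α = 0 := by
  rw [LieModule.mem_maxTrivSubmodule] at hα
  have hα' : ∀ x : L, ⁅α, x⁆ = 0 := fun x => by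
    rw [← lie_skew, hα x, neg_zero]
  -- Fact A : δ • ⁅f α z, y⁆ = 0
  have hA : ∀ y z : L, δ • ⁅f α z, y⁆ = 0 := by
    intro y z
    have := hf.1 α y z
    rw [hα' y, hα' (f y z)] at this
    simpa using this
  -- Fact B : δ • ⁅f x α, z⁆ = 0
  have hB : ∀ x z : L, δ • ⁅f x α, z⁆ = 0 := by
    intro x z
    have := hf.2 x α z
    rw [hα' z, hα' (f x z)] at this
    simpa using this
  -- Fact C : δ • ⁅y, f x α⁆ = 0
  have hC : ∀ x y : L, δ • ⁅y, f x α⁆ = 0 := by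
    intro x y
    have := hf.2 x y α
    simpa [hα (f x y), hα y] using this
  have hy' : y ∈ Submodule.span ℂ { m : L | ∃ x ∈ (⊤ : LieIdeal ℂ L), ∃ n ∈ (⊤ : LieIdeal ℂ L), ⁅x, n⁆ = m } := by
    rw [← LieSubmodule.lieIdeal_oper_eq_linear_span']
    exact hy
  refine Submodule.span_induction ?_ ?_ ?_ ?_ hy'
  · rintro m ⟨a, -, b, -, rfl⟩
    constructor
    · have h2 := hf.2 α a b
      rw [hA b a] at h2
      have : δ • ⁅a, f α b⁆ = 0 := by
        rw [← lie_skew a (f α b), smul_neg, hA a b, neg_zero]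
      rw [this] at h2
      simpa using h2.symm
    · have h1 := hf.1 a b α
      rw [hC b a, hB a b] at h1
      simpa using h1.symm
  · simp
  · rintro a b - - ⟨ha1, ha2⟩ ⟨hb1, hb2⟩
    constructor
    · simp [ha1, hb1]
    · simp [ha2, hb2]
  · rintro c a - ⟨ha1, ha2⟩
    constructor
    · simp [ha1]
    · simp [ha2]
end

section
/- Let L be a perfect Lie algebra (i.e. [L,L] = L), δ a complex number, and f a δ-biderivation of L such that f(x,y) ∈ Z(L) for all x,y ∈ L. Then f = 0. -/
theorem stmt2 {L : Type*} [LieRing L] [LieAlgebra ℂ L]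
    (hperf : ⁅(⊤ : LieIdeal ℂ L), (⊤ : LieIdeal ℂ L)⁆ = ⊤)
    (δ : ℂ) (f : L →ₗ[ℂ] L →ₗ[ℂ] L) (hf : IsBider δ f)
    (hcen : ∀ x y : L, f x y ∈ LieAlgebra.center ℂ L) :
    f = 0 := by
  have hc : ∀ x y z : L, ⁅z, f x y⁆ = 0 := fun x y z =>
    (LieModule.mem_maxTrivSubmodule ℂ L L (f x y)).1 (hcen x y) z
  have hc' : ∀ x y z : L, ⁅f x y, z⁆ = 0 := fun x y z => by
    rw [← lie_skew, hc, neg_zero]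
  -- f vanishes on brackets in the first argument
  have hbr : ∀ x y z : L, f ⁅x, y⁆ z = 0 := fun x y z => by
    rw [← hf.1 x y z, hc, hc']; simp
  -- define the kernel as a Lie ideal
  let N : LieIdeal ℂ L :=
    { toSubmodule := LinearMap.ker f
      lie_mem := fun {x m} _ =>
        LinearMap.mem_ker.2 (by ext z; exact hbr x m z) }
  have hN : (⊤ : LieIdeal ℂ L) ≤ N := by
    rw [← hperf, LieSubmodule.lieIdeal_oper_eq_span]
    apply LieSubmodule.lieSpan_le.2
    rintro w ⟨x, y, rfl⟩
    show f ⁅(x : L), (y : L)⁆ = 0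
    ext z
    exact hbr x y z
  ext x z
  have hx : x ∈ N := hN (LieSubmodule.mem_top x)
  have : f x = 0 := hx
  simp [this]
end

section
/- For each integer n, the bilinear map θ_n on the Witt algebra defined by θ_n(L_i, L_j) = L_{n+i+j} is a (1/2)-biderivation of the Witt algebra. -/
theorem stmt5 {W : Type*} [LieRing W] [LieAlgebra ℂ W]
    (B : Module.Basis ℤ ℂ W)
    (hB : ∀ m n : ℤ, ⁅B m, B n⁆ = ((m : ℂ) - n) • B (m + n))
    (n : ℤ) (f : W →ₗ[ℂ] W →ₗ[ℂ] W)
    (hfθ : ∀ i j : ℤ, f (B i) (B j) = B (n + i + j)) :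
    IsBider (1/2) f := by
  have key1 : ∀ a b c : ℤ,
      (1/2 : ℂ) • ⁅B a, f (B b) (B c)⁆ + (1/2 : ℂ) • ⁅f (B a) (B c), B b⁆
        = f ⁅B a, B b⁆ (B c) := by
    intro a b c
    rw [hfθ, hfθ, hB, hB, hB, map_smul, LinearMap.smul_apply, hfθ,
      smul_smul, smul_smul,
      show a + (n + b + c) = n + (a + b) + c by ring,
      show n + a + c + b = n + (a + b) + c by ring, ← add_smul]
    congr 1
    push_cast
    ring
  have key2 : ∀ a b c : ℤ,
      (1/2 : ℂ) • ⁅f (B a) (B b), B c⁆ + (1/2 : ℂ) • ⁅B b, f (B a) (B c)⁆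
        = f (B a) ⁅B b, B c⁆ := by
    intro a b c
    rw [hfθ, hfθ, hB, hB, hB, map_smul, hfθ,
      smul_smul, smul_smul,
      show n + a + b + c = n + a + (b + c) by ring,
      show b + (n + a + c) = n + a + (b + c) by ring, ← add_smul]
    congr 1
    push_cast
    ring
  constructor
  · -- first identity
    have step1 : ∀ (a b : ℤ) (z : W),
        (1/2 : ℂ) • ⁅B a, f (B b) z⁆ + (1/2 : ℂ) • ⁅f (B a) z, B b⁆
          = f ⁅B a, B b⁆ z := by
      intro a b
      have h : ((1/2 : ℂ) • ((LieAlgebra.ad ℂ W (B a)) ∘ₗ (f (B b)))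
          + (1/2 : ℂ) • ((-(LieAlgebra.ad ℂ W (B b))) ∘ₗ (f (B a))))
          = f ⁅B a, B b⁆ := by
        apply B.ext
        intro c
        simp only [LinearMap.add_apply, LinearMap.smul_apply, LinearMap.comp_apply,
          LinearMap.neg_apply, LieAlgebra.ad_apply]
        rw [show -⁅B b, f (B a) (B c)⁆ = ⁅f (B a) (B c), B b⁆ from lie_skew _ _]
        exact key1 a b c
      intro z
      have h2 := LinearMap.congr_fun h z
      simp only [LinearMap.add_apply, LinearMap.smul_apply, LinearMap.comp_apply,
        LinearMap.neg_apply, LieAlgebra.ad_apply] at h2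
      rw [show ⁅f (B a) z, B b⁆ = -⁅B b, f (B a) z⁆ from (lie_skew _ _).symm]
      exact h2
    have step2 : ∀ (a : ℤ) (y z : W),
        (1/2 : ℂ) • ⁅B a, f y z⁆ + (1/2 : ℂ) • ⁅f (B a) z, y⁆
          = f ⁅B a, y⁆ z := by
      intro a y z
      have h : ((1/2 : ℂ) • ((LieAlgebra.ad ℂ W (B a)) ∘ₗ (f.flip z))
          + (1/2 : ℂ) • (LieAlgebra.ad ℂ W (f (B a) z)))
          = (f.flip z) ∘ₗ (LieAlgebra.ad ℂ W (B a)) := by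
        apply B.ext
        intro b
        simp only [LinearMap.add_apply, LinearMap.smul_apply, LinearMap.comp_apply,
          LinearMap.flip_apply, LieAlgebra.ad_apply]
        exact step1 a b z
      have h2 := LinearMap.congr_fun h y
      simp only [LinearMap.add_apply, LinearMap.smul_apply, LinearMap.comp_apply,
        LinearMap.flip_apply, LieAlgebra.ad_apply] at h2
      exact h2
    intro x y z
    have h : ((1/2 : ℂ) • (-(LieAlgebra.ad ℂ W (f y z)))
        + (1/2 : ℂ) • ((-(LieAlgebra.ad ℂ W y)) ∘ₗ (f.flip z)))
        = (f.flip z) ∘ₗ (-(LieAlgebra.ad ℂ W y)) := by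
      apply B.ext
      intro a
      simp only [LinearMap.add_apply, LinearMap.smul_apply, LinearMap.comp_apply,
        LinearMap.neg_apply, LinearMap.flip_apply, LieAlgebra.ad_apply]
      rw [show -⁅f y z, B a⁆ = ⁅B a, f y z⁆ from lie_skew _ _,
        show -⁅y, f (B a) z⁆ = ⁅f (B a) z, y⁆ from lie_skew _ _,
        show -⁅y, B a⁆ = ⁅B a, y⁆ from lie_skew _ _]
      exact step2 a y z
    have h2 := LinearMap.congr_fun h x
    simp only [LinearMap.add_apply, LinearMap.smul_apply, LinearMap.comp_apply,
      LinearMap.neg_apply, LinearMap.flip_apply, LieAlgebra.ad_apply] at h2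
    rw [show -⁅f y z, x⁆ = ⁅x, f y z⁆ from lie_skew _ _,
      show -⁅y, f x z⁆ = ⁅f x z, y⁆ from lie_skew _ _,
      show -⁅y, x⁆ = ⁅x, y⁆ from lie_skew _ _] at h2
    exact h2
  · -- second identity
    have step1 : ∀ (a b : ℤ) (z : W),
        (1/2 : ℂ) • ⁅f (B a) (B b), z⁆ + (1/2 : ℂ) • ⁅B b, f (B a) z⁆
          = f (B a) ⁅B b, z⁆ := by
      intro a b
      have h : ((1/2 : ℂ) • (LieAlgebra.ad ℂ W (f (B a) (B b)))
          + (1/2 : ℂ) • ((LieAlgebra.ad ℂ W (B b)) ∘ₗ (f (B a))))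
          = (f (B a)) ∘ₗ (LieAlgebra.ad ℂ W (B b)) := by
        apply B.ext
        intro c
        simp only [LinearMap.add_apply, LinearMap.smul_apply, LinearMap.comp_apply,
          LieAlgebra.ad_apply]
        exact key2 a b c
      intro z
      have h2 := LinearMap.congr_fun h z
      simp only [LinearMap.add_apply, LinearMap.smul_apply, LinearMap.comp_apply,
        LieAlgebra.ad_apply] at h2
      exact h2
    have step2 : ∀ (a : ℤ) (y z : W),
        (1/2 : ℂ) • ⁅f (B a) y, z⁆ + (1/2 : ℂ) • ⁅y, f (B a) z⁆
          = f (B a) ⁅y, z⁆ := by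
      intro a y z
      have h : ((1/2 : ℂ) • ((-(LieAlgebra.ad ℂ W z)) ∘ₗ (f (B a)))
          + (1/2 : ℂ) • (-(LieAlgebra.ad ℂ W (f (B a) z))))
          = (f (B a)) ∘ₗ (-(LieAlgebra.ad ℂ W z)) := by
        apply B.ext
        intro b
        simp only [LinearMap.add_apply, LinearMap.smul_apply, LinearMap.comp_apply,
          LinearMap.neg_apply, LieAlgebra.ad_apply]
        rw [show -⁅z, f (B a) (B b)⁆ = ⁅f (B a) (B b), z⁆ from lie_skew _ _,
          show -⁅f (B a) z, B b⁆ = ⁅B b, f (B a) z⁆ from lie_skew _ _,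
          show -⁅z, B b⁆ = ⁅B b, z⁆ from lie_skew _ _]
        exact step1 a b z
      have h2 := LinearMap.congr_fun h y
      simp only [LinearMap.add_apply, LinearMap.smul_apply, LinearMap.comp_apply,
        LinearMap.neg_apply, LieAlgebra.ad_apply] at h2
      rw [show -⁅z, f (B a) y⁆ = ⁅f (B a) y, z⁆ from lie_skew _ _,
        show -⁅f (B a) z, y⁆ = ⁅y, f (B a) z⁆ from lie_skew _ _,
        show -⁅z, y⁆ = ⁅y, z⁆ from lie_skew _ _] at h2
      exact h2
    intro x y z
    have h : ((1/2 : ℂ) • ((-(LieAlgebra.ad ℂ W z)) ∘ₗ (f.flip y))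
        + (1/2 : ℂ) • ((LieAlgebra.ad ℂ W y) ∘ₗ (f.flip z)))
        = f.flip ⁅y, z⁆ := by
      apply B.ext
      intro a
      simp only [LinearMap.add_apply, LinearMap.smul_apply, LinearMap.comp_apply,
        LinearMap.neg_apply, LinearMap.flip_apply, LieAlgebra.ad_apply]
      rw [show -⁅z, f (B a) y⁆ = ⁅f (B a) y, z⁆ from lie_skew _ _]
      exact step2 a y z
    have h2 := LinearMap.congr_fun h x
    simp only [LinearMap.add_apply, LinearMap.smul_apply, LinearMap.comp_apply,
      LinearMap.neg_apply, LinearMap.flip_apply, LieAlgebra.ad_apply] at h2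
    rw [show -⁅z, f x y⁆ = ⁅f x y, z⁆ from lie_skew _ _] at h2
    exact h2
end

section
/- If δ ∉ {1/2, 1}, then every δ-biderivation of the Witt algebra is zero. -/
/-- Every `δ`-derivation of the Witt algebra is zero when `δ ∉ {1/2, 1}`. -/
lemma witt_delta_der_zero {W : Type*} [LieRing W] [LieAlgebra ℂ W]
    (B : Module.Basis ℤ ℂ W)
    (hB : ∀ m n : ℤ, ⁅B m, B n⁆ = ((m : ℂ) - n) • B (m + n))
    (δ : ℂ) (hδ : δ ≠ 1/2) (hδ' : δ ≠ 1)
    (D : W →ₗ[ℂ] W) (hD : ∀ x y : W, D ⁅x, y⁆ = δ • ⁅D x, y⁆ + δ • ⁅x, D y⁆) :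
    D = 0 := by
  have h2δ : (2*δ - 1 : ℂ) ≠ 0 := by
    intro h; apply hδ; linear_combination h/2
  have h1δ : (δ - 1 : ℂ) ≠ 0 := sub_ne_zero.mpr hδ'
  have h1δ' : (1 - δ : ℂ) ≠ 0 := fun h => h1δ (by linear_combination -h)
  -- coordinate description of the right-bracket with a basis vector
  have hrep : ∀ (n k : ℤ) (x : W),
      B.repr ⁅B n, x⁆ k = (2*(n:ℂ) - k) * B.repr x (k - n) := by
    intro n k x
    have hmaps : ((Finsupp.lapply k : (ℤ →₀ ℂ) →ₗ[ℂ] ℂ) ∘ₗ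
        (B.repr.toLinearMap ∘ₗ (LieModule.toEnd ℂ W W (B n) : W →ₗ[ℂ] W)))
        = (2*(n:ℂ) - k) • ((Finsupp.lapply (k - n) : (ℤ →₀ ℂ) →ₗ[ℂ] ℂ) ∘ₗ
            B.repr.toLinearMap) := by
      apply B.ext
      intro j
      simp only [LinearMap.comp_apply, LinearMap.smul_apply, Finsupp.lapply_apply,
        LinearEquiv.coe_toLinearMap, LieModule.toEnd_apply_apply, smul_eq_mul]
      rw [hB n j]
      simp only [map_smul, Finsupp.smul_apply, Module.Basis.repr_self, smul_eq_mul]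
      rw [Finsupp.single_apply, Finsupp.single_apply]
      by_cases h : n + j = k
      · subst h
        rw [if_pos rfl, if_pos (by omega : j = n + j - n)]
        push_cast; ring
      · have hj : ¬ (j = k - n) := by omega
        simp [h, hj]
    have := LinearMap.congr_fun hmaps x
    simpa using this
  have hrep' : ∀ (n k : ℤ) (x : W),
      B.repr ⁅x, B n⁆ k = ((k:ℂ) - 2*n) * B.repr x (k - n) := by
    intro n k x
    rw [← lie_skew x (B n), map_neg, Finsupp.neg_apply, hrep n k x]
    ring
  set c : ℤ → ℤ → ℂ := fun n k => B.repr (D (B n)) k with hc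
  have hE : ∀ m n k : ℤ, ((m:ℂ) - n) * c (m+n) k
      = δ*((k:ℂ) - 2*n) * c m (k-n) + δ*(2*(m:ℂ) - k) * c n (k-m) := by
    intro m n k
    have h0 := hD (B m) (B n)
    rw [hB m n, map_smul] at h0
    have h1 := congrArg (fun w => B.repr w k) h0
    simp only [map_add, map_smul, Finsupp.add_apply, Finsupp.smul_apply, smul_eq_mul] at h1
    rw [hrep' n k (D (B m)), hrep m k (D (B n))] at h1
    simp only [hc]
    linear_combination h1
  -- Step 1 : the coefficients of D (B 0) all vanish
  have hstep1 : ∀ s : ℤ, c 0 s = 0 := by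
    intro s
    have hA : ∀ n : ℤ, ((δ-1)*(n:ℂ) + δ*s) * c n (n+s) = δ*((s:ℂ)-n) * c 0 s := by
      intro n
      have h := hE 0 n (n+s)
      rw [show (0+n : ℤ) = n by ring, show (n+s-n : ℤ) = s by ring,
        show (n+s-0 : ℤ) = n+s by ring] at h
      push_cast at h ⊢
      linear_combination h
    have hA1 := hA 1
    have hAm1 := hA (-1)
    have hA2 := hA 2
    have hA3 := hA 3
    have hB1 := hE 1 (-1) s
    rw [show (1 + (-1) : ℤ) = 0 by ring, show (s - (-1) : ℤ) = 1+s by ring,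
      show (s - 1 : ℤ) = -1+s by ring, show (s : ℤ) = 0 + s by ring] at hB1
    rw [show ((0:ℤ) + s : ℤ) = s by ring] at hB1
    have hB2 := hE 2 1 (3+s)
    rw [show (2 + 1 : ℤ) = 3 by ring, show (3+s-1 : ℤ) = 2+s by ring,
      show (3+s-2 : ℤ) = 1+s by ring] at hB2
    push_cast at hA1 hAm1 hA2 hA3 hB1 hB2
    have hT : ((δ-1)*(2*δ-1)) * c 0 s = 0 := by
      have S : ℂ := (s : ℂ)
      linear_combination
        (((3*(δ-2)+δ*(s:ℂ))/12) * ((δ-1)+δ*(s:ℂ)) * (-(δ-1)+δ*(s:ℂ))) * hB1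
        + (((3*(δ-2)+δ*(s:ℂ))/12) * δ*(2+(s:ℂ)) * (-(δ-1)+δ*(s:ℂ))
            + (1/12) * δ*(1-(s:ℂ)) * (2*(δ-1)+δ*(s:ℂ)) * (3*(δ-1)+δ*(s:ℂ))) * hA1
        + (((3*(δ-2)+δ*(s:ℂ))/12) * δ*(2-(s:ℂ)) * ((δ-1)+δ*(s:ℂ))) * hAm1
        + ((1/12) * δ*(1+(s:ℂ)) * ((δ-1)+δ*(s:ℂ)) * (3*(δ-1)+δ*(s:ℂ))) * hA2
        - ((1/12) * ((δ-1)+δ*(s:ℂ)) * (2*(δ-1)+δ*(s:ℂ))) * hA3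
        + ((1/12) * ((δ-1)+δ*(s:ℂ)) * (2*(δ-1)+δ*(s:ℂ)) * (3*(δ-1)+δ*(s:ℂ))) * hB2
    rcases mul_eq_zero.mp hT with h | h
    · exact absurd h (mul_ne_zero h1δ h2δ)
    · exact h
  -- Step 2 : all coefficients vanish
  have haux : ∀ n k : ℤ, δ*(k:ℂ) - n ≠ 0 → c n k = 0 := by
    intro n k hnk
    have h := hE 0 n k
    rw [show (0+n : ℤ) = n by ring, show (k-0 : ℤ) = k by ring] at h
    rw [hstep1 (k-n)] at h
    have h2 : (δ*(k:ℂ) - n) * c n k = 0 := by push_cast at h ⊢; linear_combination h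
    exact (mul_eq_zero.mp h2).resolve_left hnk
  have hstep2 : ∀ n k : ℤ, c n k = 0 := by
    intro n k
    by_cases hnk : δ*(k:ℂ) - n = 0
    · have h := hE (-2*n-1) (3*n+1) k
      rw [show (-2*n-1 + (3*n+1) : ℤ) = n by ring] at h
      have t1 : c (-2*n-1) (k - (3*n+1)) = 0 := by
        apply haux
        intro hzero
        have h3 : ((3*n+1 : ℤ) : ℂ) ≠ 0 := by
          exact_mod_cast (by omega : (3*n+1 : ℤ) ≠ 0)
        apply mul_ne_zero h1δ' h3
        push_cast at hzero hnk ⊢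
        linear_combination hzero - hnk
      have t2 : c (3*n+1) (k - (-2*n-1)) = 0 := by
        apply haux
        intro hzero
        have h3 : ((2*n+1 : ℤ) : ℂ) ≠ 0 := by
          exact_mod_cast (by omega : (2*n+1 : ℤ) ≠ 0)
        apply mul_ne_zero h1δ' h3
        push_cast at hzero hnk ⊢
        linear_combination hnk - hzero
      rw [t1, t2] at h
      have h5 : ((-5*n-2 : ℤ) : ℂ) * c n k = 0 := by push_cast at h ⊢; linear_combination h
      have h6 : ((-5*n-2 : ℤ) : ℂ) ≠ 0 := by
        exact_mod_cast (by omega : (-5*n-2 : ℤ) ≠ 0)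
      exact (mul_eq_zero.mp h5).resolve_left h6
    · exact haux n k hnk
  -- conclude
  apply B.ext
  intro n
  have hz : B.repr (D (B n)) = 0 := Finsupp.ext fun k => hstep2 n k
  simpa using (LinearEquiv.map_eq_zero_iff B.repr).mp hz

theorem stmt6 {W : Type*} [LieRing W] [LieAlgebra ℂ W]
    (B : Module.Basis ℤ ℂ W)
    (hB : ∀ m n : ℤ, ⁅B m, B n⁆ = ((m : ℂ) - n) • B (m + n))
    (δ : ℂ) (hδ : δ ≠ 1/2) (hδ' : δ ≠ 1)
    (f : W →ₗ[ℂ] W →ₗ[ℂ] W) (hf : IsBider δ f) :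
    f = 0 := by
  ext x z
  have key := witt_delta_der_zero B hB δ hδ hδ' (f.flip z) (fun a b => by
    simp only [LinearMap.flip_apply]
    rw [← hf.1 a b z, add_comm])
  have := LinearMap.congr_fun key x
  simpa using this
end

section
/- Every 1-biderivation (biderivation) of the Witt algebra is a complex scalar multiple of the Lie bracket π(x,y) = [x,y]. -/
namespace Stmt7Aux

variable {W : Type*} [LieRing W] [LieAlgebra ℂ W]

/-- coefficients of `f` on the basis -/
noncomputable def wc (B : Module.Basis ℤ ℂ W) (f : W →ₗ[ℂ] W →ₗ[ℂ] W) (m n k : ℤ) : ℂ :=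
  B.repr (f (B m) (B n)) k

variable (B : Module.Basis ℤ ℂ W) (hB : ∀ m n : ℤ, ⁅B m, B n⁆ = ((m : ℂ) - n) • B (m + n))
  (f : W →ₗ[ℂ] W →ₗ[ℂ] W) (hf : IsBider 1 f)

include hB

lemma reprBr (q r : ℤ) (x : W) :
    B.repr ⁅x, B q⁆ r = ((r:ℂ) - 2*q) * B.repr x (r-q) := by
  have h : (Finsupp.lapply r ∘ₗ (B.repr.toLinearMap)) ∘ₗ (-((LieAlgebra.ad ℂ W) (B q)))
      = ((r:ℂ) - 2*q) • (Finsupp.lapply (r-q) ∘ₗ (B.repr.toLinearMap)) := by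
    apply B.ext
    intro k
    simp [LieAlgebra.ad_apply, Finsupp.single_apply]
    rw [← lie_skew, hB]
    simp [Finsupp.single_apply]
    split_ifs with h1 h2
    · obtain rfl : k = r - q := by omega
      push_cast; ring
    · exact absurd (by omega) h2
    · exact absurd (by omega : k + q = r) h1
    · simp
  have h2 := LinearMap.congr_fun h x
  simp only [LinearMap.comp_apply, LinearMap.neg_apply, LieAlgebra.ad_apply, map_neg,
    Finsupp.lapply_apply, LinearMap.smul_apply, smul_eq_mul, Finsupp.neg_apply] at h2
  rw [← lie_skew, map_neg] at h2
  simpa using h2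

lemma reprBl (q r : ℤ) (x : W) :
    B.repr ⁅B q, x⁆ r = (2*(q:ℂ) - r) * B.repr x (r-q) := by
  rw [← lie_skew, map_neg, Finsupp.neg_apply, reprBr B hB]
  ring

lemma key2 (hf : IsBider 1 f) (m p q r : ℤ) :
    ((r:ℂ)-2*q) * wc B f m p (r-q) + (2*(p:ℂ)-r) * wc B f m q (r-p)
      = ((p:ℂ)-q) * wc B f m (p+q) r := by
  have h := hf.2 (B m) (B p) (B q)
  simp only [one_smul] at h
  rw [hB p q, map_smul] at h
  have h2 := congrArg (fun z => (B.repr z) r) h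
  simp only [map_add, Finsupp.add_apply, map_smul, Finsupp.smul_apply, smul_eq_mul] at h2
  rw [reprBr B hB q r, reprBl B hB p r] at h2
  simpa [wc] using h2

lemma key1 (hf : IsBider 1 f) (m p q r : ℤ) :
    (2*(m:ℂ)-r) * wc B f p q (r-m) + ((r:ℂ)-2*p) * wc B f m q (r-p)
      = ((m:ℂ)-p) * wc B f (m+p) q r := by
  have h := hf.1 (B m) (B p) (B q)
  simp only [one_smul] at h
  rw [hB m p, map_smul] at h
  have h2 := congrArg (fun z => (B.repr z) r) h
  simp only [map_add, Finsupp.add_apply, LinearMap.smul_apply, map_smul,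
    Finsupp.smul_apply, smul_eq_mul] at h2
  rw [reprBl B hB m r, reprBr B hB p r] at h2
  simpa [wc] using h2

lemma lemA (hf : IsBider 1 f) (m n j : ℤ) :
    (j:ℂ) * wc B f m n (n+j) = ((j:ℂ)-n) * wc B f m 0 j := by
  have h := key2 B hB f hf m n 0 (n+j)
  rw [show n+j-(0:ℤ) = n+j from by ring, show n+j-n = j from by ring,
    show n+(0:ℤ) = n from by ring] at h
  push_cast at h ⊢
  linear_combination h

lemma lemB (hf : IsBider 1 f) (m q j : ℤ) :
    (j:ℂ) * wc B f m q (m+j) = ((j:ℂ)-m) * wc B f 0 q j := by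
  have h := key1 B hB f hf m 0 q (m+j)
  rw [show m+j-m = j from by ring, show m+j-(0:ℤ) = m+j from by ring,
    show m+(0:ℤ) = m from by ring] at h
  push_cast at h ⊢
  linear_combination h

lemma lemD (hf : IsBider 1 f) (m n w : ℤ) (hmn : m ≠ n) :
    (w:ℂ) * wc B f m n (m+n+w) = ((w:ℂ)-m-n) * wc B f 0 0 w := by
  have e1 := lemA B hB f hf m n (m+w)
  have e2 := lemB B hB f hf m 0 w
  have e3 := lemB B hB f hf m n (n+w)
  have e4 := lemA B hB f hf 0 n w
  rw [show n+(m+w) = m+n+w from by ring] at e1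
  rw [show m+(n+w) = m+n+w from by ring] at e3
  have hmn' : (m:ℂ) - n ≠ 0 := sub_ne_zero.mpr (by exact_mod_cast hmn)
  apply mul_left_cancel₀ hmn'
  push_cast at *
  linear_combination (w:ℂ)*e1 + ((m:ℂ)+w-n)*e2 - (w:ℂ)*e3 - ((n:ℂ)+w-m)*e4

lemma lemE (hf : IsBider 1 f) (w : ℤ) : wc B f 0 0 w = 0 := by
  have h := key2 B hB f hf 1 2 0 (w+3)
  rw [show w+3-(0:ℤ) = w+3 from by ring, show w+3-(2:ℤ) = w+1 from by ring,
    show (2:ℤ)+0 = 2 from by ring] at h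
  have d1 := lemD B hB f hf 1 2 w (by decide)
  have d2 := lemD B hB f hf 1 0 w (by decide)
  rw [show (1:ℤ)+2+w = w+3 from by ring] at d1
  rw [show (1:ℤ)+0+w = w+1 from by ring] at d2
  push_cast at *
  linear_combination (((w:ℂ)+1)*d1 + (1-(w:ℂ))*d2 - (w:ℂ)*h)/4

end Stmt7Aux

namespace Stmt7Aux
variable {W : Type*} [LieRing W] [LieAlgebra ℂ W]
variable (B : Module.Basis ℤ ℂ W) (hB : ∀ m n : ℤ, ⁅B m, B n⁆ = ((m : ℂ) - n) • B (m + n))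
  (f : W →ₗ[ℂ] W →ₗ[ℂ] W)

include hB

lemma vanishOff (hf : IsBider 1 f) (m n k : ℤ) (hmn : m ≠ n) (hk : k ≠ m+n) :
    wc B f m n k = 0 := by
  have h := lemD B hB f hf m n (k-m-n) hmn
  rw [lemE B hB f hf, show m+n+(k-m-n) = k from by ring, mul_zero] at h
  have hne : ((k-m-n : ℤ):ℂ) ≠ 0 := Int.cast_ne_zero.mpr (by omega)
  exact (mul_eq_zero.mp h).resolve_left hne

lemma vanish (hf : IsBider 1 f) (m n k : ℤ) (hk : k ≠ m+n) : wc B f m n k = 0 := by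
  by_cases hmn : m = n
  · subst hmn
    by_cases h0 : m = 0
    · subst h0; exact lemE B hB f hf k
    · by_cases hk2 : k = m
      · rw [hk2]
        have h := key2 B hB f hf m (3*m) (-2*m) m
        rw [show m - -2*m = 3*m from by ring, show m-3*m = -2*m from by ring,
          show 3*m + -2*m = m from by ring] at h
        rw [vanishOff B hB f hf m (3*m) (3*m) (by omega) (by omega),
          vanishOff B hB f hf m (-2*m) (-2*m) (by omega) (by omega)] at h
        have hm : (m:ℂ) ≠ 0 := Int.cast_ne_zero.mpr h0
        push_cast at h
        have h2 : (5*(m:ℂ)) * wc B f m m m = 0 := by linear_combination -h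
        rcases mul_eq_zero.mp h2 with h3 | h3
        · exact absurd h3 (by simpa using hm)
        · exact h3
      · have h := lemB B hB f hf m m (k-m)
        rw [show m + (k-m) = k from by ring,
          vanishOff B hB f hf 0 m (k-m) (Ne.symm h0) (by omega), mul_zero] at h
        have hne : ((k-m : ℤ):ℂ) ≠ 0 := Int.cast_ne_zero.mpr (by omega)
        exact (mul_eq_zero.mp h).resolve_left hne
  · exact vanishOff B hB f hf m n k hmn hk

lemma lemR1 (hf : IsBider 1 f) (m n : ℤ) (hmn : m ≠ n) :
    (n:ℂ) * wc B f m 0 m = -(m:ℂ) * wc B f 0 n n := by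
  have P := lemA B hB f hf m n m
  have Q := lemB B hB f hf m n n
  rw [show n+m = m+n from by ring] at P
  have hmn' : (m:ℂ) - n ≠ 0 := sub_ne_zero.mpr (by exact_mod_cast hmn)
  apply mul_left_cancel₀ hmn'
  linear_combination (m:ℂ)*Q - (n:ℂ)*P

lemma lemBeta (hf : IsBider 1 f) (n : ℤ) :
    wc B f 0 n n = -(n:ℂ) * wc B f 1 0 1 := by
  by_cases h0 : n = 0
  · subst h0; rw [lemE B hB f hf]; norm_num
  by_cases h1 : n = 1
  · subst h1
    have b3 : wc B f 0 3 3 = -(3:ℂ) * wc B f 1 0 1 := by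
      have h := lemR1 B hB f hf 1 3 (by decide)
      push_cast at h ⊢
      linear_combination h
    have a2 : wc B f 2 0 2 = 2 * wc B f 1 0 1 := by
      have h := lemR1 B hB f hf 2 3 (by decide)
      rw [b3] at h
      push_cast at h ⊢
      linear_combination h/3
    have h := lemR1 B hB f hf 2 1 (by decide)
    rw [a2] at h
    push_cast at h ⊢
    linear_combination h/2
  · have h := lemR1 B hB f hf 1 n (fun hh => h1 (by omega))
    push_cast at h ⊢
    linear_combination h

lemma lemAlpha (hf : IsBider 1 f) (m : ℤ) :
    wc B f m 0 m = (m:ℂ) * wc B f 1 0 1 := by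
  by_cases hm : m = -1
  · subst hm
    have h := lemR1 B hB f hf (-1) 1 (by decide)
    rw [lemBeta B hB f hf 1] at h
    push_cast at h ⊢
    linear_combination h
  · by_cases hm0 : m = 0
    · subst hm0; rw [lemE B hB f hf]; norm_num
    · have h := lemR1 B hB f hf m (m+1) (by omega)
      rw [lemBeta B hB f hf (m+1)] at h
      have hm1 : ((m:ℂ)+1) ≠ 0 := by
        have : ((m+1 : ℤ):ℂ) ≠ 0 := Int.cast_ne_zero.mpr (by omega)
        push_cast at this; exact this
      apply mul_left_cancel₀ hm1
      push_cast at h ⊢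
      linear_combination h

lemma lemVal (hf : IsBider 1 f) (m n : ℤ) :
    wc B f m n (m+n) = ((m:ℂ)-n) * wc B f 1 0 1 := by
  by_cases hm : m = 0
  · subst hm
    by_cases hn : n = 0
    · subst hn; rw [lemE B hB f hf]; norm_num
    · have Q := lemB B hB f hf 0 n n
      rw [lemBeta B hB f hf n] at Q
      have hn' : (n:ℂ) ≠ 0 := Int.cast_ne_zero.mpr hn
      apply mul_left_cancel₀ hn'
      push_cast at Q ⊢
      linear_combination Q
  · have P := lemA B hB f hf m n m
    rw [show n+m = m+n from by ring, lemAlpha B hB f hf m] at P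
    have hm' : (m:ℂ) ≠ 0 := Int.cast_ne_zero.mpr hm
    apply mul_left_cancel₀ hm'
    linear_combination P

end Stmt7Aux

theorem stmt7 {W : Type*} [LieRing W] [LieAlgebra ℂ W]
    (B : Module.Basis ℤ ℂ W)
    (hB : ∀ m n : ℤ, ⁅B m, B n⁆ = ((m : ℂ) - n) • B (m + n))
    (f : W →ₗ[ℂ] W →ₗ[ℂ] W) (hf : IsBider 1 f) :
    ∃ c : ℂ, ∀ x y : W, f x y = c • ⁅x, y⁆ := by
  have wcdef : ∀ m n k : ℤ, Stmt7Aux.wc B f m n k = B.repr (f (B m) (B n)) k := fun _ _ _ => rfl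
  have vanish := Stmt7Aux.vanish B hB f hf
  have lemVal := Stmt7Aux.lemVal B hB f hf
  set c := Stmt7Aux.wc B f 1 0 1 with hc
  have key : ∀ m n : ℤ, f (B m) (B n) = c • ⁅B m, B n⁆ := by
    intro m n
    rw [hB m n]
    apply B.repr.injective
    ext k
    rw [map_smul, map_smul, Finsupp.smul_apply, Finsupp.smul_apply, B.repr_self,
      Finsupp.single_apply]
    rw [← wcdef]
    by_cases hk : k = m + n
    · rw [hk, lemVal m n]
      simp
      ring
    · rw [vanish m n k hk]
      simp [Ne.symm hk]
  refine ⟨c, ?_⟩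
  have hg : f = LinearMap.mk₂ ℂ (fun x y => c • ⁅x, y⁆)
      (fun x₁ x₂ y => show c • ⁅x₁ + x₂, y⁆ = c • ⁅x₁, y⁆ + c • ⁅x₂, y⁆ by rw [add_lie, smul_add])
      (fun t x y => show c • ⁅t • x, y⁆ = t • (c • ⁅x, y⁆) by rw [smul_lie, smul_comm])
      (fun x y₁ y₂ => show c • ⁅x, y₁ + y₂⁆ = c • ⁅x, y₁⁆ + c • ⁅x, y₂⁆ by rw [lie_add, smul_add])
      (fun t x y => show c • ⁅x, t • y⁆ = t • (c • ⁅x, y⁆) by rw [lie_smul, smul_comm]) := by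
    apply B.ext; intro m; apply B.ext; intro n
    simpa [LinearMap.mk₂_apply] using key m n
  intro x y
  rw [hg]
  rfl
end

section
/- Every (1/2)-biderivation of the Witt algebra is a finite linear combination of the maps θ_n (n ∈ ℤ), where θ_n(L_i, L_j) = L_{n+i+j}. -/
section aux
variable {W : Type*} [LieRing W] [LieAlgebra ℂ W] (B : Module.Basis ℤ ℂ W)
  (hB : ∀ m n : ℤ, ⁅B m, B n⁆ = ((m : ℂ) - n) • B (m + n))

include hB in
lemma reprL (m s : ℤ) (v : W) :
    B.repr ⁅B m, v⁆ s = (2*(m:ℂ) - s) * B.repr v (s - m) := by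
  have key : ((Finsupp.lapply s : (ℤ →₀ ℂ) →ₗ[ℂ] ℂ).comp
      (B.repr.toLinearMap.comp (LieAlgebra.ad ℂ W (B m))))
      = (2*(m:ℂ) - s) • ((Finsupp.lapply (s-m) : (ℤ →₀ ℂ) →ₗ[ℂ] ℂ).comp B.repr.toLinearMap) := by
    apply B.ext
    intro k
    simp [LieAlgebra.ad_apply, hB, Finsupp.single_apply]
    rcases eq_or_ne k (s - m) with h | h
    · subst h
      simp [show m + (s-m) = s by ring]
      ring
    · simp [h, show ¬ (m + k = s) by omega]
  have := LinearMap.congr_fun key v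
  simpa using this

include hB in
lemma reprR (n s : ℤ) (v : W) :
    B.repr ⁅v, B n⁆ s = ((s:ℂ) - 2*n) * B.repr v (s - n) := by
  rw [← lie_skew, map_neg, Finsupp.neg_apply, reprL B hB]
  ring

end aux

section der
variable {W : Type*} [LieRing W] [LieAlgebra ℂ W] (B : Module.Basis ℤ ℂ W)
  (hB : ∀ m n : ℤ, ⁅B m, B n⁆ = ((m : ℂ) - n) • B (m + n))
  (D : W →ₗ[ℂ] W)
  (hD : ∀ y z : W, D ⁅y, z⁆ = (1/2 : ℂ) • ⁅D y, z⁆ + (1/2 : ℂ) • ⁅y, D z⁆)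

include hB hD in
lemma rel (m n s : ℤ) :
    ((m:ℂ) - n) * B.repr (D (B (m+n))) s =
      (1/2) * (((s:ℂ) - 2*n) * B.repr (D (B m)) (s-n)) +
      (1/2) * ((2*(m:ℂ) - s) * B.repr (D (B n)) (s-m)) := by
  have h := hD (B m) (B n)
  rw [hB] at h
  have h2 := congrArg (fun w => B.repr w s) h
  simp only [map_smul, map_add, Finsupp.smul_apply, Finsupp.add_apply, smul_eq_mul,
    reprL B hB, reprR B hB] at h2
  linear_combination h2

include hB hD in
lemma step1 (i s : ℤ) (hs : s ≠ 2*i) :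
    B.repr (D (B i)) s = B.repr (D (B 0)) (s - i) := by
  have h := rel B hB D hD 0 i s
  simp only [zero_add, Int.cast_zero, zero_sub, sub_zero, mul_zero, zero_mul] at h
  have hne : (s:ℂ) - 2*i ≠ 0 := by
    intro hc
    apply hs
    have : (s:ℂ) = ((2*i : ℤ) : ℂ) := by push_cast; linear_combination hc
    exact_mod_cast this
  have h3 : ((s:ℂ) - 2*i) * (B.repr (D (B i)) s - B.repr (D (B 0)) (s - i)) = 0 := by
    linear_combination 2 * h
  rcases mul_eq_zero.1 h3 with h4 | h4
  · exact absurd h4 hne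
  · exact sub_eq_zero.1 h4

include hB hD in
lemma der_shift (i s : ℤ) :
    B.repr (D (B i)) s = B.repr (D (B 0)) (s - i) := by
  rcases eq_or_ne i 0 with rfl | hi
  · simp
  rcases eq_or_ne s (2*i) with rfl | hs
  · -- need r(i, 2i) = r(0, i)
    rw [show (2*i:ℤ) - i = i from by omega]
    have h := rel B hB D hD i (-i) i
    simp only [show i + -i = 0 from by omega, show i - -i = 2*i from by omega,
      show i - i = 0 from by omega, Int.cast_neg] at h
    have h1 : B.repr (D (B (-i))) 0 = B.repr (D (B 0)) (0 - -i) := by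
      apply step1 B hB D hD
      omega
    rw [h1, show (0 : ℤ) - -i = i from by omega] at h
    have hi' : (i:ℂ) ≠ 0 := Int.cast_ne_zero.2 hi
    have h3 : (3*(i:ℂ)) * (B.repr (D (B i)) (2*i) - B.repr (D (B 0)) i) = 0 := by
      linear_combination -2*h
    rcases mul_eq_zero.1 h3 with h4 | h4
    · exact absurd h4 (by simpa using hi')
    · exact sub_eq_zero.1 h4
  · exact step1 B hB D hD i s hs

end der


theorem stmt8 {W : Type*} [LieRing W] [LieAlgebra ℂ W]
    (B : Module.Basis ℤ ℂ W)
    (hB : ∀ m n : ℤ, ⁅B m, B n⁆ = ((m : ℂ) - n) • B (m + n))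
    (f : W →ₗ[ℂ] W →ₗ[ℂ] W) (hf : IsBider (1/2) f) :
    ∃ c : ℤ →₀ ℂ, ∀ i j : ℤ,
      f (B i) (B j) = c.sum fun n t => t • B (n + i + j) := by
  obtain ⟨hf1, hf2⟩ := hf
  refine ⟨B.repr (f (B 0) (B 0)), fun i j => ?_⟩
  set c := B.repr (f (B 0) (B 0)) with hc
  -- inner derivation: for fixed x, f x is a 1/2-derivation
  have hrepr : ∀ s : ℤ, B.repr (f (B i) (B j)) s = c (s - i - j) := by
    intro s
    have hD1 : ∀ y z : W, (f (B i)) ⁅y, z⁆ =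
        (1/2 : ℂ) • ⁅f (B i) y, z⁆ + (1/2 : ℂ) • ⁅y, f (B i) z⁆ :=
      fun y z => (hf2 (B i) y z).symm
    have e1 : B.repr (f (B i) (B j)) s = B.repr (f (B i) (B 0)) (s - j) :=
      der_shift B hB (f (B i)) hD1 j s
    have hD2 : ∀ y z : W, (f.flip (B 0)) ⁅y, z⁆ =
        (1/2 : ℂ) • ⁅f.flip (B 0) y, z⁆ + (1/2 : ℂ) • ⁅y, f.flip (B 0) z⁆ := by
      intro y z
      simp only [LinearMap.flip_apply]
      rw [← hf1 y z (B 0)]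
      abel
    have e2 : B.repr (f.flip (B 0) (B i)) (s - j) = B.repr (f.flip (B 0) (B 0)) (s - j - i) :=
      der_shift B hB (f.flip (B 0)) hD2 i (s - j)
    simp only [LinearMap.flip_apply] at e2
    rw [e1, e2, show s - j - i = s - i - j from by omega, hc]
  -- now conclude
  apply B.repr.injective
  ext s
  rw [hrepr s, map_finsuppSum, Finsupp.sum_apply]
  have h1 : (c.sum fun n t => (B.repr (t • B (n + i + j))) s)
      = c.sum fun n t => if n = s - i - j then t else 0 := by
    apply Finsupp.sum_congr
    intro n _
    rw [map_smul, Finsupp.smul_apply, B.repr_self, Finsupp.single_apply, smul_eq_mul]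
    by_cases h : n = s - i - j
    · simp [h, show s - i - j + i + j = s from by omega]
    · simp [h, show ¬ (n + i + j = s) from by omega]
  rw [h1, Finsupp.sum_ite_eq' c (s - i - j) (fun _ t => t)]
  split_ifs with hmem
  · rfl
  · exact Finsupp.notMem_support_iff.1 hmem
end

section
/- Every (1/2)-biderivation of the Virasoro algebra is zero. In particular, the (1/2)-biderivation θ_n of the Witt algebra (for any n ∈ ℤ) does not extend to a (1/2)-biderivation of the Virasoro algebra. -/
section
variable {V : Type*} [LieRing V] [LieAlgebra ℂ V] (B : Module.Basis (Option ℤ) ℂ V)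

lemma coordL
    (hC : ∀ x : V, ⁅B none, x⁆ = 0)
    (hL : ∀ m n : ℤ, ⁅B (some m), B (some n)⁆ =
        ((m : ℂ) - n) • B (some (m + n)) +
        (if m + n = 0 then ((m : ℂ)^3 - m)/12 else 0) • B none)
    (i m : ℤ) (v : V) :
    B.repr ⁅B (some i), v⁆ (some m)
      = (2*(i:ℂ) - m) * B.repr v (some (m - i)) := by
  have key : (B.coord (some m)).comp (LieAlgebra.ad ℂ V (B (some i)) : V →ₗ[ℂ] V)
      = (2*(i:ℂ) - m) • (B.coord (some (m - i))) := by
    apply B.ext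
    intro o
    cases o with
    | none =>
        have h0 : ⁅B (some i), B none⁆ = 0 := by
          rw [← lie_skew, hC, neg_zero]
        simp [LieAlgebra.ad_apply, h0, Module.Basis.coord_apply, Module.Basis.repr_self,
          Finsupp.single_apply]
    | some k =>
        simp only [LinearMap.comp_apply, LieAlgebra.ad_apply, hL,
          LinearMap.smul_apply, Module.Basis.coord_apply, map_add, map_smul,
          Module.Basis.repr_self, Finsupp.add_apply, Finsupp.smul_apply,
          Finsupp.single_apply, smul_eq_mul, Option.some_inj, reduceCtorEq,
          if_false, mul_zero, add_zero]
        by_cases h : k = m - i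
        · subst h
          rw [if_pos (by omega), if_pos rfl]
          push_cast
          ring
        · rw [if_neg (by omega), if_neg h]
          ring
  have := LinearMap.congr_fun key v
  simpa [Module.Basis.coord_apply] using this

lemma coordC
    (hC : ∀ x : V, ⁅B none, x⁆ = 0)
    (hL : ∀ m n : ℤ, ⁅B (some m), B (some n)⁆ =
        ((m : ℂ) - n) • B (some (m + n)) +
        (if m + n = 0 then ((m : ℂ)^3 - m)/12 else 0) • B none)
    (i : ℤ) (v : V) :
    B.repr ⁅B (some i), v⁆ none
      = (((i:ℂ)^3 - i)/12) * B.repr v (some (-i)) := by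
  have key : (B.coord none).comp (LieAlgebra.ad ℂ V (B (some i)) : V →ₗ[ℂ] V)
      = (((i:ℂ)^3 - i)/12) • (B.coord (some (-i))) := by
    apply B.ext
    intro o
    cases o with
    | none =>
        have h0 : ⁅B (some i), B none⁆ = 0 := by
          rw [← lie_skew, hC, neg_zero]
        simp [LieAlgebra.ad_apply, h0, Module.Basis.coord_apply, Module.Basis.repr_self,
          Finsupp.single_apply]
    | some k =>
        simp only [LinearMap.comp_apply, LieAlgebra.ad_apply, hL,
          LinearMap.smul_apply, Module.Basis.coord_apply, map_add, map_smul,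
          Module.Basis.repr_self, Finsupp.add_apply, Finsupp.smul_apply,
          Finsupp.single_apply, smul_eq_mul, Option.some_inj, reduceCtorEq,
          if_false, mul_zero, zero_add, mul_one]
        by_cases h : k = -i
        · subst h
          rw [if_pos (by omega), if_pos rfl]
          simp
        · rw [if_neg (by omega), if_neg h]
          simp
  have := LinearMap.congr_fun key v
  simpa [Module.Basis.coord_apply] using this

/-- coefficient of `f x L_i` at `L_m` -/
noncomputable def ac (f : V →ₗ[ℂ] V →ₗ[ℂ] V) (x : V) (i m : ℤ) : ℂ :=
  B.repr (f x (B (some i))) (some m)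

/-- coefficient of `f x L_i` at `C` -/
noncomputable def bc (f : V →ₗ[ℂ] V →ₗ[ℂ] V) (x : V) (i : ℤ) : ℂ :=
  B.repr (f x (B (some i))) none

lemma eqE
    (hC : ∀ x : V, ⁅B none, x⁆ = 0)
    (hL : ∀ m n : ℤ, ⁅B (some m), B (some n)⁆ =
        ((m : ℂ) - n) • B (some (m + n)) +
        (if m + n = 0 then ((m : ℂ)^3 - m)/12 else 0) • B none)
    (f : V →ₗ[ℂ] V →ₗ[ℂ] V) (hf : IsBider (1/2) f) (x : V) (i j m : ℤ) :
    ((m:ℂ) - 2*j) * ac B f x i (m-j) + (2*(i:ℂ) - m) * ac B f x j (m-i)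
      = 2*((i:ℂ)-j) * ac B f x (i+j) m
        + 2*(if i+j = 0 then ((i:ℂ)^3-i)/12 else 0)
            * B.repr (f x (B none)) (some m) := by
  have hid := hf.2 x (B (some i)) (B (some j))
  rw [hL i j,
    show ⁅f x (B (some i)), B (some j)⁆ = -⁅B (some j), f x (B (some i))⁆ from
      (lie_skew _ _).symm] at hid
  have h := congrArg (fun v : V => B.repr v (some m)) hid
  simp only [map_add, map_neg, map_smul, Finsupp.add_apply, Finsupp.neg_apply,
    Finsupp.smul_apply, smul_eq_mul, coordL B hC hL] at h
  unfold ac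
  linear_combination 2 * h

lemma eqF
    (hC : ∀ x : V, ⁅B none, x⁆ = 0)
    (hL : ∀ m n : ℤ, ⁅B (some m), B (some n)⁆ =
        ((m : ℂ) - n) • B (some (m + n)) +
        (if m + n = 0 then ((m : ℂ)^3 - m)/12 else 0) • B none)
    (f : V →ₗ[ℂ] V →ₗ[ℂ] V) (hf : IsBider (1/2) f) (x : V) (i j : ℤ) :
    -(((j:ℂ)^3 - j)) * ac B f x i (-j) + ((i:ℂ)^3 - i) * ac B f x j (-i)
      = 24*((i:ℂ)-j) * bc B f x (i+j)
        + 24*(if i+j = 0 then ((i:ℂ)^3-i)/12 else 0)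
            * B.repr (f x (B none)) none := by
  have hid := hf.2 x (B (some i)) (B (some j))
  rw [hL i j,
    show ⁅f x (B (some i)), B (some j)⁆ = -⁅B (some j), f x (B (some i))⁆ from
      (lie_skew _ _).symm] at hid
  have h := congrArg (fun v : V => B.repr v none) hid
  simp only [map_add, map_neg, map_smul, Finsupp.add_apply, Finsupp.neg_apply,
    Finsupp.smul_apply, smul_eq_mul, coordC B hC hL] at h
  unfold ac bc
  linear_combination 24 * h


variable
    (hC : ∀ x : V, ⁅B none, x⁆ = 0)
    (hL : ∀ m n : ℤ, ⁅B (some m), B (some n)⁆ =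
        ((m : ℂ) - n) • B (some (m + n)) +
        (if m + n = 0 then ((m : ℂ)^3 - m)/12 else 0) • B none)
    (f : V →ₗ[ℂ] V →ₗ[ℂ] V) (hf : IsBider (1/2) f) (x : V)

include hC hL hf in
lemma star (i m : ℤ) (hm : m ≠ 2*i) :
    ac B f x i m = ac B f x 0 (m - i) := by
  have h := eqE B hC hL f hf x i 0 m
  have hw : (if i + 0 = 0 then ((i:ℂ)^3-i)/12 else 0) = 0 := by
    by_cases h0 : i = 0 <;> simp [h0]
  rw [hw, show m - (0:ℤ) = m from by ring, show i + (0:ℤ) = i from by ring] at h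
  have hne : (2*(i:ℂ) - m) ≠ 0 := by
    intro hq
    apply hm
    have h1 : ((2*i - m : ℤ) : ℂ) = 0 := by push_cast; linear_combination hq
    have h2 : (2*i - m : ℤ) = 0 := by exact_mod_cast h1
    omega
  have h2 : (2*(i:ℂ) - m) * (ac B f x i m - ac B f x 0 (m - i)) = 0 := by
    push_cast at h
    linear_combination -h
  rcases mul_eq_zero.mp h2 with h3 | h3
  · exact absurd h3 hne
  · exact sub_eq_zero.mp h3

include hC hL hf in
lemma gz (s : ℤ) (hs : s ≠ 0) :
    ac B f x 0 (-s) = 0 ∧ bc B f x s = 0 := by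
  have hsC : (s:ℂ) ≠ 0 := Int.cast_ne_zero.mpr hs
  have h4 := eqF B hC hL f hf x (4*s) (-3*s)
  have h5 := eqF B hC hL f hf x (5*s) (-4*s)
  rw [show 4*s + -3*s = s from by ring, if_neg hs,
    star B hC hL f hf x (4*s) (-(-3*s)) (by omega),
    star B hC hL f hf x (-3*s) (-(4*s)) (by omega),
    show -(-3*s) - 4*s = -s from by ring,
    show -(4*s) - -3*s = -s from by ring] at h4
  rw [show 5*s + -4*s = s from by ring, if_neg hs,
    star B hC hL f hf x (5*s) (-(-4*s)) (by omega),
    star B hC hL f hf x (-4*s) (-(5*s)) (by omega),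
    show -(-4*s) - 5*s = -s from by ring,
    show -(5*s) - -4*s = -s from by ring] at h5
  push_cast at h4 h5
  have hg : ac B f x 0 (-s) = 0 := by
    have h6 : (s:ℂ)^3 * ac B f x 0 (-s) = 0 := by
      linear_combination (1/72) * h5 - (1/56) * h4
    exact (mul_eq_zero.mp h6).resolve_left (pow_ne_zero 3 hsC)
  refine ⟨hg, ?_⟩
  have h8 : (s:ℂ) * bc B f x s = 0 := by
    linear_combination (-1/168) * h4 + ((91*(s:ℂ)^3 - 7*s)/168) * hg
  exact (mul_eq_zero.mp h8).resolve_left hsC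

include hC hL hf in
lemma a2 (i : ℤ) (hi : i ≠ 0) : ac B f x i (2*i) = 0 := by
  have h := eqE B hC hL f hf x i (3*i) (5*i)
  rw [show i + 3*i = 4*i from by ring, if_neg (by omega : ¬ (4*i = 0)),
    show 5*i - 3*i = 2*i from by ring, show 5*i - i = 4*i from by ring] at h
  have h1 : ac B f x (3*i) (4*i) = 0 := by
    rw [star B hC hL f hf x (3*i) (4*i) (by omega),
      show 4*i - 3*i = i from by ring]
    have h' := (gz B hC hL f hf x (-i) (by omega)).1
    rwa [neg_neg] at h'
  have h2 : ac B f x (4*i) (5*i) = 0 := by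
    rw [star B hC hL f hf x (4*i) (5*i) (by omega),
      show 5*i - 4*i = i from by ring]
    have h' := (gz B hC hL f hf x (-i) (by omega)).1
    rwa [neg_neg] at h'
  rw [h1, h2] at h
  push_cast at h
  have h3 : (i:ℂ) * ac B f x i (2*i) = 0 := by linear_combination -h
  exact (mul_eq_zero.mp h3).resolve_left (Int.cast_ne_zero.mpr hi)

include hC hL hf in
lemma aEq (i m : ℤ) :
    ac B f x i m = if m = i then ac B f x 0 0 else 0 := by
  by_cases hmi : m = i
  · subst hmi
    rw [if_pos rfl]
    by_cases h0 : m = 0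
    · subst h0; rfl
    · rw [star B hC hL f hf x m m (by omega), show m - m = 0 from by ring]
  · rw [if_neg hmi]
    by_cases h2 : m = 2*i
    · rw [h2]; exact a2 B hC hL f hf x i (by omega)
    · rw [star B hC hL f hf x i m h2]
      have h' := (gz B hC hL f hf x (i - m) (by omega)).1
      rwa [neg_sub] at h'

include hC hL hf in
lemma bZ (i : ℤ) : bc B f x i = 0 := by
  by_cases hi : i = 0
  · subst hi
    have h := eqF B hC hL f hf x 1 (-1)
    rw [show (1:ℤ) + -1 = 0 from by decide, if_pos rfl] at h
    have e1 : ac B f x 1 (-(-1)) = ac B f x 0 0 := by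
      rw [show -(-1:ℤ) = 1 from by decide, aEq B hC hL f hf x]; simp
    have e2 : ac B f x (-1) (-1) = ac B f x 0 0 := by
      rw [aEq B hC hL f hf x]; simp
    rw [e1, e2] at h
    push_cast at h
    linear_combination (-1/48) * h
  · exact (gz B hC hL f hf x i hi).2

include hC hL hf in
lemma dE : B.repr (f x (B none)) none = ac B f x 0 0 := by
  have h := eqF B hC hL f hf x 2 (-2)
  rw [show (2:ℤ) + -2 = 0 from by decide, if_pos rfl] at h
  have e1 : ac B f x 2 (-(-2)) = ac B f x 0 0 := by
    rw [show -(-2:ℤ) = 2 from by decide, aEq B hC hL f hf x]; simp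
  have e2 : ac B f x (-2) (-2) = ac B f x 0 0 := by
    rw [aEq B hC hL f hf x]; simp
  rw [e1, e2, bZ B hC hL f hf x 0] at h
  push_cast at h
  linear_combination (-1/12) * h

include hC hL hf in
lemma fxC_some (m : ℤ) : B.repr (f x (B none)) (some m) = 0 := by
  have hcent : ⁅f x (B none), B (some (m+1))⁆ = 0 := by
    have h := hf.2 x (B none) (B (some (m+1)))
    rw [hC (B (some (m+1))), hC (f x (B (some (m+1))))] at h
    simp only [smul_zero, add_zero, map_zero] at h
    rcases smul_eq_zero.mp h with h' | h'
    · norm_num at h'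
    · exact h'
  have h := coordL B hC hL (m+1) (2*m+1) (f x (B none))
  rw [show ⁅B (some (m+1)), f x (B none)⁆ = -⁅f x (B none), B (some (m+1))⁆ from
      (lie_skew _ _).symm, hcent, neg_zero,
    show 2*m+1 - (m+1) = m from by ring] at h
  simp only [map_zero, Finsupp.zero_apply] at h
  push_cast at h
  linear_combination -h

include hC hL hf in
lemma keyL (o : Option ℤ) : f x (B o) = (ac B f x 0 0) • B o := by
  apply B.repr.injective
  ext o'
  rw [map_smul, Finsupp.smul_apply, Module.Basis.repr_self, smul_eq_mul]
  cases o with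
  | some i =>
      cases o' with
      | some m =>
          rw [show B.repr (f x (B (some i))) (some m) = ac B f x i m from rfl,
            aEq B hC hL f hf x, Finsupp.single_apply]
          by_cases h : m = i
          · subst h; simp
          · rw [if_neg h, if_neg (by simpa using Ne.symm h), mul_zero]
      | none =>
          rw [show B.repr (f x (B (some i))) none = bc B f x i from rfl,
            bZ B hC hL f hf x i]
          simp [Finsupp.single_apply]
  | none =>
      cases o' with
      | some m =>
          rw [fxC_some B hC hL f hf x m]
          simp [Finsupp.single_apply]
      | none =>
          rw [dE B hC hL f hf x]
          simp [Finsupp.single_apply]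


include hC hL hf in
lemma hstep (m : ℤ) :
    (1/2:ℂ) • ac B f (B (some 0)) 0 0 • ((m:ℂ) • B (some m))
      = (m:ℂ) • ac B f (B (some m)) 0 0 • B (some 0) := by
  have hw : (if m + 0 = 0 then ((m:ℂ)^3-m)/12 else 0) = 0 := by
    simp only [add_zero]
    by_cases h0 : m = 0
    · subst h0; norm_num
    · simp [h0]
  have h := hf.1 (B (some m)) (B (some 0)) (B (some 0))
  rw [keyL B hC hL f hf (B (some 0)) (some 0),
    keyL B hC hL f hf (B (some m)) (some 0),
    lie_smul, smul_lie, lie_self, smul_zero, smul_zero, add_zero,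
    hL m 0, hw, zero_smul, add_zero, Int.cast_zero, sub_zero, add_zero,
    map_smul, LinearMap.smul_apply,
    keyL B hC hL f hf (B (some m)) (some 0)] at h
  exact h

include hC hL hf in
lemma lam_some (m : ℤ) : ac B f (B (some m)) 0 0 = 0 := by
  have lam0 : ac B f (B (some 0)) 0 0 = 0 := by
    have h := congrArg (fun v : V => B.repr v (some 1)) (hstep B hC hL f hf 1)
    simp [Module.Basis.repr_self, Finsupp.single_apply] at h
    exact h
  by_cases hm : m = 0
  · subst hm; exact lam0
  · have h := congrArg (fun v : V => B.repr v (some 0)) (hstep B hC hL f hf m)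
    simpa [Module.Basis.repr_self, Finsupp.single_apply, hm, lam0] using h

include hC hL hf in
lemma lam_none : ac B f (B none) 0 0 = 0 := by
  have hcent : ⁅f (B none) (B (some 0)), B (some 1)⁆ = 0 := by
    have h := hf.1 (B none) (B (some 1)) (B (some 0))
    rw [hC, hC] at h
    simp only [map_zero, LinearMap.zero_apply, smul_zero, zero_add] at h
    rcases smul_eq_zero.mp h with h' | h'
    · norm_num at h'
    · exact h'
  rw [keyL B hC hL f hf (B none) (some 0), smul_lie, hL 0 1] at hcent
  have h := congrArg (fun v : V => B.repr v (some 1)) hcent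
  simp [Module.Basis.repr_self, Finsupp.single_apply] at h
  exact h

include hC hL hf in
lemma bider_zero : f = 0 := by
  refine B.ext fun o => ?_
  refine B.ext fun o' => ?_
  simp only [LinearMap.zero_apply]
  rw [keyL B hC hL f hf (B o) o']
  cases o with
  | some m => rw [lam_some B hC hL f hf m, zero_smul]
  | none => rw [lam_none B hC hL f hf, zero_smul]

end

theorem stmt9 {V : Type*} [LieRing V] [LieAlgebra ℂ V]
    (B : Module.Basis (Option ℤ) ℂ V)
    (hC : ∀ x : V, ⁅B none, x⁆ = 0)
    (hL : ∀ m n : ℤ, ⁅B (some m), B (some n)⁆ =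
        ((m : ℂ) - n) • B (some (m + n)) +
        (if m + n = 0 then ((m : ℂ)^3 - m)/12 else 0) • B none)
    (f : V →ₗ[ℂ] V →ₗ[ℂ] V) (hf : IsBider (1/2) f) :
    f = 0 ∧
    ∀ n : ℤ, ¬ ∃ g : V →ₗ[ℂ] V →ₗ[ℂ] V, IsBider (1/2) g ∧
      ∀ i j : ℤ, ∃ c : ℂ,
        g (B (some i)) (B (some j)) = B (some (n + i + j)) + c • B none := by
  refine ⟨bider_zero B hC hL f hf, ?_⟩
  rintro n ⟨g, hg, hspec⟩
  have hgz := bider_zero B hC hL g hg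
  obtain ⟨c, hc⟩ := hspec 0 0
  rw [hgz] at hc
  have h := congrArg (fun v : V => B.repr v (some (n + 0 + 0))) hc
  simp [Module.Basis.repr_self, Finsupp.single_apply] at h
end

section
/- Every 1-biderivation of the Virasoro algebra is a complex scalar multiple of the Lie bracket. If δ ∉ {1}, then every δ-biderivation of the Virasoro algebra is zero. -/
private lemma arithA_generic (δ : ℂ) (hδ0 : δ ≠ 0) (hδ1 : δ ≠ 1) (hδh : 2*δ - 1 ≠ 0)
    (a : ℤ → ℤ → ℤ → ℂ)
    (hC1 : ∀ p q n k : ℤ, ((p:ℂ) - q) * a (p+q) n k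
      = δ*(2*(p:ℂ) - k) * a q n (k-p) + δ*((k:ℂ) - 2*q) * a p n (k-q))
    (hC2 : ∀ m q r k : ℤ, ((q:ℂ) - r) * a m (q+r) k
      = δ*((k:ℂ) - 2*r) * a m q (k-r) + δ*(2*(q:ℂ) - k) * a m r (k-q)) :
    ∀ m n k : ℤ, a m n k = 0 := by
  have hε : δ - 1 ≠ 0 := sub_ne_zero.mpr hδ1
  -- A2₀
  have hA2 : ∀ m n k : ℤ, (δ*(k:ℂ) - n) * a m n k = δ*((k:ℂ) - 2*n) * a m 0 (k-n) := by
    intro m n k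
    have h := hC2 m 0 n k
    simp only [zero_add, sub_zero] at h
    push_cast at h ⊢
    linear_combination h
  have hA1 : ∀ m n k : ℤ, (δ*(k:ℂ) - m) * a m n k = δ*((k:ℂ) - 2*m) * a 0 n (k-m) := by
    intro m n k
    have h := hC1 0 m n k
    simp only [zero_add, sub_zero] at h
    push_cast at h ⊢
    linear_combination h
  -- Z1 : a 0 0 s = 0
  have hZ1 : ∀ s : ℤ, a 0 0 s = 0 := by
    intro s
    have hW : ∀ n : ℤ, ((δ-1)*(n:ℂ) + δ*s) * a 0 n (n+s) = δ*((s:ℂ) - n) * a 0 0 s := by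
      intro n
      have h := hA2 0 n (n+s)
      rw [add_sub_cancel_left] at h
      push_cast at h ⊢
      linear_combination h
    have hG : ∀ q : ℤ, a 0 (2*q-1) (2*q-1+s)
        = δ*((s:ℂ)+1)*a 0 q (q+s) + δ*(1-(s:ℂ))*a 0 (q-1) (q-1+s) := by
      intro q
      have h := hC2 0 q (q-1) (2*q-1+s)
      rw [show q + (q-1) = 2*q-1 by ring, show 2*q-1+s - (q-1) = q+s by ring,
        show 2*q-1+s - q = q-1+s by ring] at h
      push_cast at h ⊢
      linear_combination h
    set D : ℤ → ℂ := fun n => (δ-1)*(n:ℂ) + δ*(s:ℂ) with hD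
    have key : ∀ q : ℤ, a 0 0 s * (δ * (D q * D (q-1) * ((s:ℂ)-2*q+1)
        - δ*((s:ℂ)+1)*((s:ℂ)-q)*D (q-1)*D (2*q-1)
        - δ*(1-(s:ℂ))*((s:ℂ)-q+1)*D q*D (2*q-1))) = 0 := by
      intro q
      have h1 := hW q
      have h2 := hW (q-1)
      have h3 := hW (2*q-1)
      have h4 := hG q
      simp only [hD] at *
      push_cast at h1 h2 h3 h4 ⊢
      linear_combination (-(((δ-1)*(q:ℂ) + δ*s) * ((δ-1)*((q:ℂ)-1) + δ*s))) * h3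
        + (((δ-1)*(q:ℂ) + δ*s) * ((δ-1)*((q:ℂ)-1) + δ*s) * ((δ-1)*(2*(q:ℂ)-1) + δ*s)) * h4
        + δ*((s:ℂ)+1)*(((δ-1)*((q:ℂ)-1) + δ*s) * ((δ-1)*(2*(q:ℂ)-1) + δ*s)) * h1
        + δ*(1-(s:ℂ))*(((δ-1)*(q:ℂ) + δ*s) * ((δ-1)*(2*(q:ℂ)-1) + δ*s)) * h2
    have k0 := key 0
    have k1 := key 1
    have k2 := key 2
    have k3 := key 3
    simp only [hD] at k0 k1 k2 k3
    push_cast at k0 k1 k2 k3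
    have hfin : a 0 0 s * (δ * (12*(δ-1)^2*(2*δ-1))) = 0 := by
      linear_combination k3 - 3*k2 + 3*k1 - k0
    have hne : δ * (12*(δ-1)^2*(2*δ-1)) ≠ 0 := by
      apply mul_ne_zero hδ0
      exact mul_ne_zero (mul_ne_zero (by norm_num) (pow_ne_zero 2 hε)) hδh
    exact (mul_eq_zero.mp hfin).resolve_right hne
  -- helper: cast nonzero
  have castne : ∀ x : ℤ, x ≠ 0 → ((x:ℂ) ≠ 0) := fun x hx => Int.cast_ne_zero.mpr hx
  -- a 0 n k = 0 when δk ≠ n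
  have hz2' : ∀ n k : ℤ, δ*(k:ℂ) - n ≠ 0 → a 0 n k = 0 := by
    intro n k h
    have h2 := hA2 0 n k
    rw [hZ1 (k-n)] at h2
    simp only [mul_zero] at h2
    exact (mul_eq_zero.mp h2).resolve_left h
  have hZ2 : ∀ n k : ℤ, a 0 n k = 0 := by
    intro n k
    by_cases hd : δ*(k:ℂ) - n = 0
    · have hrr : ∃ r : ℤ, r = n.natAbs + k.natAbs + 1 := ⟨_, rfl⟩
      obtain ⟨r, hr⟩ := hrr
      have hr0 : r ≠ 0 := by omega
      have hrn : r ≠ n := by omega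
      have hrk : r ≠ k := by omega
      have e1 : a 0 (n+r) (k+r) = 0 := by
        apply hz2'
        intro h
        have : (δ - 1) * (r:ℂ) = 0 := by push_cast at h hd ⊢; linear_combination h - hd
        rcases mul_eq_zero.mp this with h' | h'
        · exact hε h'
        · exact castne r hr0 h'
      have e2 : a 0 r (r + (k-n)) = 0 := by
        apply hz2'
        intro h
        have : (δ - 1) * ((r:ℂ) - n) = 0 := by push_cast at h hd ⊢; linear_combination h - hd
        rcases mul_eq_zero.mp this with h' | h'
        · exact hε h'
        · exact (sub_ne_zero.mpr (fun hh => hrn (Int.cast_injective hh))) h'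
      have h := hC2 0 n r (k+r)
      rw [add_sub_cancel_right, show k+r-n = r+(k-n) by ring] at h
      rw [e1, e2] at h
      have h' : δ * ((k:ℂ) - r) * a 0 n k = 0 := by push_cast at h ⊢; linear_combination -h
      rcases mul_eq_zero.mp h' with h'' | h''
      · exact absurd h'' (mul_ne_zero hδ0
          (sub_ne_zero.mpr (fun hh => hrk (Int.cast_injective hh).symm)))
      · exact h''
    · exact hz2' n k hd
  -- symmetric side
  have hz3' : ∀ m k : ℤ, δ*(k:ℂ) - m ≠ 0 → a m 0 k = 0 := by
    intro m k h
    have h2 := hA1 m 0 k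
    rw [hZ2 0 (k-m)] at h2
    simp only [mul_zero] at h2
    exact (mul_eq_zero.mp h2).resolve_left h
  have hZ3 : ∀ m k : ℤ, a m 0 k = 0 := by
    intro m k
    by_cases hd : δ*(k:ℂ) - m = 0
    · have hrr : ∃ r : ℤ, r = m.natAbs + k.natAbs + 1 := ⟨_, rfl⟩
      obtain ⟨r, hr⟩ := hrr
      have hr0 : r ≠ 0 := by omega
      have hrm : r ≠ m := by omega
      have hrk : r ≠ k := by omega
      have e1 : a (m+r) 0 (k+r) = 0 := by
        apply hz3'
        intro h
        have : (δ - 1) * (r:ℂ) = 0 := by push_cast at h hd ⊢; linear_combination h - hd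
        rcases mul_eq_zero.mp this with h' | h'
        · exact hε h'
        · exact castne r hr0 h'
      have e2 : a r 0 (r + (k-m)) = 0 := by
        apply hz3'
        intro h
        have : (δ - 1) * ((r:ℂ) - m) = 0 := by push_cast at h hd ⊢; linear_combination h - hd
        rcases mul_eq_zero.mp this with h' | h'
        · exact hε h'
        · exact (sub_ne_zero.mpr (fun hh => hrm (Int.cast_injective hh))) h'
      have h := hC1 m r 0 (k+r)
      rw [add_sub_cancel_right, show k+r-m = r+(k-m) by ring] at h
      rw [e1, e2] at h
      have h' : δ * ((k:ℂ) - r) * a m 0 k = 0 := by push_cast at h ⊢; linear_combination -h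
      rcases mul_eq_zero.mp h' with h'' | h''
      · exact absurd h'' (mul_ne_zero hδ0
          (sub_ne_zero.mpr (fun hh => hrk (Int.cast_injective hh).symm)))
      · exact h''
    · exact hz3' m k hd
  -- off diagonal
  have hoff : ∀ m n k : ℤ, m ≠ n → a m n k = 0 := by
    intro m n k hmn
    have h1 := hA1 m n k
    have h2 := hA2 m n k
    rw [hZ2 n (k-m)] at h1
    rw [hZ3 m (k-n)] at h2
    have h3 : ((n:ℂ) - m) * a m n k = 0 := by linear_combination h1 - h2
    rcases mul_eq_zero.mp h3 with h' | h'
    · exact absurd h' (sub_ne_zero.mpr (fun hh => hmn (Int.cast_injective hh).symm))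
    · exact h'
  -- diagonal
  intro m n k
  by_cases hmn : m = n
  · subst hmn
    have hqq : ∃ q : ℤ, q = m.natAbs + 1 := ⟨_, rfl⟩
    obtain ⟨q, hq⟩ := hqq
    have hq1 : q ≠ m := by omega
    have hq2 : m - q ≠ m := by omega
    have hq3 : 2*q - m ≠ 0 := by omega
    have h := hC2 m q (m-q) k
    rw [show q + (m-q) = m by ring] at h
    rw [hoff m q _ (fun hh => hq1 hh.symm), hoff m (m-q) _ (fun hh => hq2 hh.symm)] at h
    have h' : ((2*q - m : ℤ):ℂ) * a m m k = 0 := by push_cast at h ⊢; linear_combination h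
    exact (mul_eq_zero.mp h').resolve_left (castne _ hq3)
  · exact hoff m n k hmn


private lemma bZero_of_aZero (δ : ℂ)
    (a : ℤ → ℤ → ℤ → ℂ) (b : ℤ → ℤ → ℂ)
    (ha : ∀ m n k : ℤ, a m n k = 0)
    (hD1 : ∀ p q n : ℤ, ((p:ℂ) - q) * b (p+q) n
      = δ*(((p:ℂ)^3 - p)/12) * a q n (-p) + δ*(((q:ℂ) - (q:ℂ)^3)/12) * a p n (-q)) :
    ∀ m n : ℤ, b m n = 0 := by
  intro m n
  have htt : ∃ t : ℤ, t = m.natAbs + 1 := ⟨_, rfl⟩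
  obtain ⟨t, ht⟩ := htt
  have h := hD1 (m+t) (-t) n
  rw [ha, ha, show m + t + -t = m by ring] at h
  have h' : ((m + 2*t : ℤ):ℂ) * b m n = 0 := by push_cast at h ⊢; linear_combination h
  have hne : (m + 2*t : ℤ) ≠ 0 := by omega
  exact (mul_eq_zero.mp h').resolve_left (Int.cast_ne_zero.mpr hne)

private lemma arith_half
    (a : ℤ → ℤ → ℤ → ℂ) (b : ℤ → ℤ → ℂ)
    (hC1 : ∀ p q n k : ℤ, ((p:ℂ) - q) * a (p+q) n k
      = (1/2)*(2*(p:ℂ) - k) * a q n (k-p) + (1/2)*((k:ℂ) - 2*q) * a p n (k-q))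
    (hC2 : ∀ m q r k : ℤ, ((q:ℂ) - r) * a m (q+r) k
      = (1/2)*((k:ℂ) - 2*r) * a m q (k-r) + (1/2)*(2*(q:ℂ) - k) * a m r (k-q))
    (hD1 : ∀ p q n : ℤ, ((p:ℂ) - q) * b (p+q) n
      = (1/2)*(((p:ℂ)^3 - p)/12) * a q n (-p) + (1/2)*(((q:ℂ) - (q:ℂ)^3)/12) * a p n (-q)) :
    ∀ m n k : ℤ, a m n k = 0 := by
  -- h1 : (k-2m)(a m n k - a 0 n (k-m)) = 0
  have h1 : ∀ m n k : ℤ, ((k:ℂ) - 2*m) * (a m n k - a 0 n (k-m)) = 0 := by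
    intro m n k
    have h := hC1 0 m n k
    simp only [zero_add, sub_zero] at h
    push_cast at h ⊢
    linear_combination 2 * h
  have h2 : ∀ m n k : ℤ, ((k:ℂ) - 2*n) * (a m n k - a m 0 (k-n)) = 0 := by
    intro m n k
    have h := hC2 m 0 n k
    simp only [zero_add, sub_zero] at h
    push_cast at h ⊢
    linear_combination 2 * h
  have castne : ∀ x : ℤ, x ≠ 0 → ((x:ℂ) ≠ 0) := fun x hx => Int.cast_ne_zero.mpr hx
  have e1 : ∀ m n k : ℤ, k ≠ 2*m → a m n k = a 0 n (k-m) := by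
    intro m n k hk
    have h := h1 m n k
    have hne : ((k:ℂ) - 2*m) ≠ 0 := by
      have h0 : ((k - 2*m : ℤ):ℂ) ≠ 0 := castne _ (by omega)
      intro hh
      exact h0 (by push_cast; linear_combination hh)
    exact sub_eq_zero.mp ((mul_eq_zero.mp h).resolve_left hne)
  have e2 : ∀ m n k : ℤ, k ≠ 2*n → a m n k = a m 0 (k-n) := by
    intro m n k hk
    have h := h2 m n k
    have hne : ((k:ℂ) - 2*n) ≠ 0 := by
      have h0 : ((k - 2*n : ℤ):ℂ) ≠ 0 := castne _ (by omega)
      intro hh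
      exact h0 (by push_cast; linear_combination hh)
    exact sub_eq_zero.mp ((mul_eq_zero.mp h).resolve_left hne)
  -- P1 : a 0 n k = a 0 0 (k - n)
  have hP1 : ∀ n k : ℤ, a 0 n k = a 0 0 (k-n) := by
    intro n k
    by_cases hk : k = 2*n
    · subst hk
      obtain ⟨t, ht⟩ : ∃ t : ℤ, t = n.natAbs + 1 := ⟨_, rfl⟩
      have h := hC2 0 (n+t) (-t) (2*n)
      rw [show n+t + -t = n by ring] at h
      rw [show 2*n - -t = 2*n+t by ring, show 2*n - (n+t) = n-t by ring] at h
      rw [e2 0 (n+t) (2*n+t) (by omega), e2 0 (-t) (n-t) (by omega)] at h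
      rw [show 2*n+t-(n+t) = n by ring, show n-t - -t = n by ring] at h
      have h' : ((n + 2*t : ℤ):ℂ) * (a 0 n (2*n) - a 0 0 (2*n-n)) = 0 := by
        rw [show 2*n-n = n by ring]
        push_cast at h ⊢
        linear_combination h
      exact sub_eq_zero.mp ((mul_eq_zero.mp h').resolve_left (castne _ (by omega)))
    · rw [e2 0 n k hk]
  have hP2 : ∀ m k : ℤ, a m 0 k = a 0 0 (k-m) := by
    intro m k
    by_cases hk : k = 2*m
    · subst hk
      obtain ⟨t, ht⟩ : ∃ t : ℤ, t = m.natAbs + 1 := ⟨_, rfl⟩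
      have h := hC1 (m+t) (-t) 0 (2*m)
      rw [show m+t + -t = m by ring] at h
      rw [show 2*m - (m+t) = m-t by ring, show 2*m - -t = 2*m+t by ring] at h
      rw [e1 (-t) 0 (m-t) (by omega), e1 (m+t) 0 (2*m+t) (by omega)] at h
      rw [show m-t - -t = m by ring, show 2*m+t-(m+t) = m by ring] at h
      have h' : ((m + 2*t : ℤ):ℂ) * (a m 0 (2*m) - a 0 0 (2*m-m)) = 0 := by
        rw [show 2*m-m = m by ring]
        push_cast at h ⊢
        linear_combination h
      exact sub_eq_zero.mp ((mul_eq_zero.mp h').resolve_left (castne _ (by omega)))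
    · rw [e1 m 0 k hk, hP1 0 (k-m), sub_zero]
  -- P3 : full structure
  have hP3 : ∀ m n k : ℤ, a m n k = a 0 0 (k-m-n) := by
    intro m n k
    by_cases hk : k = 2*m
    · by_cases hk2 : k = 2*n
      · -- m = n, k = 2m
        have hmn : m = n := by omega
        subst hmn; subst hk
        obtain ⟨t, ht⟩ : ∃ t : ℤ, t = m.natAbs + 1 := ⟨_, rfl⟩
        have h := hC1 (m+t) (-t) m (2*m)
        rw [show m+t + -t = m by ring] at h
        rw [show 2*m - (m+t) = m-t by ring, show 2*m - -t = 2*m+t by ring] at h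
        rw [e1 (-t) m (m-t) (by omega), e1 (m+t) m (2*m+t) (by omega)] at h
        rw [show m-t - -t = m by ring, show 2*m+t-(m+t) = m by ring] at h
        rw [hP1 m m] at h
        have h' : ((m + 2*t : ℤ):ℂ) * (a m m (2*m) - a 0 0 (2*m-m-m)) = 0 := by
          rw [show 2*m-m-m = m-m by ring]
          push_cast at h ⊢
          linear_combination h
        exact sub_eq_zero.mp ((mul_eq_zero.mp h').resolve_left (castne _ (by omega)))
      · rw [e2 m n k hk2, hP2 m (k-n), show k-n-m = k-m-n by ring]
    · rw [e1 m n k hk, hP1 n (k-m), show k-m-n = k-m-n by ring]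
  -- kill the constant
  have hc : ∀ s : ℤ, a 0 0 s = 0 := by
    intro s
    obtain ⟨n, hn⟩ : ∃ n : ℤ, n = -s-1 := ⟨_, rfl⟩
    have e1' := hD1 2 (-1) n
    have e2' := hD1 3 (-2) n
    rw [show (- -1 : ℤ) = 1 by ring] at e1'
    rw [show (- -2 : ℤ) = 2 by ring] at e2'
    rw [hP3 (-1) n (-2), hP3 2 n 1, show (-2 : ℤ) - -1 - n = -1-n by ring,
      show (1:ℤ)-2-n = -1-n by ring, show (2:ℤ) + -1 = 1 by ring] at e1'
    rw [hP3 (-2) n (-3), hP3 3 n 2, show (-3 : ℤ) - -2 - n = -1-n by ring,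
      show (2:ℤ)-3-n = -1-n by ring, show (3:ℤ) + -2 = 1 by ring] at e2'
    rw [show (-1-n : ℤ) = s by omega] at e1' e2'
    have : (5/2 : ℂ) * a 0 0 s = 0 := by
      push_cast at e1' e2'
      linear_combination 5*e1' - 3*e2'
    have h5 : (5/2 : ℂ) ≠ 0 := by norm_num
    exact (mul_eq_zero.mp this).resolve_left h5
  intro m n k
  rw [hP3 m n k, hc]


private lemma arith_one
    (a : ℤ → ℤ → ℤ → ℂ) (b : ℤ → ℤ → ℂ)
    (hC1 : ∀ p q n k : ℤ, ((p:ℂ) - q) * a (p+q) n k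
      = (2*(p:ℂ) - k) * a q n (k-p) + ((k:ℂ) - 2*q) * a p n (k-q))
    (hC2 : ∀ m q r k : ℤ, ((q:ℂ) - r) * a m (q+r) k
      = ((k:ℂ) - 2*r) * a m q (k-r) + (2*(q:ℂ) - k) * a m r (k-q))
    (hD1 : ∀ p q n : ℤ, ((p:ℂ) - q) * b (p+q) n
      = (((p:ℂ)^3 - p)/12) * a q n (-p) + (((q:ℂ) - (q:ℂ)^3)/12) * a p n (-q)) :
    ∃ c : ℂ, (∀ m n k : ℤ, a m n k = c * ((m:ℂ) - n) * (if k = m + n then 1 else 0))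
      ∧ (∀ m n : ℤ, b m n = c * (if m + n = 0 then ((m:ℂ)^3 - m)/12 else 0)) := by
  have castne : ∀ x : ℤ, x ≠ 0 → ((x:ℂ) ≠ 0) := fun x hx => Int.cast_ne_zero.mpr hx
  have hA1 : ∀ m n k : ℤ, ((k:ℂ) - m) * a m n k = ((k:ℂ) - 2*m) * a 0 n (k-m) := by
    intro m n k
    have h := hC1 0 m n k
    simp only [zero_add, sub_zero] at h
    push_cast at h ⊢
    linear_combination h
  have hA2 : ∀ m n k : ℤ, ((k:ℂ) - n) * a m n k = ((k:ℂ) - 2*n) * a m 0 (k-n) := by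
    intro m n k
    have h := hC2 m 0 n k
    simp only [zero_add, sub_zero] at h
    push_cast at h ⊢
    linear_combination h
  -- Y0 : a 0 0 s = 0
  have hY0 : ∀ s : ℤ, a 0 0 s = 0 := by
    intro s
    have e3 := hA1 2 1 (3+s)
    rw [show (3+s-2 : ℤ) = 1+s by ring] at e3
    have e1 := hA2 0 1 (1+s)
    rw [show (1+s-1 : ℤ) = s by ring] at e1
    have e4 := hA2 2 1 (3+s)
    rw [show (3+s-1 : ℤ) = 2+s by ring] at e4
    have e2 := hA1 2 0 (2+s)
    rw [show (2+s-2 : ℤ) = s by ring] at e2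
    push_cast at e1 e2 e3 e4
    linear_combination (-1/4) * ((s:ℂ)*((s:ℂ)+2)*e3 + ((s:ℂ)+2)*((s:ℂ)-1)*e1
      - (s:ℂ)*((s:ℂ)+1)*e4 - ((s:ℂ)+1)^2*e2)
  have hY1 : ∀ n k : ℤ, k ≠ n → a 0 n k = 0 := by
    intro n k hk
    have h := hA2 0 n k
    rw [hY0 (k-n), mul_zero] at h
    have hne : ((k:ℂ) - n) ≠ 0 := by
      have h0 : ((k - n : ℤ):ℂ) ≠ 0 := castne _ (by omega)
      intro hh; exact h0 (by push_cast; linear_combination hh)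
    exact (mul_eq_zero.mp h).resolve_left hne
  have hY2 : ∀ m k : ℤ, k ≠ m → a m 0 k = 0 := by
    intro m k hk
    have h := hA1 m 0 k
    rw [hY0 (k-m), mul_zero] at h
    have hne : ((k:ℂ) - m) ≠ 0 := by
      have h0 : ((k - m : ℤ):ℂ) ≠ 0 := castne _ (by omega)
      intro hh; exact h0 (by push_cast; linear_combination hh)
    exact (mul_eq_zero.mp h).resolve_left hne
  -- additivity of diagonal coefficients
  have hadd : ∀ q r : ℤ, q ≠ r → a 0 (q+r) (q+r) = a 0 q q + a 0 r r := by
    intro q r hqr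
    have h := hC2 0 q r (q+r)
    rw [add_sub_cancel_right, add_sub_cancel_left] at h
    have h' : ((q - r : ℤ):ℂ) * (a 0 (q+r) (q+r) - (a 0 q q + a 0 r r)) = 0 := by
      push_cast at h ⊢; linear_combination h
    have := (mul_eq_zero.mp h').resolve_left (castne _ (by omega))
    exact sub_eq_zero.mp this
  have hadd' : ∀ p q : ℤ, p ≠ q → a (p+q) 0 (p+q) = a p 0 p + a q 0 q := by
    intro p q hpq
    have h := hC1 p q 0 (p+q)
    rw [add_sub_cancel_right, add_sub_cancel_left] at h
    have h' : ((p - q : ℤ):ℂ) * (a (p+q) 0 (p+q) - (a p 0 p + a q 0 q)) = 0 := by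
      push_cast at h ⊢; linear_combination h
    have := (mul_eq_zero.mp h').resolve_left (castne _ (by omega))
    exact sub_eq_zero.mp this
  -- linearity of g n := a 0 n n
  have hg2 : a 0 2 2 = 2 * a 0 1 1 := by
    have gm1 : a 0 (-1) (-1) = - a 0 1 1 := by
      have h := hadd 1 (-1) (by omega)
      rw [show (1 + -1 : ℤ) = 0 by ring, hY0 0] at h
      linear_combination -h
    have gm2 : a 0 (-2) (-2) = a 0 (-1) (-1) - a 0 1 1 := by
      have h := hadd 1 (-2) (by omega)
      rw [show (1 + -2 : ℤ) = -1 by ring] at h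
      linear_combination -h
    have g3 : a 0 3 3 = a 0 1 1 + a 0 2 2 := hadd 1 2 (by omega)
    have h := hadd 3 (-2) (by omega)
    rw [show (3 + -2 : ℤ) = 1 by ring] at h
    rw [g3, gm2, gm1] at h
    linear_combination -h
  have hglin : ∀ n : ℤ, a 0 n n = (n:ℂ) * a 0 1 1 := by
    intro n
    induction n using Int.induction_on with
    | zero => rw [hY0 0]; push_cast; ring
    | succ i ih =>
        by_cases hi : (i:ℤ) = 1
        · rw [hi] at ih ⊢
          rw [show (1+1 : ℤ) = 2 by ring, hg2]; push_cast; ring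
        · have h := hadd i 1 hi
          rw [h, ih]; push_cast; ring
    | pred i ih =>
        by_cases hi : (-(i:ℤ)) = -1
        · have : (i:ℤ) = 1 := by omega
          rw [this] at ih ⊢
          have gm1 : a 0 (-1) (-1) = - a 0 1 1 := by
            have h := hadd 1 (-1) (by omega)
            rw [show (1 + -1 : ℤ) = 0 by ring, hY0 0] at h
            linear_combination -h
          have h := hadd 1 (-2) (by omega)
          rw [show (1 + -2 : ℤ) = -1 by ring, gm1] at h
          rw [show (-(1:ℤ) - 1) = -2 by ring]
          push_cast
          linear_combination -h
        · have h := hadd (-i) (-1) hi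
          rw [show (-(i:ℤ) + -1) = -i - 1 by ring] at h
          have gm1 : a 0 (-1) (-1) = - a 0 1 1 := by
            have h2 := hadd 1 (-1) (by omega)
            rw [show (1 + -1 : ℤ) = 0 by ring, hY0 0] at h2
            linear_combination -h2
          rw [h, ih, gm1]; push_cast; ring
  have hglin' : ∀ m : ℤ, a m 0 m = (m:ℂ) * a 1 0 1 := by
    intro m
    have hg2' : a 2 0 2 = 2 * a 1 0 1 := by
      have gm1 : a (-1) 0 (-1) = - a 1 0 1 := by
        have h := hadd' 1 (-1) (by omega)
        rw [show (1 + -1 : ℤ) = 0 by ring, hY0 0] at h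
        linear_combination -h
      have gm2 : a (-2) 0 (-2) = a (-1) 0 (-1) - a 1 0 1 := by
        have h := hadd' 1 (-2) (by omega)
        rw [show (1 + -2 : ℤ) = -1 by ring] at h
        linear_combination -h
      have g3 : a 3 0 3 = a 1 0 1 + a 2 0 2 := hadd' 1 2 (by omega)
      have h := hadd' 3 (-2) (by omega)
      rw [show (3 + -2 : ℤ) = 1 by ring] at h
      rw [g3, gm2, gm1] at h
      linear_combination -h
    induction m using Int.induction_on with
    | zero => rw [hY0 0]; push_cast; ring
    | succ i ih =>
        by_cases hi : (i:ℤ) = 1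
        · rw [hi] at ih ⊢
          rw [show (1+1 : ℤ) = 2 by ring, hg2']; push_cast; ring
        · have h := hadd' i 1 hi
          rw [h, ih]; push_cast; ring
    | pred i ih =>
        by_cases hi : (-(i:ℤ)) = -1
        · have : (i:ℤ) = 1 := by omega
          rw [this] at ih ⊢
          have gm1 : a (-1) 0 (-1) = - a 1 0 1 := by
            have h := hadd' 1 (-1) (by omega)
            rw [show (1 + -1 : ℤ) = 0 by ring, hY0 0] at h
            linear_combination -h
          have h := hadd' 1 (-2) (by omega)
          rw [show (1 + -2 : ℤ) = -1 by ring, gm1] at h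
          rw [show (-(1:ℤ) - 1) = -2 by ring]
          push_cast
          linear_combination -h
        · have h := hadd' (-i) (-1) hi
          rw [show (-(i:ℤ) + -1) = -i - 1 by ring] at h
          have gm1 : a (-1) 0 (-1) = - a 1 0 1 := by
            have h2 := hadd' 1 (-1) (by omega)
            rw [show (1 + -1 : ℤ) = 0 by ring, hY0 0] at h2
            linear_combination -h2
          rw [h, ih, gm1]; push_cast; ring
  -- u' = -u
  have hu' : a 1 0 1 = - a 0 1 1 := by
    have eA := hA1 2 1 3
    rw [show (3-2 : ℤ) = 1 by ring] at eA
    have eB := hA2 2 1 3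
    rw [show (3-1 : ℤ) = 2 by ring, hglin' 2] at eB
    push_cast at eA eB
    linear_combination eA - (1/2) * eB
  set c : ℂ := -(a 0 1 1) with hc
  have Yoff : ∀ m n k : ℤ, n ≠ m →
      a m n k = c * ((m:ℂ) - n) * (if k = m + n then 1 else 0) := by
    intro m n k hnm
    by_cases hk : k = m + n
    · subst hk
      rw [if_pos rfl, mul_one]
      by_cases hn : n = 0
      · subst hn
        rw [show (m + 0 : ℤ) = m by ring, hglin' m, hu']
        push_cast; ring
      · have h := hA1 m n (m+n)
        rw [add_sub_cancel_left, hglin n] at h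
        have h' : (n:ℂ) * (a m n (m+n) - c * ((m:ℂ) - n)) = 0 := by
          push_cast at h ⊢; linear_combination h
        exact sub_eq_zero.mp ((mul_eq_zero.mp h').resolve_left (castne n hn))
    · rw [if_neg hk, mul_zero]
      by_cases hkm : k = m
      · have hn0 : n ≠ 0 := by omega
        have hnm2 : m ≠ n := fun hh => hnm hh.symm
        have h := hA2 m n m
        rw [hY2 m (m-n) (by omega), mul_zero] at h
        have hne : ((m:ℂ) - n) ≠ 0 := by
          have h0 : ((m - n : ℤ):ℂ) ≠ 0 := castne _ (by omega)
          intro hh; exact h0 (by push_cast; linear_combination hh)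
        rw [hkm]
        exact (mul_eq_zero.mp h).resolve_left hne
      · have h := hA1 m n k
        rw [hY1 n (k-m) (by omega), mul_zero] at h
        have hne : ((k:ℂ) - m) ≠ 0 := by
          have h0 : ((k - m : ℤ):ℂ) ≠ 0 := castne _ (by omega)
          intro hh; exact h0 (by push_cast; linear_combination hh)
        exact (mul_eq_zero.mp h).resolve_left hne
  have Ydiag : ∀ m k : ℤ, a m m k = 0 := by
    intro m k
    obtain ⟨q, hq⟩ : ∃ q : ℤ, q = m.natAbs + 1 := ⟨_, rfl⟩
    have h := hC2 m q (m-q) k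
    rw [show q + (m-q) = m by ring] at h
    rw [Yoff m q (k-(m-q)) (by omega), Yoff m (m-q) (k-q) (by omega)] at h
    by_cases hk2 : k = 2*m
    · subst hk2
      rw [if_pos (by omega), if_pos (by omega)] at h
      have h' : ((2*q - m : ℤ):ℂ) * a m m (2*m) = 0 := by
        push_cast at h ⊢; linear_combination h
      exact (mul_eq_zero.mp h').resolve_left (castne _ (by omega))
    · rw [if_neg (by omega), if_neg (by omega)] at h
      have h' : ((2*q - m : ℤ):ℂ) * a m m k = 0 := by
        push_cast at h ⊢; linear_combination h
      exact (mul_eq_zero.mp h').resolve_left (castne _ (by omega))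
  have Yfull : ∀ m n k : ℤ, a m n k = c * ((m:ℂ) - n) * (if k = m + n then 1 else 0) := by
    intro m n k
    by_cases hnm : n = m
    · subst hnm
      rw [Ydiag n k]; ring
    · exact Yoff m n k hnm
  refine ⟨c, Yfull, ?_⟩
  intro m n
  obtain ⟨t, ht⟩ : ∃ t : ℤ, t = m.natAbs + 1 := ⟨_, rfl⟩
  have h := hD1 (m+t) (-t) n
  rw [show (m+t) + -t = m by ring, show (-(-t) : ℤ) = t by ring] at h
  rw [Yfull (-t) n (-(m+t)), Yfull (m+t) n t] at h
  by_cases hn : n = -m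
  · subst hn
    rw [if_pos (by omega), if_pos (by omega)] at h
    rw [if_pos (by omega)]
    have h' : ((m + 2*t : ℤ):ℂ) * (b m (-m) - c * (((m:ℂ)^3 - m)/12)) = 0 := by
      push_cast at h ⊢; linear_combination h
    have := (mul_eq_zero.mp h').resolve_left (castne _ (by omega))
    linear_combination this
  · rw [if_neg (by omega), if_neg (by omega)] at h
    rw [if_neg (by omega), mul_zero]
    have h' : ((m + 2*t : ℤ):ℂ) * b m n = 0 := by
      push_cast at h ⊢; linear_combination h
    exact (mul_eq_zero.mp h').resolve_left (castne _ (by omega))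


section Glue
variable {V : Type*} [LieRing V] [LieAlgebra ℂ V]

private def adL (x : V) : V →ₗ[ℂ] V where
  toFun y := ⁅x, y⁆
  map_add' := lie_add x
  map_smul' c y := lie_smul c x y

private lemma adL_apply (x y : V) : adL x y = ⁅x, y⁆ := rfl

private def brkt : V →ₗ[ℂ] V →ₗ[ℂ] V where
  toFun := adL
  map_add' x y := by ext z; simp [adL_apply, add_lie]
  map_smul' t x := by ext z; simp [adL_apply, smul_lie]

private lemma brkt_apply (x y : V) : brkt x y = ⁅x, y⁆ := rfl

variable (B : Module.Basis (Option ℤ) ℂ V)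
  (hC : ∀ x : V, ⁅B none, x⁆ = 0)
  (hL : ∀ m n : ℤ, ⁅B (some m), B (some n)⁆ =
      ((m : ℂ) - n) • B (some (m + n)) +
      (if m + n = 0 then ((m : ℂ)^3 - m)/12 else 0) • B none)

include hC hL in
private lemma reprSome (p k : ℤ) (v : V) :
    B.repr ⁅B (some p), v⁆ (some k) = (2*(p:ℂ) - k) * B.repr v (some (k-p)) := by
  have key : (Finsupp.lapply (some k) : (Option ℤ →₀ ℂ) →ₗ[ℂ] ℂ) ∘ₗ
        (B.repr.toLinearMap ∘ₗ adL (B (some p)))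
      = (2*(p:ℂ) - k) • ((Finsupp.lapply (some (k-p)) : (Option ℤ →₀ ℂ) →ₗ[ℂ] ℂ) ∘ₗ
        B.repr.toLinearMap) := by
    apply B.ext
    intro i
    simp only [LinearMap.comp_apply, LinearMap.smul_apply, Finsupp.lapply_apply,
      LinearEquiv.coe_toLinearMap, smul_eq_mul, adL_apply]
    cases i with
    | none =>
        have h0 : ⁅B (some p), B none⁆ = (0 : V) := by rw [← lie_skew, hC, neg_zero]
        rw [h0]
        simp [Module.Basis.repr_self, Finsupp.single_apply]
    | some j =>
        rw [hL p j]
        simp only [map_add, map_smul, Module.Basis.repr_self, Finsupp.add_apply, Finsupp.smul_apply,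
          Finsupp.single_apply, smul_eq_mul, Option.some.injEq, reduceCtorEq, if_false,
          mul_zero, add_zero]
        by_cases h : j = k - p
        · subst h
          rw [if_pos (by omega), if_pos rfl]
          push_cast; ring
        · rw [if_neg (by omega), if_neg h]
          simp
  have := DFunLike.congr_fun key v
  simpa [adL_apply] using this

include hC hL in
private lemma reprNone (p : ℤ) (v : V) :
    B.repr ⁅B (some p), v⁆ none = (((p:ℂ)^3 - p)/12) * B.repr v (some (-p)) := by
  have key : (Finsupp.lapply none : (Option ℤ →₀ ℂ) →ₗ[ℂ] ℂ) ∘ₗ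
        (B.repr.toLinearMap ∘ₗ adL (B (some p)))
      = (((p:ℂ)^3 - p)/12) • ((Finsupp.lapply (some (-p)) : (Option ℤ →₀ ℂ) →ₗ[ℂ] ℂ) ∘ₗ
        B.repr.toLinearMap) := by
    apply B.ext
    intro i
    simp only [LinearMap.comp_apply, LinearMap.smul_apply, Finsupp.lapply_apply,
      LinearEquiv.coe_toLinearMap, smul_eq_mul, adL_apply]
    cases i with
    | none =>
        have h0 : ⁅B (some p), B none⁆ = (0 : V) := by rw [← lie_skew, hC, neg_zero]
        rw [h0]
        simp [Module.Basis.repr_self, Finsupp.single_apply]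
    | some j =>
        rw [hL p j]
        simp only [map_add, map_smul, Module.Basis.repr_self, Finsupp.add_apply, Finsupp.smul_apply,
          Finsupp.single_apply, smul_eq_mul, Option.some.injEq, reduceCtorEq, if_false,
          zero_mul, mul_zero, zero_add, add_zero, if_true]
        by_cases h : j = -p
        · rw [if_pos (by omega), if_pos h]
        · rw [if_neg (by omega), if_neg h]; ring
  have := DFunLike.congr_fun key v
  simpa [adL_apply] using this

include hC hL in
private lemma killB {W : Type*} [AddCommGroup W] [Module ℂ W] (g : V →ₗ[ℂ] W)
    (hg : ∀ m n : ℤ, g ⁅B (some m), B (some n)⁆ = 0) : g = 0 := by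
  have h1 : ∀ n : ℤ, n ≠ 0 → g (B (some n)) = 0 := by
    intro n hn
    have h := hg 0 n
    rw [hL 0 n, if_neg (by omega)] at h
    rw [zero_smul, add_zero, show (0 + n : ℤ) = n by ring, map_smul] at h
    have hne : (((0:ℤ):ℂ) - (n:ℂ)) ≠ 0 := by
      have h0 : ((0 - n : ℤ):ℂ) ≠ 0 := Int.cast_ne_zero.mpr (by omega)
      intro hh; exact h0 (by push_cast; push_cast at hh; linear_combination hh)
    exact (smul_eq_zero.mp h).resolve_left hne
  have h0 : g (B (some 0)) = 0 := by
    have h := hg 1 (-1)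
    rw [hL 1 (-1), if_pos (by omega)] at h
    rw [show (1 + -1 : ℤ) = 0 by ring] at h
    rw [show ((((1:ℤ)):ℂ)^3 - (((1:ℤ)):ℂ))/12 = 0 by push_cast; norm_num, zero_smul,
      add_zero, map_smul] at h
    have hne : (((1:ℤ):ℂ) - (((-1:ℤ)):ℂ)) ≠ 0 := by push_cast; norm_num
    exact (smul_eq_zero.mp h).resolve_left hne
  have hcv : g (B none) = 0 := by
    have h := hg 2 (-2)
    rw [hL 2 (-2), if_pos (by omega)] at h
    rw [show (2 + -2 : ℤ) = 0 by ring] at h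
    rw [map_add, map_smul, map_smul, h0, smul_zero, zero_add] at h
    have hne : ((((2:ℤ)):ℂ)^3 - (((2:ℤ)):ℂ))/12 ≠ 0 := by push_cast; norm_num
    exact (smul_eq_zero.mp h).resolve_left hne
  apply B.ext
  intro i
  rw [LinearMap.zero_apply]
  cases i with
  | none => exact hcv
  | some n =>
      by_cases hn : n = 0
      · subst hn; exact h0
      · exact h1 n hn

include hC hL in
private lemma fC_left (δ : ℂ) (hδ0 : δ ≠ 0) (f : V →ₗ[ℂ] V →ₗ[ℂ] V)
    (hf1 : ∀ x y z : V, δ • ⁅x, f y z⁆ + δ • ⁅f x z, y⁆ = f ⁅x, y⁆ z)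
    (hf2 : ∀ x y z : V, δ • ⁅f x y, z⁆ + δ • ⁅y, f x z⁆ = f x ⁅y, z⁆) :
    f (B none) = 0 := by
  have hb : ∀ z y : V, ⁅f (B none) z, y⁆ = 0 := by
    intro z y
    have h := hf1 (B none) y z
    rw [hC y, hC (f y z), map_zero, LinearMap.zero_apply, smul_zero, zero_add] at h
    exact (smul_eq_zero.mp h).resolve_left hδ0
  have hbr : ∀ m n : ℤ, f (B none) ⁅B (some m), B (some n)⁆ = 0 := by
    intro m n
    have h := hf2 (B none) (B (some m)) (B (some n))
    rw [hb (B (some m)) (B (some n))] at h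
    rw [← lie_skew (B (some m)) (f (B none) (B (some n))),
      hb (B (some n)) (B (some m)), neg_zero] at h
    rw [smul_zero, add_zero] at h
    exact h.symm
  exact killB B hC hL (f (B none)) hbr

include hC hL in
private lemma fC_right (δ : ℂ) (hδ0 : δ ≠ 0) (f : V →ₗ[ℂ] V →ₗ[ℂ] V)
    (hf1 : ∀ x y z : V, δ • ⁅x, f y z⁆ + δ • ⁅f x z, y⁆ = f ⁅x, y⁆ z)
    (hf2 : ∀ x y z : V, δ • ⁅f x y, z⁆ + δ • ⁅y, f x z⁆ = f x ⁅y, z⁆) :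
    ∀ x : V, f x (B none) = 0 := by
  have hyC : ∀ y : V, ⁅y, B none⁆ = (0:V) := fun y => by rw [← lie_skew, hC, neg_zero]
  have hb : ∀ x y : V, ⁅y, f x (B none)⁆ = 0 := by
    intro x y
    have h := hf2 x y (B none)
    rw [hyC y, map_zero, hyC (f x y), smul_zero, zero_add] at h
    exact (smul_eq_zero.mp h).resolve_left hδ0
  have hbr : ∀ m n : ℤ, (f.flip (B none)) ⁅B (some m), B (some n)⁆ = 0 := by
    intro m n
    have h := hf1 (B (some m)) (B (some n)) (B none)
    have e1 : ⁅B (some m), f (B (some n)) (B none)⁆ = (0:V) := hb (B (some n)) (B (some m))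
    have e2 : ⁅f (B (some m)) (B none), B (some n)⁆ = (0:V) := by
      rw [← lie_skew, hb (B (some m)) (B (some n)), neg_zero]
    rw [e1, e2, smul_zero, add_zero] at h
    simpa using h.symm
  have hz := killB B hC hL (f.flip (B none)) hbr
  intro x
  have hx := DFunLike.congr_fun hz x
  simpa using hx

include hC hL in
private lemma eqC1 (δ : ℂ) (hδ0 : δ ≠ 0) (f : V →ₗ[ℂ] V →ₗ[ℂ] V)
    (hf1 : ∀ x y z : V, δ • ⁅x, f y z⁆ + δ • ⁅f x z, y⁆ = f ⁅x, y⁆ z)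
    (hf2 : ∀ x y z : V, δ • ⁅f x y, z⁆ + δ • ⁅y, f x z⁆ = f x ⁅y, z⁆)
    (p q n k : ℤ) :
    ((p:ℂ) - q) * B.repr (f (B (some (p+q))) (B (some n))) (some k)
      = δ*(2*(p:ℂ) - k) * B.repr (f (B (some q)) (B (some n))) (some (k-p))
      + δ*((k:ℂ) - 2*q) * B.repr (f (B (some p)) (B (some n))) (some (k-q)) := by
  have h := hf1 (B (some p)) (B (some q)) (B (some n))
  rw [hL p q, map_add, map_smul, map_smul, fC_left B hC hL δ hδ0 f hf1 hf2] at h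
  simp only [LinearMap.add_apply, LinearMap.smul_apply, LinearMap.zero_apply, smul_zero,
    add_zero] at h
  rw [← lie_skew (f (B (some p)) (B (some n))) (B (some q))] at h
  have h2 := congrArg (fun w => B.repr w (some k)) h
  simp only [map_add, map_smul, map_neg, Finsupp.add_apply, Finsupp.smul_apply,
    Finsupp.neg_apply, smul_eq_mul] at h2
  rw [reprSome B hC hL p k _, reprSome B hC hL q k _] at h2
  push_cast at h2 ⊢
  linear_combination -h2

include hC hL in
private lemma eqC2 (δ : ℂ) (hδ0 : δ ≠ 0) (f : V →ₗ[ℂ] V →ₗ[ℂ] V)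
    (hf1 : ∀ x y z : V, δ • ⁅x, f y z⁆ + δ • ⁅f x z, y⁆ = f ⁅x, y⁆ z)
    (hf2 : ∀ x y z : V, δ • ⁅f x y, z⁆ + δ • ⁅y, f x z⁆ = f x ⁅y, z⁆)
    (m q r k : ℤ) :
    ((q:ℂ) - r) * B.repr (f (B (some m)) (B (some (q+r)))) (some k)
      = δ*((k:ℂ) - 2*r) * B.repr (f (B (some m)) (B (some q))) (some (k-r))
      + δ*(2*(q:ℂ) - k) * B.repr (f (B (some m)) (B (some r))) (some (k-q)) := by
  have h := hf2 (B (some m)) (B (some q)) (B (some r))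
  rw [hL q r, map_add, map_smul, map_smul,
    fC_right B hC hL δ hδ0 f hf1 hf2 (B (some m)), smul_zero, add_zero] at h
  rw [← lie_skew (f (B (some m)) (B (some q))) (B (some r))] at h
  have h2 := congrArg (fun w => B.repr w (some k)) h
  simp only [map_add, map_smul, map_neg, Finsupp.add_apply, Finsupp.smul_apply,
    Finsupp.neg_apply, smul_eq_mul] at h2
  rw [reprSome B hC hL r k _, reprSome B hC hL q k _] at h2
  push_cast at h2 ⊢
  linear_combination -h2

include hC hL in
private lemma eqD1 (δ : ℂ) (hδ0 : δ ≠ 0) (f : V →ₗ[ℂ] V →ₗ[ℂ] V)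
    (hf1 : ∀ x y z : V, δ • ⁅x, f y z⁆ + δ • ⁅f x z, y⁆ = f ⁅x, y⁆ z)
    (hf2 : ∀ x y z : V, δ • ⁅f x y, z⁆ + δ • ⁅y, f x z⁆ = f x ⁅y, z⁆)
    (p q n : ℤ) :
    ((p:ℂ) - q) * B.repr (f (B (some (p+q))) (B (some n))) none
      = δ*(((p:ℂ)^3 - p)/12) * B.repr (f (B (some q)) (B (some n))) (some (-p))
      + δ*(((q:ℂ) - (q:ℂ)^3)/12) * B.repr (f (B (some p)) (B (some n))) (some (-q)) := by
  have h := hf1 (B (some p)) (B (some q)) (B (some n))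
  rw [hL p q, map_add, map_smul, map_smul, fC_left B hC hL δ hδ0 f hf1 hf2] at h
  simp only [LinearMap.add_apply, LinearMap.smul_apply, LinearMap.zero_apply, smul_zero,
    add_zero] at h
  rw [← lie_skew (f (B (some p)) (B (some n))) (B (some q))] at h
  have h2 := congrArg (fun w => B.repr w none) h
  simp only [map_add, map_smul, map_neg, Finsupp.add_apply, Finsupp.smul_apply,
    Finsupp.neg_apply, smul_eq_mul] at h2
  rw [reprNone B hC hL p _, reprNone B hC hL q _] at h2
  push_cast at h2 ⊢
  linear_combination -h2

end Glue




theorem stmt10 {V : Type*} [LieRing V] [LieAlgebra ℂ V]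
    (B : Module.Basis (Option ℤ) ℂ V)
    (hC : ∀ x : V, ⁅B none, x⁆ = 0)
    (hL : ∀ m n : ℤ, ⁅B (some m), B (some n)⁆ =
        ((m : ℂ) - n) • B (some (m + n)) +
        (if m + n = 0 then ((m : ℂ)^3 - m)/12 else 0) • B none)
    (δ : ℂ) (f : V →ₗ[ℂ] V →ₗ[ℂ] V) (hf : IsBider δ f) :
    (δ = 1 → ∃ c : ℂ, ∀ x y : V, f x y = c • ⁅x, y⁆) ∧
    (δ ≠ 1 → f = 0) := by
  obtain ⟨hf1, hf2⟩ := hf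
  constructor
  · -- δ = 1
    intro hδ1
    subst hδ1
    have hδ0 : (1:ℂ) ≠ 0 := one_ne_zero
    obtain ⟨c, ha, hb⟩ := arith_one
      (fun m n k => B.repr (f (B (some m)) (B (some n))) (some k))
      (fun m n => B.repr (f (B (some m)) (B (some n))) none)
      (fun p q n k => by
        have h := eqC1 B hC hL 1 hδ0 f hf1 hf2 p q n k
        linear_combination h)
      (fun m q r k => by
        have h := eqC2 B hC hL 1 hδ0 f hf1 hf2 m q r k
        linear_combination h)
      (fun p q n => by
        have h := eqD1 B hC hL 1 hδ0 f hf1 hf2 p q n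
        linear_combination h)
    have ha' : ∀ m n k : ℤ, B.repr (f (B (some m)) (B (some n))) (some k)
        = c * ((m:ℂ) - n) * (if k = m + n then 1 else 0) := ha
    have hb' : ∀ m n : ℤ, B.repr (f (B (some m)) (B (some n))) none
        = c * (if m + n = 0 then ((m:ℂ)^3 - m)/12 else 0) := hb
    refine ⟨c, ?_⟩
    have hij : ∀ i j : Option ℤ, f (B i) (B j) = c • ⁅B i, B j⁆ := by
      intro i j
      cases i with
      | none =>
          rw [hC (B j), smul_zero, fC_left B hC hL 1 hδ0 f hf1 hf2, LinearMap.zero_apply]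
      | some m =>
          cases j with
          | none =>
              rw [fC_right B hC hL 1 hδ0 f hf1 hf2 (B (some m)),
                show ⁅B (some m), B none⁆ = (0:V) by rw [← lie_skew, hC, neg_zero], smul_zero]
          | some n =>
              apply B.repr.injective
              apply Finsupp.ext
              intro i
              rw [map_smul, hL m n, map_add, map_smul, map_smul, Module.Basis.repr_self,
                Module.Basis.repr_self]
              rw [Finsupp.smul_apply, Finsupp.add_apply, Finsupp.smul_apply,
                Finsupp.smul_apply]
              cases i with
              | none =>
                  rw [hb' m n, Finsupp.single_apply, Finsupp.single_apply]
                  rw [if_neg (show ¬(some (m + n) = (none : Option ℤ)) by simp),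
                    if_pos (rfl : (none : Option ℤ) = none)]
                  simp only [smul_eq_mul]
                  ring
              | some k =>
                  rw [ha' m n k, Finsupp.single_apply, Finsupp.single_apply]
                  rw [if_neg (show ¬((none : Option ℤ) = some k) by simp)]
                  simp only [smul_eq_mul, mul_zero, add_zero]
                  by_cases hk : k = m + n
                  · rw [if_pos (show some (m+n) = some k by rw [hk]), if_pos hk]
                    ring
                  · rw [if_neg (show ¬(some (m + n) = some k) from
                      fun hh => hk ((Option.some_inj.mp hh).symm)), if_neg hk]
                    ring
    intro x y
    have hfb : f = c • (brkt (V := V)) := by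
      apply B.ext; intro i
      apply B.ext; intro j
      rw [hij i j]
      simp only [LinearMap.smul_apply, brkt_apply]
    rw [hfb]
    simp only [LinearMap.smul_apply, brkt_apply]
  · intro hδ1
    by_cases hδ0 : δ = 0
    · subst hδ0
      have hbr : ∀ m n : ℤ, f ⁅B (some m), B (some n)⁆ = 0 := by
        intro m n
        apply LinearMap.ext; intro z
        have h := hf1 (B (some m)) (B (some n)) z
        simpa using h.symm
      exact killB B hC hL f hbr
    · have key : (∀ m n k : ℤ, B.repr (f (B (some m)) (B (some n))) (some k) = 0)
          ∧ (∀ m n : ℤ, B.repr (f (B (some m)) (B (some n))) none = 0) := by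
        by_cases hδh : δ = 1/2
        · subst hδh
          have ha0 := arith_half
            (fun m n k => B.repr (f (B (some m)) (B (some n))) (some k))
            (fun m n => B.repr (f (B (some m)) (B (some n))) none)
            (fun p q n k => by
              have h := eqC1 B hC hL (1/2) hδ0 f hf1 hf2 p q n k
              linear_combination h)
            (fun m q r k => by
              have h := eqC2 B hC hL (1/2) hδ0 f hf1 hf2 m q r k
              linear_combination h)
            (fun p q n => by
              have h := eqD1 B hC hL (1/2) hδ0 f hf1 hf2 p q n
              linear_combination h)
          refine ⟨ha0, ?_⟩
          exact bZero_of_aZero (1/2)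
            (fun m n k => B.repr (f (B (some m)) (B (some n))) (some k))
            (fun m n => B.repr (f (B (some m)) (B (some n))) none)
            ha0
            (fun p q n => by
              have h := eqD1 B hC hL (1/2) hδ0 f hf1 hf2 p q n
              linear_combination h)
        · have hδh' : 2*δ - 1 ≠ 0 := by
            intro hh
            exact hδh (by linear_combination (1/2) * hh)
          have ha0 := arithA_generic δ hδ0 hδ1 hδh'
            (fun m n k => B.repr (f (B (some m)) (B (some n))) (some k))
            (fun p q n k => by
              have h := eqC1 B hC hL δ hδ0 f hf1 hf2 p q n k
              linear_combination h)
            (fun m q r k => by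
              have h := eqC2 B hC hL δ hδ0 f hf1 hf2 m q r k
              linear_combination h)
          refine ⟨ha0, ?_⟩
          exact bZero_of_aZero δ
            (fun m n k => B.repr (f (B (some m)) (B (some n))) (some k))
            (fun m n => B.repr (f (B (some m)) (B (some n))) none)
            ha0
            (fun p q n => by
              have h := eqD1 B hC hL δ hδ0 f hf1 hf2 p q n
              linear_combination h)
      apply B.ext; intro i
      rw [LinearMap.zero_apply]
      cases i with
      | none => exact fC_left B hC hL δ hδ0 f hf1 hf2
      | some m =>
          apply B.ext; intro j
          rw [LinearMap.zero_apply]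
          cases j with
          | none => exact fC_right B hC hL δ hδ0 f hf1 hf2 (B (some m))
          | some n =>
              apply (LinearEquiv.map_eq_zero_iff B.repr).mp
              apply Finsupp.ext
              intro i
              rw [Finsupp.coe_zero, Pi.zero_apply]
              cases i with
              | none => exact key.2 m n
              | some k => exact key.1 m n k
end

section
/- For a,b ∈ ℂ, the W-algebra W(a,b) is perfect if and only if (a,b) ≠ (0,1) (where a is normalized to lie in [0,1), i.e. a+j+b·i ranges so that all I_n except possibly I_0 are in the derived algebra). -/
theorem stmt11 {W : Type*} [LieRing W] [LieAlgebra ℂ W] (a b : ℂ)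
    (ha : ∀ k : ℤ, (k : ℂ) = a → k = 0)
    (B : Module.Basis (ℤ ⊕ ℤ) ℂ W)
    (hLL : ∀ i j : ℤ, ⁅B (Sum.inl i), B (Sum.inl j)⁆ =
        ((i : ℂ) - j) • B (Sum.inl (i + j)))
    (hLI : ∀ i j : ℤ, ⁅B (Sum.inl i), B (Sum.inr j)⁆ =
        -(a + j + b * i) • B (Sum.inr (i + j)))
    (hII : ∀ i j : ℤ, ⁅B (Sum.inr i), B (Sum.inr j)⁆ = 0) :
    ⁅(⊤ : LieIdeal ℂ W), (⊤ : LieIdeal ℂ W)⁆ = ⊤ ↔ ¬(a = 0 ∧ b = 1) := by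
  constructor
  · rintro htop ⟨rfl, rfl⟩
    set φ := B.coord (Sum.inr 0) with hφ
    set ψ : W →ₗ[ℂ] W →ₗ[ℂ] ℂ := LinearMap.mk₂ ℂ (fun x y => φ ⁅x, y⁆)
      (by intro x x' y; simp [add_lie])
      (by intro c x y; simp [smul_lie])
      (by intro x y y'; simp [lie_add])
      (by intro c x y; simp [lie_smul]) with hψ
    have hbr : ∀ x y : W, φ ⁅x, y⁆ = 0 := by
      have hz : ψ = 0 := by
        apply B.ext; intro k; apply B.ext; intro l
        rcases k with i | i <;> rcases l with j | j
        · simp [hψ, hLL, hφ, Module.Basis.coord_apply, Module.Basis.repr_self]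
        · rcases eq_or_ne (i + j) 0 with h0 | h0
          · have hij : (i : ℂ) + j = 0 := by exact_mod_cast h0
            simp [hψ, hLI]
            left
            linear_combination -hij
          · simp [hψ, hLI, hφ, Module.Basis.coord_apply, Module.Basis.repr_self,
              Finsupp.single_apply, h0]
        · simp only [hψ, LinearMap.mk₂_apply, LinearMap.zero_apply]
          rw [← lie_skew, hLI, map_neg, map_smul]
          rcases eq_or_ne (j + i) 0 with h0 | h0
          · have hij : (j : ℂ) + i = 0 := by exact_mod_cast h0
            have hc : -(0 + (i : ℂ) + 1 * j) = 0 := by linear_combination -hij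
            simp [hc]
            left
            linear_combination -hij
          · simp [hφ, Module.Basis.coord_apply, Module.Basis.repr_self, Finsupp.single_apply, h0]
        · simp [hψ, hII]
      intro x y
      have := congrArg (fun f => f x y) hz
      simpa [hψ] using this
    set K : LieIdeal ℂ W := { LinearMap.ker φ with
      lie_mem := fun {x m} _ => by simpa using hbr x m } with hK
    have hle : ⁅(⊤ : LieIdeal ℂ W), (⊤ : LieIdeal ℂ W)⁆ ≤ K := by
      rw [LieSubmodule.lieIdeal_oper_eq_span, LieSubmodule.lieSpan_le]
      rintro m ⟨x, n, rfl⟩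
      simpa [hK] using hbr x n
    rw [htop] at hle
    have hmem : B (Sum.inr 0) ∈ K := hle (LieSubmodule.mem_top _)
    have : φ (B (Sum.inr 0)) = 0 := by simpa [hK] using hmem
    simp [hφ, Module.Basis.coord_apply, Module.Basis.repr_self] at this
  · intro h
    set D := ⁅(⊤ : LieIdeal ℂ W), (⊤ : LieIdeal ℂ W)⁆ with hD
    have key : ∀ (x y w : W) (c : ℂ), c ≠ 0 → ⁅x, y⁆ = c • w → w ∈ D := by
      intro x y w c hc hxy
      have hb : ⁅x, y⁆ ∈ D := LieSubmodule.lie_mem_lie (LieSubmodule.mem_top x)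
        (LieSubmodule.mem_top y)
      have : w = c⁻¹ • ⁅x, y⁆ := by rw [hxy, smul_smul, inv_mul_cancel₀ hc, one_smul]
      rw [this]; exact D.smul_mem _ hb
    have hspan : ∀ k : ℤ ⊕ ℤ, B k ∈ D := by
      rintro (n | n)
      · rcases eq_or_ne n 0 with rfl | hn
        · exact key (B (Sum.inl 1)) (B (Sum.inl (-1))) _ 2 two_ne_zero
            (by rw [hLL]; norm_num)
        · exact key (B (Sum.inl 0)) (B (Sum.inl n)) _ (-(n : ℂ))
            (by simpa using fun h' => hn (by exact_mod_cast h'))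
            (by rw [hLL]; norm_num)
      · by_cases hb1 : b = 1
        · have ha0 : a ≠ 0 := fun h0 => h ⟨h0, hb1⟩
          refine key (B (Sum.inl 0)) (B (Sum.inr n)) _ (-(a + n)) ?_
            (by rw [hLI]; norm_num)
          intro hcon
          have han : ((-n : ℤ) : ℂ) = a := by push_cast; linear_combination hcon
          have hn0 := ha (-n) han
          apply ha0
          rw [← han]; simp [neg_eq_zero.mp hn0]
        · rcases eq_or_ne (a + n) 0 with h0 | h0
          · refine key (B (Sum.inl 1)) (B (Sum.inr (n - 1))) _ (-(b - 1)) ?_ ?_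
            · intro hcon; apply hb1
              have := neg_eq_zero.mp hcon
              linear_combination this
            · rw [hLI]
              congr 1
              · push_cast; linear_combination -h0
              · congr 1; ring
          · refine key (B (Sum.inl 0)) (B (Sum.inr n)) _ (-(a + n)) ?_
              (by rw [hLI]; norm_num)
            intro hcon; apply h0
            have := neg_eq_zero.mp hcon
            linear_combination this
    have htople : (⊤ : Submodule ℂ W) ≤ (D : Submodule ℂ W) := by
      rw [← B.span_eq]
      exact Submodule.span_le.mpr (by rintro _ ⟨k, rfl⟩; exact hspan k)
    rw [hD] at htople ⊢
    rw [eq_top_iff]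
    intro x _
    exact htople trivial
end

section
/- For n ∈ ℤ, the bilinear maps Φ_n and Ψ_n on W(a,−1), defined by Φ_n(L_i,L_j) = L_{n+i+j}, Φ_n(L_i,I_j) = Φ_n(I_i,L_j) = I_{n+i+j}, Φ_n(I_i,I_j) = 0, and Ψ_n(L_i,L_j) = I_{n+i+j} with all other Ψ_n values zero, are (1/2)-biderivations of W(a,−1). -/
/-- Reduce the first `δ`-biderivation identity to basis elements. -/
lemma bider_key {W : Type*} [LieRing W] [LieAlgebra ℂ W] (B : Module.Basis (ℤ ⊕ ℤ) ℂ W)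
    (δ : ℂ) (f : W →ₗ[ℂ] W →ₗ[ℂ] W)
    (hb : ∀ p q r : ℤ ⊕ ℤ,
      δ • ⁅B p, f (B q) (B r)⁆ + δ • ⁅f (B p) (B r), B q⁆ = f ⁅B p, B q⁆ (B r)) :
    ∀ x y z, δ • ⁅x, f y z⁆ + δ • ⁅f x z, y⁆ = f ⁅x, y⁆ z := by
  have hmem : ∀ x : W, x ∈ Submodule.span ℂ (Set.range B) := fun x => by
    rw [B.span_eq]; exact Submodule.mem_top
  have h3 : ∀ (p q : ℤ ⊕ ℤ) (z : W),
      δ • ⁅B p, f (B q) z⁆ + δ • ⁅f (B p) z, B q⁆ = f ⁅B p, B q⁆ z := by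
    intro p q z
    induction hmem z using Submodule.span_induction with
    | mem w hw => obtain ⟨r, rfl⟩ := hw; exact hb p q r
    | zero => simp
    | add z1 z2 _ _ h1 h2 =>
      simp only [map_add, lie_add, add_lie, smul_add]
      rw [← h1, ← h2]; abel
    | smul c z1 _ h =>
      simp only [map_smul, lie_smul, smul_lie]
      rw [← h]; module
  have h2 : ∀ (p : ℤ ⊕ ℤ) (y z : W),
      δ • ⁅B p, f y z⁆ + δ • ⁅f (B p) z, y⁆ = f ⁅B p, y⁆ z := by
    intro p y
    induction hmem y using Submodule.span_induction with
    | mem w hw => obtain ⟨q, rfl⟩ := hw; exact h3 p q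
    | zero => simp
    | add y1 y2 _ _ h1 h2 =>
      intro z
      simp only [map_add, lie_add, add_lie, smul_add, LinearMap.add_apply]
      rw [← h1 z, ← h2 z]; abel
    | smul c y1 _ h =>
      intro z
      simp only [map_smul, lie_smul, smul_lie, LinearMap.smul_apply]
      rw [← h z]; module
  intro x
  induction hmem x using Submodule.span_induction with
  | mem w hw => obtain ⟨p, rfl⟩ := hw; exact h2 p
  | zero => simp
  | add x1 x2 _ _ h1 h2 =>
    intro y z
    simp only [map_add, lie_add, add_lie, smul_add, LinearMap.add_apply]
    rw [← h1 y z, ← h2 y z]; abel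
  | smul c x1 _ h =>
    intro y z
    simp only [map_smul, lie_smul, smul_lie, LinearMap.smul_apply]
    rw [← h y z]; module

/-- A bilinear map is a `δ`-biderivation as soon as both identities hold on basis vectors. -/
lemma bider_of_basis {W : Type*} [LieRing W] [LieAlgebra ℂ W] (B : Module.Basis (ℤ ⊕ ℤ) ℂ W)
    (δ : ℂ) (f : W →ₗ[ℂ] W →ₗ[ℂ] W)
    (hb1 : ∀ p q r : ℤ ⊕ ℤ,
      δ • ⁅B p, f (B q) (B r)⁆ + δ • ⁅f (B p) (B r), B q⁆ = f ⁅B p, B q⁆ (B r))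
    (hb2 : ∀ p q r : ℤ ⊕ ℤ,
      δ • ⁅f (B p) (B q), B r⁆ + δ • ⁅B q, f (B p) (B r)⁆ = f (B p) ⁅B q, B r⁆) :
    IsBider δ f := by
  constructor
  · exact bider_key B δ f hb1
  · intro x y z
    have key := bider_key B δ f.flip (fun p q r => by
      simp only [LinearMap.flip_apply]
      rw [add_comm]
      exact hb2 r p q) y z x
    simp only [LinearMap.flip_apply] at key
    rw [add_comm]
    exact key

theorem stmt12 {W : Type*} [LieRing W] [LieAlgebra ℂ W] (a : ℂ)
    (B : Module.Basis (ℤ ⊕ ℤ) ℂ W)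
    (hLL : ∀ i j : ℤ, ⁅B (Sum.inl i), B (Sum.inl j)⁆ =
        ((i : ℂ) - j) • B (Sum.inl (i + j)))
    (hLI : ∀ i j : ℤ, ⁅B (Sum.inl i), B (Sum.inr j)⁆ =
        -(a + j + (-1) * i) • B (Sum.inr (i + j)))
    (hII : ∀ i j : ℤ, ⁅B (Sum.inr i), B (Sum.inr j)⁆ = 0)
    (n : ℤ) (Φ Ψ : W →ₗ[ℂ] W →ₗ[ℂ] W)
    (hΦ1 : ∀ i j : ℤ, Φ (B (Sum.inl i)) (B (Sum.inl j)) = B (Sum.inl (n + i + j)))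
    (hΦ2 : ∀ i j : ℤ, Φ (B (Sum.inl i)) (B (Sum.inr j)) = B (Sum.inr (n + i + j)))
    (hΦ3 : ∀ i j : ℤ, Φ (B (Sum.inr i)) (B (Sum.inl j)) = B (Sum.inr (n + i + j)))
    (hΦ4 : ∀ i j : ℤ, Φ (B (Sum.inr i)) (B (Sum.inr j)) = 0)
    (hΨ1 : ∀ i j : ℤ, Ψ (B (Sum.inl i)) (B (Sum.inl j)) = B (Sum.inr (n + i + j)))
    (hΨ2 : ∀ i j : ℤ, Ψ (B (Sum.inl i)) (B (Sum.inr j)) = 0)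
    (hΨ3 : ∀ i j : ℤ, Ψ (B (Sum.inr i)) (B (Sum.inl j)) = 0)
    (hΨ4 : ∀ i j : ℤ, Ψ (B (Sum.inr i)) (B (Sum.inr j)) = 0) :
    IsBider (1/2) Φ ∧ IsBider (1/2) Ψ := by
  have hIL : ∀ i j : ℤ, ⁅B (Sum.inr i), B (Sum.inl j)⁆ =
      (a + i + (-1) * j) • B (Sum.inr (j + i)) := by
    intro i j; rw [← lie_skew, hLI j i, neg_smul, neg_neg]
  constructor
  · refine bider_of_basis B _ Φ ?_ ?_ <;>
      rintro (p|p) (q|q) (r|r) <;>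
        simp only [hΦ1, hΦ2, hΦ3, hΦ4, hLL, hLI, hIL, hII, map_smul, LinearMap.smul_apply,
          map_zero, LinearMap.zero_apply, smul_zero, zero_smul, add_zero, zero_add,
          lie_zero, zero_lie] <;>
        push_cast <;> ring_nf <;> module
  · refine bider_of_basis B _ Ψ ?_ ?_ <;>
      rintro (p|p) (q|q) (r|r) <;>
        simp only [hΨ1, hΨ2, hΨ3, hΨ4, hLL, hLI, hIL, hII, map_smul, LinearMap.smul_apply,
          map_zero, LinearMap.zero_apply, smul_zero, zero_smul, add_zero, zero_add,
          lie_zero, zero_lie] <;>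
        push_cast <;> ring_nf <;> module
end

section
/- If b ≠ −1, then every (1/2)-biderivation of the W-algebra W(a,b) is zero. -/
private lemma solveSystem (a b : ℂ) (hb1 : b ≠ -1) (aa bb cc dd : ℤ → ℤ → ℂ)
    (E1 : ∀ i j k : ℤ, 2*((i:ℂ)-(j:ℂ)) * aa (i+j) k
        = ((k:ℂ)-2*(j:ℂ)) * aa i (k-j) - ((k:ℂ)-2*(i:ℂ)) * aa j (k-i))
    (E2 : ∀ i j k : ℤ, 2*((i:ℂ)-(j:ℂ)) * bb (i+j) k
        = (a+((k:ℂ)-(j:ℂ))+b*(j:ℂ)) * bb i (k-j) - (a+((k:ℂ)-(i:ℂ))+b*(i:ℂ)) * bb j (k-i))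
    (E3 : ∀ i j k : ℤ, -2*(a+(j:ℂ)+b*(i:ℂ)) * cc (i+j) k = -((k:ℂ)-2*(i:ℂ)) * cc j (k-i))
    (E4 : ∀ i j k : ℤ, -2*(a+(j:ℂ)+b*(i:ℂ)) * dd (i+j) k
        = -(a+(j:ℂ)+b*((k:ℂ)-(j:ℂ))) * aa i (k-j) - (a+((k:ℂ)-(i:ℂ))+b*(i:ℂ)) * dd j (k-i))
    (E5 : ∀ i j k : ℤ, 0 = -(a+(j:ℂ)+b*((k:ℂ)-(j:ℂ))) * cc i (k-j)
        + (a+(i:ℂ)+b*((k:ℂ)-(i:ℂ))) * cc j (k-i)) :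
    (∀ n k : ℤ, aa n k = if k = n then aa 0 0 else 0) ∧ (∀ n k : ℤ, bb n k = 0) ∧
    (∀ n k : ℤ, cc n k = 0) ∧ (∀ n k : ℤ, dd n k = if k = n then aa 0 0 else 0) := by
  -- ===== c part =====
  have hcsupp : ∀ j k : ℤ, ((k:ℂ) - 2*a - 2*(j:ℂ)) * cc j k = 0 := by
    intro j k
    have h := E3 0 j k
    rw [show (0:ℤ)+j = j from zero_add j, show k-(0:ℤ) = k from sub_zero k] at h
    linear_combination (norm := (push_cast; ring1)) h
  have hc : ∀ n m : ℤ, cc n m = 0 := by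
    intro n m
    by_contra hne
    have hd : ∀ j : ℤ, (a + (j:ℂ) + b*(m:ℂ) = 0) ∨ ((m:ℂ) - (n:ℂ) - (j:ℂ) = 2*a) := by
      intro j
      by_contra hcon
      push_neg at hcon
      have h5 := E5 n j (m + j)
      rw [show m+j-j = m from by ring] at h5
      have hsub : cc j (m + j - n) = 0 := by
        have hs := hcsupp j (m + j - n)
        refine (mul_eq_zero.mp hs).resolve_left ?_
        intro hz
        apply hcon.2
        linear_combination (norm := (push_cast; ring1)) hz
      rw [hsub, mul_zero, add_zero] at h5
      have hzero : (a + (j:ℂ) + b*(m:ℂ)) * cc n m = 0 := by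
        linear_combination (norm := (push_cast; ring1)) h5
      rcases mul_eq_zero.mp hzero with h | h
      · exact hcon.1 h
      · exact hne h
    rcases hd 0 with h0|h0 <;> rcases hd 1 with h1|h1 <;> rcases hd 2 with h2|h2 <;>
      first
      | exact absurd (show (1:ℂ) = 0 by linear_combination (norm := (push_cast; ring1)) h1 - h0)
          one_ne_zero
      | exact absurd (show (1:ℂ) = 0 by linear_combination (norm := (push_cast; ring1)) h0 - h1)
          one_ne_zero
      | exact absurd (show (1:ℂ) = 0 by linear_combination (norm := (push_cast; ring1)) h2 - h1)
          one_ne_zero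
      | exact absurd (show (1:ℂ) = 0 by linear_combination (norm := (push_cast; ring1)) h1 - h2)
          one_ne_zero
      | exact absurd (show (2:ℂ) = 0 by linear_combination (norm := (push_cast; ring1)) h2 - h0)
          (by norm_num)
      | exact absurd (show (2:ℂ) = 0 by linear_combination (norm := (push_cast; ring1)) h0 - h2)
          (by norm_num)
  -- ===== b part =====
  have hbsupp : ∀ j k : ℤ, (a + (k:ℂ) - 2*(j:ℂ)) * bb j k
      = (a + (k:ℂ) - (j:ℂ) + b*(j:ℂ)) * bb 0 (k-j) := by
    intro j k
    have h := E2 0 j k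
    rw [show (0:ℤ)+j = j from zero_add j, show k-(0:ℤ) = k from sub_zero k] at h
    linear_combination (norm := (push_cast; ring1)) h
  have hb0 : ∀ s : ℤ, bb 0 s = 0 := by
    intro s
    by_cases hb2 : b = 2
    · subst hb2
      have h1 := E2 2 1 (s+3)
      rw [show (2:ℤ)+1 = 3 from by norm_num, show s+3-1 = s+2 from by ring,
        show s+3-2 = s+1 from by ring] at h1
      have h2 := hbsupp 3 (s+3); rw [show s+3-3 = s from by ring] at h2
      have h3 := hbsupp 2 (s+2); rw [show s+2-2 = s from by ring] at h3
      have h4 := hbsupp 1 (s+1); rw [show s+1-1 = s from by ring] at h4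
      have key : (36:ℂ) * bb 0 s = 0 := by
        linear_combination (norm := (push_cast; ring1))
          (a+(s:ℂ)-1)*(a+(s:ℂ)-2)*(a+(s:ℂ)-3)*h1 - 2*(a+(s:ℂ)-1)*(a+(s:ℂ)-2)*h2
            + (a+(s:ℂ)+4)*(a+(s:ℂ)-1)*(a+(s:ℂ)-3)*h3 - (a+(s:ℂ)+5)*(a+(s:ℂ)-2)*(a+(s:ℂ)-3)*h4
      linear_combination key / 36
    · have h1 := E2 1 (-1) s
      rw [show (1:ℤ)+(-1) = 0 from by norm_num, show s-(-1:ℤ) = s+1 from by ring] at h1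
      have h2 := hbsupp 1 (s+1); rw [show s+1-1 = s from by ring] at h2
      have h3 := hbsupp (-1) (s-1); rw [show s-1-(-1:ℤ) = s from by ring] at h3
      have key : 2*(b-2)*(b+1) * bb 0 s = 0 := by
        linear_combination (norm := (push_cast; ring1))
          (a+(s:ℂ)-1)*(a+(s:ℂ)+1)*h1 + (a+(s:ℂ)+1)*(a+(s:ℂ)+1-b)*h2
            - (a+(s:ℂ)-1)*(a+(s:ℂ)-1+b)*h3
      have hf1 : (b-2) ≠ 0 := sub_ne_zero.mpr hb2
      have hf2 : (b+1) ≠ 0 := fun h => hb1 (by linear_combination h)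
      rcases mul_eq_zero.mp key with h | h
      · rcases mul_eq_zero.mp h with h' | h'
        · rcases mul_eq_zero.mp h' with h'' | h''
          · norm_num at h''
          · exact absurd h'' hf1
        · exact absurd h' hf2
      · exact h
  have hbb : ∀ n k : ℤ, bb n k = 0 := by
    intro n k
    by_cases hk : a + (k:ℂ) - 2*(n:ℂ) = 0
    · by_cases hn : n = -1 ∨ n = -2
      · have h1 := E2 (n-1) 1 k
        rw [show n-1+1 = n from by ring, show k-(n-1) = k-n+1 from by ring] at h1
        have z1 : bb (n-1) (k-1) = 0 := by
          have h := hbsupp (n-1) (k-1)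
          rw [show k-1-(n-1) = k-n from by ring, hb0 (k-n), mul_zero] at h
          refine (mul_eq_zero.mp h).resolve_left ?_
          intro hcon
          exact one_ne_zero (α := ℂ) (by linear_combination (norm := (push_cast; ring1)) hcon - hk)
        have z2 : bb 1 (k-n+1) = 0 := by
          have h := hbsupp 1 (k-n+1)
          rw [show k-n+1-1 = k-n from by ring, hb0 (k-n), mul_zero] at h
          refine (mul_eq_zero.mp h).resolve_left ?_
          intro hcon
          have hn1 : (n:ℂ) - 1 = 0 := by linear_combination (norm := (push_cast; ring1)) hcon - hk
          rcases hn with rfl | rfl <;> [skip; skip] <;> push_cast at hn1 <;> norm_num at hn1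
        rw [z1, z2, mul_zero, mul_zero, sub_zero] at h1
        have key : ((n:ℂ)-2) * bb n k = 0 := by
          linear_combination (norm := (push_cast; ring1)) h1 / 2
        refine (mul_eq_zero.mp key).resolve_left ?_
        intro hcon
        rcases hn with rfl | rfl <;> push_cast at hcon <;> norm_num at hcon
      · push_neg at hn
        have hn1 : ((n:ℂ)+1) ≠ 0 := fun h =>
          hn.1 (by exact_mod_cast (eq_neg_of_add_eq_zero_left h : (n:ℂ) = -1))
        have hn2 : ((n:ℂ)+2) ≠ 0 := fun h => by
          have : (n:ℂ) = -2 := by linear_combination h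
          exact hn.2 (by exact_mod_cast this)
        have h1 := E2 (n+1) (-1) k
        rw [show n+1+(-1) = n from by ring, show k-(-1:ℤ) = k+1 from by ring,
          show k-(n+1) = k-n-1 from by ring] at h1
        have z1 : bb (n+1) (k+1) = 0 := by
          have h := hbsupp (n+1) (k+1)
          rw [show k+1-(n+1) = k-n from by ring, hb0 (k-n), mul_zero] at h
          refine (mul_eq_zero.mp h).resolve_left ?_
          intro hcon
          exact one_ne_zero (α := ℂ) (by linear_combination (norm := (push_cast; ring1)) hk - hcon)
        have z2 : bb (-1) (k-n-1) = 0 := by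
          have h := hbsupp (-1) (k-n-1)
          rw [show k-n-1-(-1:ℤ) = k-n from by ring, hb0 (k-n), mul_zero] at h
          refine (mul_eq_zero.mp h).resolve_left ?_
          intro hcon
          exact hn1 (by linear_combination (norm := (push_cast; ring1)) hcon - hk)
        rw [z1, z2, mul_zero, mul_zero, sub_zero] at h1
        have key : ((n:ℂ)+2) * bb n k = 0 := by
          linear_combination (norm := (push_cast; ring1)) h1 / 2
        exact (mul_eq_zero.mp key).resolve_left hn2
    · have h := hbsupp n k
      rw [hb0 (k-n), mul_zero] at h
      exact (mul_eq_zero.mp h).resolve_left hk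
  -- ===== a part =====
  have hadag : ∀ n k : ℤ, ((k:ℂ) - 2*(n:ℂ)) * aa n k = ((k:ℂ) - 2*(n:ℂ)) * aa 0 (k-n) := by
    intro n k
    have h := E1 0 n k
    rw [show (0:ℤ)+n = n from zero_add n, show k-(0:ℤ) = k from sub_zero k] at h
    linear_combination (norm := (push_cast; ring1)) h
  have hdsupp : ∀ j k : ℤ, ((k:ℂ) - a - 2*(j:ℂ)) * dd j k
      = -(a + (j:ℂ) + b*((k:ℂ)-(j:ℂ))) * aa 0 (k-j) := by
    intro j k
    have h := E4 0 j k
    rw [show (0:ℤ)+j = j from zero_add j, show k-(0:ℤ) = k from sub_zero k] at h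
    linear_combination (norm := (push_cast; ring1)) h
  have ha0 : ∀ m : ℤ, m ≠ 0 → aa 0 m = 0 := by
    intro m hm
    have main : ∀ i j : ℤ,
        ((m:ℂ)-(i:ℂ))*(i:ℂ)*(m:ℂ)*(b+1)*(b*((i:ℂ)+(m:ℂ))-(b-2)*(a+(j:ℂ))) * aa 0 m = 0 := by
      intro i j
      have H1 := E4 i j (m+i+j)
      rw [show m+i+j-j = m+i from by ring, show m+i+j-i = m+j from by ring] at H1
      have H2 := hdsupp (i+j) (m+i+j)
      rw [show m+i+j-(i+j) = m from by ring] at H2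
      have H3 := hdsupp j (m+j)
      rw [show m+j-j = m from by ring] at H3
      have H4 := hadag i (m+i)
      rw [show m+i-i = m from by ring] at H4
      linear_combination (norm := (push_cast; ring1))
        ((m:ℂ)-(i:ℂ))*((m:ℂ)-(i:ℂ)-(j:ℂ)-a)*((m:ℂ)-(j:ℂ)-a)*H1
          + 2*(a+(j:ℂ)+b*(i:ℂ))*((m:ℂ)-(i:ℂ))*((m:ℂ)-(j:ℂ)-a)*H2
          - (a+(m:ℂ)+(j:ℂ)+b*(i:ℂ))*((m:ℂ)-(i:ℂ))*((m:ℂ)-(i:ℂ)-(j:ℂ)-a)*H3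
          - (a+(j:ℂ)+b*((m:ℂ)+(i:ℂ)))*((m:ℂ)-(i:ℂ)-(j:ℂ)-a)*((m:ℂ)-(j:ℂ)-a)*H4
    have hmc : (m:ℂ) ≠ 0 := Int.cast_ne_zero.mpr hm
    have hbp : (b+1) ≠ 0 := fun h => hb1 (by linear_combination h)
    have cancel : ∀ i j : ℤ, ((m:ℂ)-(i:ℂ)) ≠ 0 → (i:ℂ) ≠ 0 →
        (b*((i:ℂ)+(m:ℂ))-(b-2)*(a+(j:ℂ))) ≠ 0 → aa 0 m = 0 := by
      intro i j h1 h2 h3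
      have hX : ((m:ℂ)-(i:ℂ))*(i:ℂ)*(m:ℂ)*(b+1)*(b*((i:ℂ)+(m:ℂ))-(b-2)*(a+(j:ℂ))) ≠ 0 :=
        mul_ne_zero (mul_ne_zero (mul_ne_zero (mul_ne_zero h1 h2) hmc) hbp) h3
      exact (mul_eq_zero.mp (main i j)).resolve_left hX
    by_cases hb2 : b = 2
    · subst hb2
      by_cases hm1 : m = 1 ∨ m = -1
      · refine cancel 2 0 ?_ (by norm_num) ?_ <;>
          rcases hm1 with rfl | rfl <;> push_cast <;> norm_num
      · by_cases hm2 : m = 2 ∨ m = -2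
        · refine cancel 3 0 ?_ (by norm_num) ?_ <;>
            rcases hm2 with rfl | rfl <;> push_cast <;> norm_num
        · push_neg at hm1; push_neg at hm2
          refine cancel 1 0 ?_ (by norm_num) ?_
          · intro h
            exact hm1.1 (by exact_mod_cast (show (m:ℂ) = 1 by linear_combination h))
          · intro h
            have : (m:ℂ) = -1 := by push_cast at h ⊢; linear_combination h/2
            exact hm1.2 (by exact_mod_cast this)
    · have hi : ∀ i : ℤ, ((m:ℂ)-(i:ℂ)) ≠ 0 → (i:ℂ) ≠ 0 → aa 0 m = 0 := by
        intro i hi1 hi2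
        by_cases hj : b*((i:ℂ)+(m:ℂ))-(b-2)*(a+((0:ℤ):ℂ)) = 0
        · refine cancel i 1 hi1 hi2 ?_
          intro h
          exact (sub_ne_zero.mpr hb2) (by linear_combination (norm := (push_cast; ring1)) hj - h)
        · exact cancel i 0 hi1 hi2 hj
      by_cases hm1 : m = 1
      · subst hm1
        refine hi 2 (by norm_num) (by norm_num)
      · refine hi 1 ?_ (by norm_num)
        intro h
        exact hm1 (by exact_mod_cast (show (m:ℂ) = 1 by linear_combination h))
  have hadiag : ∀ n : ℤ, aa n n = aa 0 0 := by
    intro n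
    by_cases hn : n = 0
    · subst hn; rfl
    · have h := hadag n n
      rw [show n-n = (0:ℤ) from by ring] at h
      have hne : ((n:ℂ) - 2*(n:ℂ)) ≠ 0 := by
        intro hcon
        exact hn (by exact_mod_cast (show (n:ℂ) = 0 by linear_combination -hcon))
      exact mul_left_cancel₀ hne h
  have haoff : ∀ n k : ℤ, k ≠ n → aa n k = 0 := by
    intro n k hkn
    by_cases h2n : k = 2*n
    · subst h2n
      have hn0 : n ≠ 0 := by omega
      by_cases hn : n = -1 ∨ n = -2
      · have H := E1 (n-1) 1 (2*n)
        rw [show n-1+1 = n from by ring, show 2*n-(n-1) = n+1 from by ring] at H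
        have z1 : aa (n-1) (2*n-1) = 0 := by
          have h := hadag (n-1) (2*n-1)
          rw [show 2*n-1-(n-1) = n from by ring, ha0 n hn0, mul_zero] at h
          refine (mul_eq_zero.mp h).resolve_left ?_
          intro hcon
          exact one_ne_zero (α := ℂ) (by linear_combination (norm := (push_cast; ring1)) hcon)
        have z2 : aa 1 (n+1) = 0 := by
          have h := hadag 1 (n+1)
          rw [show n+1-1 = n from by ring, ha0 n hn0, mul_zero] at h
          refine (mul_eq_zero.mp h).resolve_left ?_
          intro hcon
          have : (n:ℂ) - 1 = 0 := by linear_combination (norm := (push_cast; ring1)) hcon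
          rcases hn with rfl | rfl <;> push_cast at this <;> norm_num at this
        rw [z1, z2, mul_zero, mul_zero, sub_zero] at H
        have key : ((n:ℂ)-2) * aa n (2*n) = 0 := by
          linear_combination (norm := (push_cast; ring1)) H / 2
        refine (mul_eq_zero.mp key).resolve_left ?_
        intro hcon
        rcases hn with rfl | rfl <;> push_cast at hcon <;> norm_num at hcon
      · push_neg at hn
        have hn1 : ((n:ℂ)+1) ≠ 0 := fun h =>
          hn.1 (by exact_mod_cast (eq_neg_of_add_eq_zero_left h : (n:ℂ) = -1))
        have hn2 : ((n:ℂ)+2) ≠ 0 := fun h => by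
          have : (n:ℂ) = -2 := by linear_combination h
          exact hn.2 (by exact_mod_cast this)
        have H := E1 (n+1) (-1) (2*n)
        rw [show n+1+(-1) = n from by ring, show 2*n-(-1:ℤ) = 2*n+1 from by ring,
          show 2*n-(n+1) = n-1 from by ring] at H
        have z1 : aa (n+1) (2*n+1) = 0 := by
          have h := hadag (n+1) (2*n+1)
          rw [show 2*n+1-(n+1) = n from by ring, ha0 n hn0, mul_zero] at h
          refine (mul_eq_zero.mp h).resolve_left ?_
          intro hcon
          exact one_ne_zero (α := ℂ) (by linear_combination (norm := (push_cast; ring1)) -hcon)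
        have z2 : aa (-1) (n-1) = 0 := by
          have h := hadag (-1) (n-1)
          rw [show n-1-(-1:ℤ) = n from by ring, ha0 n hn0, mul_zero] at h
          refine (mul_eq_zero.mp h).resolve_left ?_
          intro hcon
          exact hn1 (by linear_combination (norm := (push_cast; ring1)) hcon)
        rw [z1, z2, mul_zero, mul_zero, sub_zero] at H
        have key : ((n:ℂ)+2) * aa n (2*n) = 0 := by
          linear_combination (norm := (push_cast; ring1)) H / 2
        exact (mul_eq_zero.mp key).resolve_left hn2
    · have h := hadag n k
      rw [ha0 (k-n) (sub_ne_zero.mpr hkn), mul_zero] at h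
      refine (mul_eq_zero.mp h).resolve_left ?_
      intro hcon
      exact h2n (by exact_mod_cast (show (k:ℂ) = 2*n by linear_combination hcon))
  -- ===== d part =====
  have hd0 : ∀ j : ℤ, a + (j:ℂ) ≠ 0 → dd j j = aa 0 0 := by
    intro j hj
    have h := hdsupp j j
    rw [show j-j = (0:ℤ) from by ring] at h
    have key : (a+(j:ℂ)) * (dd j j - aa 0 0) = 0 := by
      linear_combination (norm := (push_cast; ring1)) -h
    have := (mul_eq_zero.mp key).resolve_left hj
    exact sub_eq_zero.mp this
  have hdoff : ∀ j k : ℤ, k ≠ j → dd j k = 0 := by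
    intro j k hkj
    by_cases hx : (k:ℂ) - a - 2*(j:ℂ) = 0
    · have inst : ∀ i : ℤ, (i:ℂ) ≠ 0 → (a + (j:ℂ) - (i:ℂ) + b*(i:ℂ)) * dd j k = 0 := by
        intro i hi
        have H := E4 i (j-i) k
        rw [show i+(j-i) = j from by ring, show k-(j-i) = k-j+i from by ring] at H
        have z1 : aa i (k-j+i) = 0 := by
          refine haoff i (k-j+i) ?_
          intro hcon
          exact hkj (by omega)
        have z2 : dd (j-i) (k-i) = 0 := by
          have h := hdsupp (j-i) (k-i)
          rw [show k-i-(j-i) = k-j from by ring, ha0 (k-j) (sub_ne_zero.mpr hkj),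
            mul_zero] at h
          refine (mul_eq_zero.mp h).resolve_left ?_
          intro hcon
          exact hi (by linear_combination (norm := (push_cast; ring1)) hcon - hx)
        rw [z1, z2, mul_zero, mul_zero, sub_zero] at H
        linear_combination (norm := (push_cast; ring1)) (-1/2 : ℂ) * H
      by_contra hne
      have g1 := inst 1 (by norm_num)
      have g2 := inst 2 (by norm_num)
      have e1 : a + (j:ℂ) - 1 + b = 0 := by
        rcases mul_eq_zero.mp g1 with h | h
        · linear_combination (norm := (push_cast; ring1)) h
        · exact absurd h hne
      have e2 : a + (j:ℂ) - 2 + 2*b = 0 := by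
        rcases mul_eq_zero.mp g2 with h | h
        · linear_combination (norm := (push_cast; ring1)) h
        · exact absurd h hne
      have hbeq : b = 1 := by linear_combination e2 - e1
      have haj : a + (j:ℂ) = 0 := by
        rw [hbeq] at e1
        linear_combination e1
      have : (k:ℂ) = (j:ℂ) := by linear_combination hx + haj
      exact hkj (by exact_mod_cast this)
    · have h := hdsupp j k
      rw [ha0 (k-j) (sub_ne_zero.mpr hkj), mul_zero] at h
      exact (mul_eq_zero.mp h).resolve_left hx
  have hddiag : ∀ j : ℤ, dd j j = aa 0 0 := by
    intro j
    by_cases hj : a + (j:ℂ) = 0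
    · by_cases hbe : b = 1
      · subst hbe
        have H := E4 1 j (1+j)
        rw [show (1:ℤ)+j-j = 1 from by ring, show (1:ℤ)+j-1 = j from by ring] at H
        have d1 : dd (1+j) (1+j) = aa 0 0 := by
          refine hd0 (1+j) ?_
          intro hcon
          exact one_ne_zero (α := ℂ) (by linear_combination (norm := (push_cast; ring1)) hcon - hj)
        have a11 : aa 1 1 = aa 0 0 := hadiag 1
        rw [d1, a11] at H
        linear_combination (norm := (push_cast; ring1)) H + (aa 0 0 - dd j j)*hj
      · have H := E4 1 (j-1) j
        rw [show (1:ℤ)+(j-1) = j from by ring, show j-(j-1) = (1:ℤ) from by ring] at H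
        have d1 : dd (j-1) (j-1) = aa 0 0 := by
          refine hd0 (j-1) ?_
          intro hcon
          have : (-1:ℂ) = 0 := by linear_combination (norm := (push_cast; ring1)) hcon - hj
          norm_num at this
        have a11 : aa 1 1 = aa 0 0 := hadiag 1
        rw [d1, a11] at H
        have key : (b-1)*(dd j j - aa 0 0) = 0 := by
          linear_combination (norm := (push_cast; ring1)) (-1/2 : ℂ)*H + (aa 0 0 - dd j j)*hj
        have := (mul_eq_zero.mp key).resolve_left (sub_ne_zero.mpr hbe)
        exact sub_eq_zero.mp this
    · exact hd0 j hj
  refine ⟨?_, hbb, hc, ?_⟩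
  · intro n k
    by_cases h : k = n
    · subst h; simp [hadiag k]
    · simp [h, haoff n k h]
  · intro n k
    by_cases h : k = n
    · subst h; simp [hddiag k]
    · simp [h, hdoff n k h]

private lemma halfDerScalar {W : Type*} [LieRing W] [LieAlgebra ℂ W] (a b : ℂ) (hb : b ≠ -1)
    (B : Module.Basis (ℤ ⊕ ℤ) ℂ W)
    (hLL : ∀ i j : ℤ, ⁅B (Sum.inl i), B (Sum.inl j)⁆ =
        ((i : ℂ) - j) • B (Sum.inl (i + j)))
    (hLI : ∀ i j : ℤ, ⁅B (Sum.inl i), B (Sum.inr j)⁆ =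
        -(a + j + b * i) • B (Sum.inr (i + j)))
    (hII : ∀ i j : ℤ, ⁅B (Sum.inr i), B (Sum.inr j)⁆ = 0)
    (D : W →ₗ[ℂ] W)
    (hD : ∀ x y : W, (2:ℂ) • D ⁅x, y⁆ = ⁅D x, y⁆ + ⁅x, D y⁆) :
    ∀ x : W, D x = (B.repr (D (B (Sum.inl 0))) (Sum.inl 0)) • x := by
  -- coordinate formulas for brackets with basis vectors on the right
  have r1 : ∀ (x : W) (j k : ℤ), B.repr ⁅x, B (Sum.inl j)⁆ (Sum.inl k)
      = ((k:ℂ) - 2*(j:ℂ)) * B.repr x (Sum.inl (k-j)) := by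
    intro x j k
    have h : (B.coord (Sum.inl k)) ∘ₗ (-(LieAlgebra.ad ℂ W (B (Sum.inl j)))) =
        ((k:ℂ) - 2*(j:ℂ)) • B.coord (Sum.inl (k-j)) := by
      apply B.ext
      rintro (m | m)
      · simp only [LinearMap.comp_apply, LinearMap.neg_apply, LieAlgebra.ad_apply,
          LinearMap.smul_apply, Module.Basis.coord_apply, map_neg, Finsupp.neg_apply, hLL,
          map_smul, Finsupp.smul_apply, Module.Basis.repr_self, Finsupp.single_apply, smul_eq_mul,
          Sum.inl.injEq, mul_ite, mul_one, mul_zero]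
        split_ifs with h1 h2 h2
        · have : m = k - j := by omega
          subst this; push_cast; ring
        · omega
        · omega
        · ring
      · simp only [LinearMap.comp_apply, LinearMap.neg_apply, LieAlgebra.ad_apply,
          LinearMap.smul_apply, Module.Basis.coord_apply, map_neg, Finsupp.neg_apply, hLI,
          map_smul, Finsupp.smul_apply, Module.Basis.repr_self, Finsupp.single_apply, smul_eq_mul,
          reduceCtorEq, if_false, mul_zero, neg_zero]
    have h2 := LinearMap.congr_fun h x
    simp only [LinearMap.comp_apply, LinearMap.neg_apply, LieAlgebra.ad_apply,
      LinearMap.smul_apply, Module.Basis.coord_apply, smul_eq_mul, map_neg, Finsupp.neg_apply] at h2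
    rw [← lie_skew, map_neg, Finsupp.neg_apply]
    exact h2
  have r2 : ∀ (x : W) (j k : ℤ), B.repr ⁅x, B (Sum.inl j)⁆ (Sum.inr k)
      = (a + ((k:ℂ)-(j:ℂ)) + b*(j:ℂ)) * B.repr x (Sum.inr (k-j)) := by
    intro x j k
    have h : (B.coord (Sum.inr k)) ∘ₗ (-(LieAlgebra.ad ℂ W (B (Sum.inl j)))) =
        (a + ((k:ℂ)-(j:ℂ)) + b*(j:ℂ)) • B.coord (Sum.inr (k-j)) := by
      apply B.ext
      rintro (m | m)
      · simp only [LinearMap.comp_apply, LinearMap.neg_apply, LieAlgebra.ad_apply,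
          LinearMap.smul_apply, Module.Basis.coord_apply, map_neg, Finsupp.neg_apply, hLL,
          map_smul, Finsupp.smul_apply, Module.Basis.repr_self, Finsupp.single_apply, smul_eq_mul,
          reduceCtorEq, if_false, mul_zero, neg_zero]
      · simp only [LinearMap.comp_apply, LinearMap.neg_apply, LieAlgebra.ad_apply,
          LinearMap.smul_apply, Module.Basis.coord_apply, map_neg, Finsupp.neg_apply, hLI,
          map_smul, Finsupp.smul_apply, Module.Basis.repr_self, Finsupp.single_apply, smul_eq_mul,
          Sum.inr.injEq, mul_ite, mul_one, mul_zero]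
        split_ifs with h1 h2 h2
        · have : m = k - j := by omega
          subst this; push_cast; ring
        · omega
        · omega
        · ring
    have h2 := LinearMap.congr_fun h x
    simp only [LinearMap.comp_apply, LinearMap.neg_apply, LieAlgebra.ad_apply,
      LinearMap.smul_apply, Module.Basis.coord_apply, smul_eq_mul, map_neg, Finsupp.neg_apply] at h2
    rw [← lie_skew, map_neg, Finsupp.neg_apply]
    exact h2
  have r3 : ∀ (x : W) (j k : ℤ), B.repr ⁅x, B (Sum.inr j)⁆ (Sum.inl k) = 0 := by
    intro x j k
    have h : (B.coord (Sum.inl k)) ∘ₗ (-(LieAlgebra.ad ℂ W (B (Sum.inr j)))) =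
        (0 : W →ₗ[ℂ] ℂ) := by
      apply B.ext
      rintro (m | m)
      · have : ⁅B (Sum.inr j), B (Sum.inl m)⁆ = (a + j + b * m) • B (Sum.inr (j + m)) := by
          rw [← lie_skew, hLI m j]
          simp only [neg_smul, neg_neg]
          rw [show m + j = j + m from by ring]
        simp only [LinearMap.comp_apply, LinearMap.neg_apply, LieAlgebra.ad_apply,
          Module.Basis.coord_apply, map_neg, Finsupp.neg_apply, this, map_smul, Finsupp.smul_apply,
          Module.Basis.repr_self, Finsupp.single_apply, smul_eq_mul, reduceCtorEq, if_false,
          mul_zero, neg_zero, LinearMap.zero_apply]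
      · simp only [LinearMap.comp_apply, LinearMap.neg_apply, LieAlgebra.ad_apply,
          Module.Basis.coord_apply, map_neg, Finsupp.neg_apply, hII, map_zero, Finsupp.zero_apply,
          neg_zero, LinearMap.zero_apply]
    have h2 := LinearMap.congr_fun h x
    simp only [LinearMap.comp_apply, LinearMap.neg_apply, LieAlgebra.ad_apply,
      Module.Basis.coord_apply, map_neg, Finsupp.neg_apply, LinearMap.zero_apply] at h2
    rw [← lie_skew, map_neg, Finsupp.neg_apply, h2]
  have r4 : ∀ (x : W) (j k : ℤ), B.repr ⁅x, B (Sum.inr j)⁆ (Sum.inr k)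
      = -(a + (j:ℂ) + b*((k:ℂ)-(j:ℂ))) * B.repr x (Sum.inl (k-j)) := by
    intro x j k
    have h : (B.coord (Sum.inr k)) ∘ₗ (-(LieAlgebra.ad ℂ W (B (Sum.inr j)))) =
        (-(a + (j:ℂ) + b*((k:ℂ)-(j:ℂ)))) • B.coord (Sum.inl (k-j)) := by
      apply B.ext
      rintro (m | m)
      · have hb : ⁅B (Sum.inr j), B (Sum.inl m)⁆ = (a + j + b * m) • B (Sum.inr (j + m)) := by
          rw [← lie_skew, hLI m j]
          simp only [neg_smul, neg_neg]
          rw [show m + j = j + m from by ring]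
        simp only [LinearMap.comp_apply, LinearMap.neg_apply, LieAlgebra.ad_apply,
          LinearMap.smul_apply, Module.Basis.coord_apply, map_neg, Finsupp.neg_apply, hb,
          map_smul, Finsupp.smul_apply, Module.Basis.repr_self, Finsupp.single_apply, smul_eq_mul,
          Sum.inr.injEq, Sum.inl.injEq, mul_ite, mul_one, mul_zero]
        split_ifs with h1 h2 h2
        · have : m = k - j := by omega
          subst this; push_cast; ring
        · omega
        · omega
        · ring
      · simp only [LinearMap.comp_apply, LinearMap.neg_apply, LieAlgebra.ad_apply,
          LinearMap.smul_apply, Module.Basis.coord_apply, map_neg, Finsupp.neg_apply, hII,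
          map_zero, Finsupp.zero_apply, neg_zero, Module.Basis.repr_self, Finsupp.single_apply,
          smul_eq_mul, reduceCtorEq, if_false, mul_zero]
    have h2 := LinearMap.congr_fun h x
    simp only [LinearMap.comp_apply, LinearMap.neg_apply, LieAlgebra.ad_apply,
      LinearMap.smul_apply, Module.Basis.coord_apply, smul_eq_mul, map_neg, Finsupp.neg_apply] at h2
    rw [← lie_skew, map_neg, Finsupp.neg_apply]
    exact h2
  -- the five coefficient equations
  have E1 : ∀ i j k : ℤ, 2*((i:ℂ)-(j:ℂ)) * B.repr (D (B (Sum.inl (i+j)))) (Sum.inl k)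
      = ((k:ℂ)-2*(j:ℂ)) * B.repr (D (B (Sum.inl i))) (Sum.inl (k-j))
        - ((k:ℂ)-2*(i:ℂ)) * B.repr (D (B (Sum.inl j))) (Sum.inl (k-i)) := by
    intro i j k
    have h := hD (B (Sum.inl i)) (B (Sum.inl j))
    rw [hLL i j, map_smul, ← lie_skew (B (Sum.inl i)) (D (B (Sum.inl j)))] at h
    have h2 := congrArg (fun v => B.repr v (Sum.inl k)) h
    simp only [map_add, map_smul, map_neg, Finsupp.smul_apply, Finsupp.add_apply,
      Finsupp.neg_apply, smul_eq_mul] at h2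
    rw [r1 (D (B (Sum.inl i))) j k, r1 (D (B (Sum.inl j))) i k] at h2
    linear_combination (norm := (push_cast; ring1)) h2
  have E2 : ∀ i j k : ℤ, 2*((i:ℂ)-(j:ℂ)) * B.repr (D (B (Sum.inl (i+j)))) (Sum.inr k)
      = (a+((k:ℂ)-(j:ℂ))+b*(j:ℂ)) * B.repr (D (B (Sum.inl i))) (Sum.inr (k-j))
        - (a+((k:ℂ)-(i:ℂ))+b*(i:ℂ)) * B.repr (D (B (Sum.inl j))) (Sum.inr (k-i)) := by
    intro i j k
    have h := hD (B (Sum.inl i)) (B (Sum.inl j))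
    rw [hLL i j, map_smul, ← lie_skew (B (Sum.inl i)) (D (B (Sum.inl j)))] at h
    have h2 := congrArg (fun v => B.repr v (Sum.inr k)) h
    simp only [map_add, map_smul, map_neg, Finsupp.smul_apply, Finsupp.add_apply,
      Finsupp.neg_apply, smul_eq_mul] at h2
    rw [r2 (D (B (Sum.inl i))) j k, r2 (D (B (Sum.inl j))) i k] at h2
    linear_combination (norm := (push_cast; ring1)) h2
  have E3 : ∀ i j k : ℤ, -2*(a+(j:ℂ)+b*(i:ℂ)) * B.repr (D (B (Sum.inr (i+j)))) (Sum.inl k)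
      = -((k:ℂ)-2*(i:ℂ)) * B.repr (D (B (Sum.inr j))) (Sum.inl (k-i)) := by
    intro i j k
    have h := hD (B (Sum.inl i)) (B (Sum.inr j))
    rw [hLI i j, map_smul, ← lie_skew (B (Sum.inl i)) (D (B (Sum.inr j)))] at h
    have h2 := congrArg (fun v => B.repr v (Sum.inl k)) h
    simp only [map_add, map_smul, map_neg, Finsupp.smul_apply, Finsupp.add_apply,
      Finsupp.neg_apply, smul_eq_mul] at h2
    rw [r3 (D (B (Sum.inl i))) j k, r1 (D (B (Sum.inr j))) i k] at h2
    linear_combination (norm := (push_cast; ring1)) h2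
  have E4 : ∀ i j k : ℤ, -2*(a+(j:ℂ)+b*(i:ℂ)) * B.repr (D (B (Sum.inr (i+j)))) (Sum.inr k)
      = -(a+(j:ℂ)+b*((k:ℂ)-(j:ℂ))) * B.repr (D (B (Sum.inl i))) (Sum.inl (k-j))
        - (a+((k:ℂ)-(i:ℂ))+b*(i:ℂ)) * B.repr (D (B (Sum.inr j))) (Sum.inr (k-i)) := by
    intro i j k
    have h := hD (B (Sum.inl i)) (B (Sum.inr j))
    rw [hLI i j, map_smul, ← lie_skew (B (Sum.inl i)) (D (B (Sum.inr j)))] at h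
    have h2 := congrArg (fun v => B.repr v (Sum.inr k)) h
    simp only [map_add, map_smul, map_neg, Finsupp.smul_apply, Finsupp.add_apply,
      Finsupp.neg_apply, smul_eq_mul] at h2
    rw [r4 (D (B (Sum.inl i))) j k, r2 (D (B (Sum.inr j))) i k] at h2
    linear_combination (norm := (push_cast; ring1)) h2
  have E5 : ∀ i j k : ℤ, (0:ℂ) = -(a+(j:ℂ)+b*((k:ℂ)-(j:ℂ))) * B.repr (D (B (Sum.inr i))) (Sum.inl (k-j))
      + (a+(i:ℂ)+b*((k:ℂ)-(i:ℂ))) * B.repr (D (B (Sum.inr j))) (Sum.inl (k-i)) := by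
    intro i j k
    have h := hD (B (Sum.inr i)) (B (Sum.inr j))
    rw [hII i j, map_zero, smul_zero, ← lie_skew (B (Sum.inr i)) (D (B (Sum.inr j)))] at h
    have h2 := congrArg (fun v => B.repr v (Sum.inr k)) h
    simp only [map_add, map_smul, map_neg, Finsupp.smul_apply, Finsupp.add_apply,
      Finsupp.neg_apply, smul_eq_mul, map_zero, Finsupp.zero_apply] at h2
    rw [r4 (D (B (Sum.inr i))) j k, r4 (D (B (Sum.inr j))) i k] at h2
    linear_combination (norm := (push_cast; ring1)) h2
  obtain ⟨Ha, Hb, Hc, Hd⟩ := solveSystem a b hb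
    (fun n k => B.repr (D (B (Sum.inl n))) (Sum.inl k))
    (fun n k => B.repr (D (B (Sum.inl n))) (Sum.inr k))
    (fun n k => B.repr (D (B (Sum.inr n))) (Sum.inl k))
    (fun n k => B.repr (D (B (Sum.inr n))) (Sum.inr k)) E1 E2 E3 E4 E5
  have key : ∀ u, D (B u) = (B.repr (D (B (Sum.inl 0))) (Sum.inl 0)) • B u := by
    intro u
    apply B.repr.injective
    ext w
    rw [map_smul, Finsupp.smul_apply, Module.Basis.repr_self, Finsupp.single_apply, smul_eq_mul]
    rcases u with n | n <;> rcases w with k | k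
    · simp only [Ha n k]
      by_cases h : k = n
      · subst h; simp
      · simp [h, Sum.inl.injEq, Ne.symm h]
    · simp only [Hb n k, reduceCtorEq, if_false, mul_zero]
    · simp only [Hc n k, reduceCtorEq, if_false, mul_zero]
    · simp only [Hd n k]
      by_cases h : k = n
      · subst h; simp
      · simp [h, Sum.inr.injEq, Ne.symm h]
  intro x
  have hDeq : D = (B.repr (D (B (Sum.inl 0))) (Sum.inl 0)) • (LinearMap.id : W →ₗ[ℂ] W) := by
    apply B.ext
    intro u
    simpa using key u
  rw [hDeq]
  simp


theorem stmt13 {W : Type*} [LieRing W] [LieAlgebra ℂ W] (a b : ℂ) (hb : b ≠ -1)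
    (B : Module.Basis (ℤ ⊕ ℤ) ℂ W)
    (hLL : ∀ i j : ℤ, ⁅B (Sum.inl i), B (Sum.inl j)⁆ =
        ((i : ℂ) - j) • B (Sum.inl (i + j)))
    (hLI : ∀ i j : ℤ, ⁅B (Sum.inl i), B (Sum.inr j)⁆ =
        -(a + j + b * i) • B (Sum.inr (i + j)))
    (hII : ∀ i j : ℤ, ⁅B (Sum.inr i), B (Sum.inr j)⁆ = 0)
    (f : W →ₗ[ℂ] W →ₗ[ℂ] W) (hf : IsBider (1/2) f) :
    f = 0 := by
  have h1 : ∀ z x : W, f x z = (B.repr (f (B (Sum.inl 0)) z) (Sum.inl 0)) • x := by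
    intro z
    have hd : ∀ x y : W, (2:ℂ) • (f.flip z) ⁅x, y⁆ = ⁅(f.flip z) x, y⁆ + ⁅x, (f.flip z) y⁆ := by
      intro x y
      have h := hf.1 x y z
      simp only [LinearMap.flip_apply]
      rw [← h, smul_add, smul_smul, smul_smul]
      norm_num
      abel
    have hs := halfDerScalar a b hb B hLL hLI hII (f.flip z) hd
    intro x
    simpa using hs x
  have h2 : ∀ x z : W, f x z = (B.repr (f x (B (Sum.inl 0))) (Sum.inl 0)) • z := by
    intro x
    have hd : ∀ y z' : W, (2:ℂ) • (f x) ⁅y, z'⁆ = ⁅(f x) y, z'⁆ + ⁅y, (f x) z'⁆ := by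
      intro y z'
      have h := hf.2 x y z'
      rw [← h, smul_add, smul_smul, smul_smul]
      norm_num
    have hs := halfDerScalar a b hb B hLL hLI hII (f x) hd
    intro z
    simpa using hs z
  have eq0 : f (B (Sum.inl 0)) (B (Sum.inr 0)) = (B.repr (f (B (Sum.inl 0)) (B (Sum.inr 0))) (Sum.inl 0)) • B (Sum.inl 0) := h1 (B (Sum.inr 0)) (B (Sum.inl 0))
  have eq1 : f (B (Sum.inl 0)) (B (Sum.inr 0)) = (B.repr (f (B (Sum.inl 0)) (B (Sum.inl 0))) (Sum.inl 0)) • B (Sum.inr 0) := h2 (B (Sum.inl 0)) (B (Sum.inr 0))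
  have eqc : (B.repr (f (B (Sum.inl 0)) (B (Sum.inr 0))) (Sum.inl 0)) • B (Sum.inl 0)
      = (B.repr (f (B (Sum.inl 0)) (B (Sum.inl 0))) (Sum.inl 0)) • B (Sum.inr 0) := by
    rw [← eq0, ← eq1]
  have hd0 : (B.repr (f (B (Sum.inl 0)) (B (Sum.inl 0))) (Sum.inl 0)) = 0 := by
    have := congrArg (fun v => B.repr v (Sum.inr (0:ℤ))) eqc
    simpa [Module.Basis.repr_self, Finsupp.single_apply] using this.symm
  have hz : ∀ z : W, f (B (Sum.inl 0)) z = 0 := by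
    intro z
    rw [h2 (B (Sum.inl 0)) z, hd0, zero_smul]
  have hfin : ∀ x z : W, f x z = 0 := by
    intro x z
    rw [h1 z x, hz z]
    simp
  apply LinearMap.ext
  intro x
  apply LinearMap.ext
  intro z
  simpa using hfin x z
end

section
/- Every (1/2)-biderivation of W(a,−1) is a finite linear combination of the maps Φ_n and Ψ_n (n ∈ ℤ), where Φ_n(L_i,L_j) = L_{n+i+j}, Φ_n(L_i,I_j) = Φ_n(I_i,L_j) = I_{n+i+j}, Φ_n(I_i,I_j) = 0, and Ψ_n(L_i,L_j) = I_{n+i+j} with all other values zero. -/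
private lemma intNe (x : ℤ) (h : x ≠ 0) : ((x:ℂ)) ≠ 0 := Int.cast_ne_zero.mpr h

private lemma lemP (p : ℤ → ℤ → ℂ)
    (E : ∀ i j m : ℤ, ((i:ℂ) - j) * p (i+j) m
      = (1/2:ℂ) * ((2*(i:ℂ) - m) * p j (m-i)) - (1/2:ℂ) * ((2*(j:ℂ) - m) * p i (m-j))) :
    ∀ i m : ℤ, p i m = p 0 (m - i) := by
  have nd : ∀ i m : ℤ, m ≠ 2*i → p i m = p 0 (m-i) := by
    intro i m hm
    have e := E i 0 m
    simp only [add_zero, sub_zero, Int.cast_zero, mul_zero, zero_sub] at e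
    have hne : (2*(i:ℂ) - m) ≠ 0 := by
      have h0 := intNe (2*i - m) (by omega)
      push_cast at h0; exact fun h => h0 (by linear_combination h)
    have key : (2*(i:ℂ) - m) * (p i m - p 0 (m-i)) = 0 := by linear_combination 2 * e
    exact sub_eq_zero.mp ((mul_eq_zero.mp key).resolve_left hne)
  intro i m
  by_cases h : m = 2*i
  · subst h
    obtain ⟨j, hj0, hji, hji2⟩ : ∃ j : ℤ, j ≠ 0 ∧ i ≠ j ∧ i ≠ 2*j :=
      ⟨if i = 1 ∨ i = 2 then 3 else 1, by split <;> omega⟩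
    have e1 := E (i-j) j (2*i)
    have k1 : i - j + j = i := by ring
    have k2 : 2*i - (i-j) = i + j := by ring
    have k3 : 2*i - j - (i - j) = i := by ring
    have k4 : i + j - j = i := by ring
    rw [k1, k2] at e1
    rw [nd j (i+j) (by omega), k4] at e1
    rw [nd (i-j) (2*i - j) (by omega), k3] at e1
    have k5 : 2*i - i = i := by ring
    rw [k5]
    have hne : ((i:ℂ) - 2*j) ≠ 0 := by
      have h0 := intNe (i - 2*j) (by omega)
      push_cast at h0; exact fun h => h0 (by linear_combination h)
    push_cast at e1
    have key : ((i:ℂ) - 2*j) * (p i (2*i) - p 0 i) = 0 := by linear_combination e1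
    exact sub_eq_zero.mp ((mul_eq_zero.mp key).resolve_left hne)
  · exact nd i m h

private lemma lemQ (a : ℂ) (q : ℤ → ℤ → ℂ)
    (E : ∀ i j m : ℤ, ((i:ℂ) - j) * q (i+j) m
      = -(1/2:ℂ) * ((a + m - 2*(i:ℂ)) * q j (m-i)) + (1/2:ℂ) * ((a + m - 2*(j:ℂ)) * q i (m-j))) :
    ∀ i m : ℤ, q i m = q 0 (m - i) := by
  have nd : ∀ i m : ℤ, (a + m - 2*(i:ℂ)) ≠ 0 → q i m = q 0 (m-i) := by
    intro i m hm
    have e := E i 0 m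
    simp only [add_zero, sub_zero, Int.cast_zero, mul_zero] at e
    have key : (a + m - 2*(i:ℂ)) * (q i m - q 0 (m-i)) = 0 := by linear_combination (-2) * e
    exact sub_eq_zero.mp ((mul_eq_zero.mp key).resolve_left hm)
  intro i m
  by_cases hdeg : (a + m - 2*(i:ℂ)) = 0
  · obtain ⟨j, hj0, hji, hji2⟩ : ∃ j : ℤ, j ≠ 0 ∧ i ≠ j ∧ i ≠ 2*j :=
      ⟨if i = 1 ∨ i = 2 then 3 else 1, by split <;> omega⟩
    have e1 := E (i-j) j m
    have k1 : i - j + j = i := by ring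
    rw [k1] at e1
    have n1 : q j (m-(i-j)) = q 0 (m-(i-j)-j) := by
      refine nd _ _ ?_
      intro hc
      exact intNe (i-j) (by omega) (by push_cast at hc ⊢; linear_combination hc - hdeg)
    have n2 : q (i-j) (m-j) = q 0 (m-j-(i-j)) := by
      refine nd _ _ ?_
      intro hc
      exact intNe j hj0 (by push_cast at hc ⊢; linear_combination hc - hdeg)
    have k2 : m-(i-j)-j = m - i := by ring
    have k3 : m-j-(i-j) = m - i := by ring
    rw [n1, k2] at e1
    rw [n2, k3] at e1
    have hne : ((i:ℂ) - 2*j) ≠ 0 := by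
      have h0 := intNe (i - 2*j) (by omega)
      push_cast at h0; exact fun h => h0 (by linear_combination h)
    push_cast at e1
    have key : ((i:ℂ) - 2*j) * (q i m - q 0 (m-i)) = 0 := by linear_combination e1
    exact sub_eq_zero.mp ((mul_eq_zero.mp key).resolve_left hne)
  · exact nd i m hdeg

private lemma lemR (a : ℂ) (r : ℤ → ℤ → ℂ)
    (E : ∀ i j m : ℤ, -(a + (j:ℂ) + (-1)*(i:ℂ)) * r (i+j) m
      = (1/2:ℂ) * ((2*(i:ℂ) - m) * r j (m-i))) :
    ∀ i m : ℤ, r i m = 0 := by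
  have nd : ∀ j m : ℤ, (2*a + 2*(j:ℂ) - m) ≠ 0 → r j m = 0 := by
    intro j m hm
    have e := E 0 j m
    simp only [zero_add, sub_zero, Int.cast_zero, mul_zero, zero_sub] at e
    have key : (2*a + 2*(j:ℂ) - m) * r j m = 0 := by linear_combination (-2) * e
    exact (mul_eq_zero.mp key).resolve_left hm
  intro K m
  by_cases hdeg : (2*a + 2*(K:ℂ) - m) = 0
  · obtain ⟨i, hi0, hi⟩ : ∃ i : ℤ, i ≠ 0 ∧ a + (K:ℂ) - 2*(i:ℤ) ≠ 0 := by
      by_cases hc : a + (K:ℂ) - 2 = 0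
      · refine ⟨2, by norm_num, fun h => ?_⟩
        have : (2:ℂ) = 0 := by push_cast at h; linear_combination hc - h
        norm_num at this
      · exact ⟨1, by norm_num, fun h => hc (by push_cast at h; linear_combination h)⟩
    have e1 := E i (K-i) m
    have k1 : i + (K-i) = K := by ring
    rw [k1] at e1
    have n1 : r (K-i) (m-i) = 0 := by
      refine nd _ _ ?_
      intro hc
      exact intNe i hi0 (by push_cast at hc ⊢; linear_combination hdeg - hc)
    rw [n1] at e1
    have key : (a + (K:ℂ) - 2*(i:ℤ)) * r K m = 0 := by
      push_cast at e1 ⊢; linear_combination (-1) * e1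
    exact (mul_eq_zero.mp key).resolve_left hi
  · exact nd K m hdeg

private lemma lemS (a : ℂ) (c : ℤ → ℂ) (s : ℤ → ℤ → ℂ)
    (E : ∀ i j m : ℤ, -(a + (j:ℂ) + (-1)*(i:ℂ)) * s (i+j) m
      = -(1/2:ℂ) * ((a + m - 2*(i:ℂ)) * s j (m-i)) - (1/2:ℂ) * ((a + 2*(j:ℂ) - m) * c (m-j-i))) :
    ∀ i m : ℤ, s i m = c (m - i) := by
  have nd : ∀ j m : ℤ, (a + 2*(j:ℂ) - m) ≠ 0 → s j m = c (m-j) := by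
    intro j m hm
    have e := E 0 j m
    simp only [zero_add, sub_zero, Int.cast_zero, mul_zero, zero_sub] at e
    have key : (a + 2*(j:ℂ) - m) * (s j m - c (m-j)) = 0 := by linear_combination (-2) * e
    exact sub_eq_zero.mp ((mul_eq_zero.mp key).resolve_left hm)
  intro K m
  by_cases hdeg : (a + 2*(K:ℂ) - m) = 0
  · obtain ⟨i, hi0, hi⟩ : ∃ i : ℤ, i ≠ 0 ∧ a + (K:ℂ) - 2*(i:ℤ) ≠ 0 := by
      by_cases hc : a + (K:ℂ) - 2 = 0
      · refine ⟨2, by norm_num, fun h => ?_⟩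
        have : (2:ℂ) = 0 := by push_cast at h; linear_combination hc - h
        norm_num at this
      · exact ⟨1, by norm_num, fun h => hc (by push_cast at h; linear_combination h)⟩
    have e1 := E i (K-i) m
    have k1 : i + (K-i) = K := by ring
    rw [k1] at e1
    have n1 : s (K-i) (m-i) = c (m-i-(K-i)) := by
      refine nd _ _ ?_
      intro hc
      exact intNe i hi0 (by push_cast at hc ⊢; linear_combination hdeg - hc)
    have k2 : m-i-(K-i) = m - K := by ring
    have k3 : m-(K-i)-i = m - K := by ring
    rw [n1, k2] at e1
    rw [k3] at e1
    have key : (a + (K:ℂ) - 2*(i:ℤ)) * (s K m - c (m-K)) = 0 := by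
      push_cast at e1 ⊢; linear_combination (-1) * e1
    exact sub_eq_zero.mp ((mul_eq_zero.mp key).resolve_left hi)
  · exact nd K m hdeg

private lemma finsuppSumZero (v : ℤ →₀ ℂ) : (v.sum fun _ _ => (0:ℂ)) = 0 :=
  Finset.sum_const_zero

theorem stmt14 {W : Type*} [LieRing W] [LieAlgebra ℂ W] (a : ℂ)
    (B : Module.Basis (ℤ ⊕ ℤ) ℂ W)
    (hLL : ∀ i j : ℤ, ⁅B (Sum.inl i), B (Sum.inl j)⁆ =
        ((i : ℂ) - j) • B (Sum.inl (i + j)))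
    (hLI : ∀ i j : ℤ, ⁅B (Sum.inl i), B (Sum.inr j)⁆ =
        -(a + j + (-1) * i) • B (Sum.inr (i + j)))
    (hII : ∀ i j : ℤ, ⁅B (Sum.inr i), B (Sum.inr j)⁆ = 0)
    (f : W →ₗ[ℂ] W →ₗ[ℂ] W) (hf : IsBider (1/2) f) :
    ∃ c d : ℤ →₀ ℂ,
      (∀ i j : ℤ, f (B (Sum.inl i)) (B (Sum.inl j)) =
          (c.sum fun n t => t • B (Sum.inl (n + i + j))) +
          (d.sum fun n t => t • B (Sum.inr (n + i + j)))) ∧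
      (∀ i j : ℤ, f (B (Sum.inl i)) (B (Sum.inr j)) =
          c.sum fun n t => t • B (Sum.inr (n + i + j))) ∧
      (∀ i j : ℤ, f (B (Sum.inr i)) (B (Sum.inl j)) =
          c.sum fun n t => t • B (Sum.inr (n + i + j))) ∧
      (∀ i j : ℤ, f (B (Sum.inr i)) (B (Sum.inr j)) = 0) := by
  have brLl : ∀ (i m : ℤ) (w : W), B.repr ⁅B (Sum.inl i), w⁆ (Sum.inl m)
      = (2*(i:ℂ) - m) * B.repr w (Sum.inl (m - i)) := by
    intro i m w
    have key : (Finsupp.lapply (Sum.inl m) : ((ℤ ⊕ ℤ) →₀ ℂ) →ₗ[ℂ] ℂ) ∘ₗ B.repr.toLinearMap ∘ₗ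
        ((LieAlgebra.ad ℂ W (B (Sum.inl i))) : W →ₗ[ℂ] W)
        = (2*(i:ℂ) - m) • ((Finsupp.lapply (Sum.inl (m - i)) : ((ℤ ⊕ ℤ) →₀ ℂ) →ₗ[ℂ] ℂ) ∘ₗ B.repr.toLinearMap) := by
      apply B.ext
      rintro (u | u) <;>
        simp only [LinearMap.coe_comp, Function.comp_apply, LinearMap.smul_apply,
          LinearEquiv.coe_coe, Module.Basis.repr_self, Finsupp.lapply_apply, LieAlgebra.ad_apply]
      · rw [hLL]
        simp only [map_smul, Module.Basis.repr_self, Finsupp.smul_single, smul_eq_mul, mul_one,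
          Finsupp.single_apply, Sum.inl.injEq]
        split_ifs with h1 h2 h2
        · subst h2; push_cast; ring
        · omega
        · omega
        · simp
      · rw [hLI]
        simp [Finsupp.single_apply]
    simpa using congrArg (fun φ => φ w) key
  have brLr : ∀ (i m : ℤ) (w : W), B.repr ⁅B (Sum.inl i), w⁆ (Sum.inr m)
      = -(a + m - 2*(i:ℂ)) * B.repr w (Sum.inr (m - i)) := by
    intro i m w
    have key : (Finsupp.lapply (Sum.inr m) : ((ℤ ⊕ ℤ) →₀ ℂ) →ₗ[ℂ] ℂ) ∘ₗ B.repr.toLinearMap ∘ₗ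
        ((LieAlgebra.ad ℂ W (B (Sum.inl i))) : W →ₗ[ℂ] W)
        = (-(a + m - 2*(i:ℂ))) • ((Finsupp.lapply (Sum.inr (m - i)) : ((ℤ ⊕ ℤ) →₀ ℂ) →ₗ[ℂ] ℂ) ∘ₗ B.repr.toLinearMap) := by
      apply B.ext
      rintro (u | u) <;>
        simp only [LinearMap.coe_comp, Function.comp_apply, LinearMap.smul_apply,
          LinearEquiv.coe_coe, Module.Basis.repr_self, Finsupp.lapply_apply, LieAlgebra.ad_apply]
      · rw [hLL]
        simp [Finsupp.single_apply]
      · rw [hLI]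
        simp only [map_smul, Module.Basis.repr_self, Finsupp.smul_single, smul_eq_mul, mul_one,
          Finsupp.single_apply, Sum.inr.injEq]
        split_ifs with h1 h2 h2
        · subst h2; push_cast; ring
        · omega
        · omega
        · simp
    simpa using congrArg (fun φ => φ w) key
  have brIl : ∀ (i m : ℤ) (w : W), B.repr ⁅B (Sum.inr i), w⁆ (Sum.inl m) = 0 := by
    intro i m w
    have key : (Finsupp.lapply (Sum.inl m) : ((ℤ ⊕ ℤ) →₀ ℂ) →ₗ[ℂ] ℂ) ∘ₗ B.repr.toLinearMap ∘ₗ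
        ((LieAlgebra.ad ℂ W (B (Sum.inr i))) : W →ₗ[ℂ] W) = 0 := by
      apply B.ext
      rintro (u | u) <;>
        simp only [LinearMap.coe_comp, Function.comp_apply, LinearMap.zero_apply,
          LinearEquiv.coe_coe, Finsupp.lapply_apply, LieAlgebra.ad_apply]
      · rw [← lie_skew, hLI]
        simp [Finsupp.single_apply]
      · rw [hII]
        simp
    simpa using congrArg (fun φ => φ w) key
  have brIr : ∀ (i m : ℤ) (w : W), B.repr ⁅B (Sum.inr i), w⁆ (Sum.inr m)
      = (a + 2*(i:ℂ) - m) * B.repr w (Sum.inl (m - i)) := by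
    intro i m w
    have key : (Finsupp.lapply (Sum.inr m) : ((ℤ ⊕ ℤ) →₀ ℂ) →ₗ[ℂ] ℂ) ∘ₗ B.repr.toLinearMap ∘ₗ
        ((LieAlgebra.ad ℂ W (B (Sum.inr i))) : W →ₗ[ℂ] W)
        = (a + 2*(i:ℂ) - m) • ((Finsupp.lapply (Sum.inl (m - i)) : ((ℤ ⊕ ℤ) →₀ ℂ) →ₗ[ℂ] ℂ) ∘ₗ B.repr.toLinearMap) := by
      apply B.ext
      rintro (u | u) <;>
        simp only [LinearMap.coe_comp, Function.comp_apply, LinearMap.smul_apply,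
          LinearEquiv.coe_coe, Module.Basis.repr_self, Finsupp.lapply_apply, LieAlgebra.ad_apply]
      · rw [← lie_skew, hLI]
        simp only [map_neg, map_smul, Module.Basis.repr_self, Finsupp.smul_single, smul_eq_mul, mul_one,
          Finsupp.single_apply, Sum.inl.injEq, Sum.inr.injEq, Finsupp.neg_apply, smul_eq_mul]
        split_ifs with h1 h2 h2
        · subst h2; push_cast; ring
        · omega
        · omega
        · simp
      · rw [hII]
        simp
    simpa using congrArg (fun φ => φ w) key

  -- Step A: classification of (1/2)-derivations
  have stepA : ∀ D : W →ₗ[ℂ] W,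
      (∀ x y : W, D ⁅x, y⁆ = (1/2:ℂ) • ⁅x, D y⁆ + (1/2:ℂ) • ⁅D x, y⁆) →
      (∀ i m : ℤ, B.repr (D (B (Sum.inl i))) (Sum.inl m)
          = B.repr (D (B (Sum.inl 0))) (Sum.inl (m - i))) ∧
      (∀ i m : ℤ, B.repr (D (B (Sum.inl i))) (Sum.inr m)
          = B.repr (D (B (Sum.inl 0))) (Sum.inr (m - i))) ∧
      (∀ i m : ℤ, B.repr (D (B (Sum.inr i))) (Sum.inl m) = 0) ∧
      (∀ i m : ℤ, B.repr (D (B (Sum.inr i))) (Sum.inr m)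
          = B.repr (D (B (Sum.inl 0))) (Sum.inl (m - i))) := by
    intro D hD
    have EqL : ∀ i j m : ℤ, ((i:ℂ) - j) * B.repr (D (B (Sum.inl (i+j)))) (Sum.inl m)
        = (1/2:ℂ) * ((2*(i:ℂ) - m) * B.repr (D (B (Sum.inl j))) (Sum.inl (m-i)))
        - (1/2:ℂ) * ((2*(j:ℂ) - m) * B.repr (D (B (Sum.inl i))) (Sum.inl (m-j))) := by
      intro i j m
      have h := hD (B (Sum.inl i)) (B (Sum.inl j))
      rw [hLL, ← lie_skew (D (B (Sum.inl i))) (B (Sum.inl j))] at h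
      have h2 := congrArg (fun v => B.repr v (Sum.inl m)) h
      simp only [map_smul, map_add, map_neg, Finsupp.smul_apply, Finsupp.add_apply,
        Finsupp.neg_apply, smul_eq_mul] at h2
      rw [brLl i m (D (B (Sum.inl j))), brLl j m (D (B (Sum.inl i)))] at h2
      linear_combination h2
    have EqI : ∀ i j m : ℤ, ((i:ℂ) - j) * B.repr (D (B (Sum.inl (i+j)))) (Sum.inr m)
        = -(1/2:ℂ) * ((a + m - 2*(i:ℂ)) * B.repr (D (B (Sum.inl j))) (Sum.inr (m-i)))
        + (1/2:ℂ) * ((a + m - 2*(j:ℂ)) * B.repr (D (B (Sum.inl i))) (Sum.inr (m-j))) := by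
      intro i j m
      have h := hD (B (Sum.inl i)) (B (Sum.inl j))
      rw [hLL, ← lie_skew (D (B (Sum.inl i))) (B (Sum.inl j))] at h
      have h2 := congrArg (fun v => B.repr v (Sum.inr m)) h
      simp only [map_smul, map_add, map_neg, Finsupp.smul_apply, Finsupp.add_apply,
        Finsupp.neg_apply, smul_eq_mul] at h2
      rw [brLr i m (D (B (Sum.inl j))), brLr j m (D (B (Sum.inl i)))] at h2
      linear_combination h2
    have EqIL : ∀ i j m : ℤ, -(a + (j:ℂ) + (-1)*(i:ℂ)) * B.repr (D (B (Sum.inr (i+j)))) (Sum.inl m)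
        = (1/2:ℂ) * ((2*(i:ℂ) - m) * B.repr (D (B (Sum.inr j))) (Sum.inl (m-i))) := by
      intro i j m
      have h := hD (B (Sum.inl i)) (B (Sum.inr j))
      rw [hLI, ← lie_skew (D (B (Sum.inl i))) (B (Sum.inr j))] at h
      have h2 := congrArg (fun v => B.repr v (Sum.inl m)) h
      simp only [map_smul, map_add, map_neg, Finsupp.smul_apply, Finsupp.add_apply,
        Finsupp.neg_apply, smul_eq_mul] at h2
      rw [brLl i m (D (B (Sum.inr j))), brIl j m (D (B (Sum.inl i)))] at h2
      linear_combination h2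
    have EqII : ∀ i j m : ℤ, -(a + (j:ℂ) + (-1)*(i:ℂ)) * B.repr (D (B (Sum.inr (i+j)))) (Sum.inr m)
        = -(1/2:ℂ) * ((a + m - 2*(i:ℂ)) * B.repr (D (B (Sum.inr j))) (Sum.inr (m-i)))
        - (1/2:ℂ) * ((a + 2*(j:ℂ) - m) * B.repr (D (B (Sum.inl i))) (Sum.inl (m-j))) := by
      intro i j m
      have h := hD (B (Sum.inl i)) (B (Sum.inr j))
      rw [hLI, ← lie_skew (D (B (Sum.inl i))) (B (Sum.inr j))] at h
      have h2 := congrArg (fun v => B.repr v (Sum.inr m)) h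
      simp only [map_smul, map_add, map_neg, Finsupp.smul_apply, Finsupp.add_apply,
        Finsupp.neg_apply, smul_eq_mul] at h2
      rw [brLr i m (D (B (Sum.inr j))), brIr j m (D (B (Sum.inl i)))] at h2
      linear_combination h2
    have P : ∀ i m : ℤ, B.repr (D (B (Sum.inl i))) (Sum.inl m)
        = B.repr (D (B (Sum.inl 0))) (Sum.inl (m - i)) :=
      lemP (fun i m => B.repr (D (B (Sum.inl i))) (Sum.inl m)) EqL
    have Q : ∀ i m : ℤ, B.repr (D (B (Sum.inl i))) (Sum.inr m)
        = B.repr (D (B (Sum.inl 0))) (Sum.inr (m - i)) :=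
      lemQ a (fun i m => B.repr (D (B (Sum.inl i))) (Sum.inr m)) EqI
    have R : ∀ i m : ℤ, B.repr (D (B (Sum.inr i))) (Sum.inl m) = 0 :=
      lemR a (fun i m => B.repr (D (B (Sum.inr i))) (Sum.inl m)) EqIL
    have S : ∀ i m : ℤ, B.repr (D (B (Sum.inr i))) (Sum.inr m)
        = B.repr (D (B (Sum.inl 0))) (Sum.inl (m - i)) := by
      refine lemS a (fun n => B.repr (D (B (Sum.inl 0))) (Sum.inl n))
        (fun i m => B.repr (D (B (Sum.inr i))) (Sum.inr m)) ?_
      intro i j m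
      have h := EqII i j m
      rw [P i (m-j)] at h
      exact h
    exact ⟨P, Q, R, S⟩
  obtain ⟨hf1, hf2⟩ := hf
  have A1 : ∀ z : W, _ := fun z : W => stepA (f.flip z)
    (by intro x y; simp only [LinearMap.flip_apply]; exact (hf1 x y z).symm)
  have A2 := fun x : W => stepA (f x) (fun y z => ((hf2 x y z).symm.trans (add_comm _ _)))
  simp only [LinearMap.flip_apply] at A1
  set c : ℤ →₀ ℂ := Finsupp.comapDomain Sum.inl
    (B.repr (f (B (Sum.inl 0)) (B (Sum.inl 0)))) Sum.inl_injective.injOn with hc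
  set d : ℤ →₀ ℂ := Finsupp.comapDomain Sum.inr
    (B.repr (f (B (Sum.inl 0)) (B (Sum.inl 0)))) Sum.inr_injective.injOn with hd
  have hcn : ∀ n : ℤ, c n = B.repr (f (B (Sum.inl 0)) (B (Sum.inl 0))) (Sum.inl n) :=
    fun n => rfl
  have hdn : ∀ n : ℤ, d n = B.repr (f (B (Sum.inl 0)) (B (Sum.inl 0))) (Sum.inr n) :=
    fun n => rfl
  have key : ∀ (v : ℤ →₀ ℂ) (i j k : ℤ),
      (v.sum fun n t => if n + i + j = k then t else 0) = v (k - i - j) := by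
    intro v i j k
    have h1 : (v.sum fun n t => if n + i + j = k then t else 0)
        = v.sum fun n t => if n = k - i - j then t else 0 :=
      Finsupp.sum_congr (fun x _ => by split_ifs <;> first | rfl | omega)
    rw [h1, Finsupp.sum_ite_eq']
    split_ifs with h
    · rfl
    · exact (Finsupp.notMem_support_iff.mp h).symm
  have FLLl : ∀ i j m : ℤ, B.repr (f (B (Sum.inl i)) (B (Sum.inl j))) (Sum.inl m)
      = c (m - i - j) := by
    intro i j m
    rw [(A1 (B (Sum.inl j))).1 i m, (A2 (B (Sum.inl 0))).1 j (m - i), hcn]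
  have FLLr : ∀ i j m : ℤ, B.repr (f (B (Sum.inl i)) (B (Sum.inl j))) (Sum.inr m)
      = d (m - i - j) := by
    intro i j m
    rw [(A1 (B (Sum.inl j))).2.1 i m, (A2 (B (Sum.inl 0))).2.1 j (m - i), hdn]
  have FLIl : ∀ i j m : ℤ, B.repr (f (B (Sum.inl i)) (B (Sum.inr j))) (Sum.inl m) = 0 :=
    fun i j m => (A2 (B (Sum.inl i))).2.2.1 j m
  have FLIr : ∀ i j m : ℤ, B.repr (f (B (Sum.inl i)) (B (Sum.inr j))) (Sum.inr m)
      = c (m - i - j) := by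
    intro i j m
    rw [(A2 (B (Sum.inl i))).2.2.2 j m, (A1 (B (Sum.inl 0))).1 i (m - j), hcn,
      show m - j - i = m - i - j from by omega]
  have FILl : ∀ i j m : ℤ, B.repr (f (B (Sum.inr i)) (B (Sum.inl j))) (Sum.inl m) = 0 :=
    fun i j m => (A1 (B (Sum.inl j))).2.2.1 i m
  have FILr : ∀ i j m : ℤ, B.repr (f (B (Sum.inr i)) (B (Sum.inl j))) (Sum.inr m)
      = c (m - i - j) := by
    intro i j m
    rw [(A1 (B (Sum.inl j))).2.2.2 i m, (A2 (B (Sum.inl 0))).1 j (m - i), hcn]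
  have FIIl : ∀ i j m : ℤ, B.repr (f (B (Sum.inr i)) (B (Sum.inr j))) (Sum.inl m) = 0 :=
    fun i j m => (A1 (B (Sum.inr j))).2.2.1 i m
  have FIIr : ∀ i j m : ℤ, B.repr (f (B (Sum.inr i)) (B (Sum.inr j))) (Sum.inr m) = 0 := by
    intro i j m
    rw [(A1 (B (Sum.inr j))).2.2.2 i m, (A2 (B (Sum.inl 0))).2.2.1 j (m - i)]
  refine ⟨c, d, ?_, ?_, ?_, ?_⟩
  · intro i j
    apply B.repr.injective
    ext m'
    simp only [map_add, map_finsuppSum, map_smul, Module.Basis.repr_self, Finsupp.smul_single,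
      smul_eq_mul, mul_one, Finsupp.sum_apply, Finsupp.add_apply, Finsupp.single_apply]
    rcases m' with m | m
    · rw [FLLl]
      simp only [Sum.inl.injEq, reduceCtorEq, if_false, finsuppSumZero, add_zero]
      rw [key]
    · rw [FLLr]
      simp only [Sum.inr.injEq, reduceCtorEq, if_false, finsuppSumZero, zero_add]
      rw [key]
  · intro i j
    apply B.repr.injective
    ext m'
    simp only [map_finsuppSum, map_smul, Module.Basis.repr_self, Finsupp.smul_single,
      smul_eq_mul, mul_one, Finsupp.sum_apply, Finsupp.single_apply]
    rcases m' with m | m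
    · rw [FLIl]
      simp only [reduceCtorEq, if_false, finsuppSumZero]
    · rw [FLIr]
      simp only [Sum.inr.injEq]
      rw [key]
  · intro i j
    apply B.repr.injective
    ext m'
    simp only [map_finsuppSum, map_smul, Module.Basis.repr_self, Finsupp.smul_single,
      smul_eq_mul, mul_one, Finsupp.sum_apply, Finsupp.single_apply]
    rcases m' with m | m
    · rw [FILl]
      simp only [reduceCtorEq, if_false, finsuppSumZero]
    · rw [FILr]
      simp only [Sum.inr.injEq]
      rw [key]
  · intro i j
    apply B.repr.injective
    rw [map_zero]
    ext m'
    rcases m' with m | m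
    · rw [FIIl]; rfl
    · rw [FIIr]; rfl
end

section
/- The bilinear map Θ^{(0,−1)} on W(0,−1) defined by Θ^{(0,−1)}(L_i,L_j) = (i−j)I_{i+j} and Θ^{(0,−1)}(L_i,I_j) = Θ^{(0,−1)}(I_i,L_j) = Θ^{(0,−1)}(I_i,I_j) = 0 is a skew-symmetric 1-biderivation of W(0,−1). -/
theorem stmt15 {W : Type*} [LieRing W] [LieAlgebra ℂ W]
    (B : Module.Basis (ℤ ⊕ ℤ) ℂ W)
    (hLL : ∀ i j : ℤ, ⁅B (Sum.inl i), B (Sum.inl j)⁆ =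
        ((i : ℂ) - j) • B (Sum.inl (i + j)))
    (hLI : ∀ i j : ℤ, ⁅B (Sum.inl i), B (Sum.inr j)⁆ =
        ((i : ℂ) - j) • B (Sum.inr (i + j)))
    (hII : ∀ i j : ℤ, ⁅B (Sum.inr i), B (Sum.inr j)⁆ = 0)
    (f : W →ₗ[ℂ] W →ₗ[ℂ] W)
    (h1 : ∀ i j : ℤ, f (B (Sum.inl i)) (B (Sum.inl j)) =
        ((i : ℂ) - j) • B (Sum.inr (i + j)))
    (h2 : ∀ i j : ℤ, f (B (Sum.inl i)) (B (Sum.inr j)) = 0)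
    (h3 : ∀ i j : ℤ, f (B (Sum.inr i)) (B (Sum.inl j)) = 0)
    (h4 : ∀ i j : ℤ, f (B (Sum.inr i)) (B (Sum.inr j)) = 0) :
    IsBider 1 f ∧ ∀ x y : W, f x y = -f y x := by
  have hIL : ∀ i j : ℤ, ⁅B (Sum.inr i), B (Sum.inl j)⁆ =
      ((i : ℂ) - j) • B (Sum.inr (j + i)) := by
    intro i j
    rw [← lie_skew, hLI j i]
    module
  have hspan : ∀ w : W, w ∈ Submodule.span ℂ (Set.range B) := fun w => by
    rw [B.span_eq]; trivial
  refine ⟨⟨?_, ?_⟩, ?_⟩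
  · intro x y z
    simp only [one_smul]
    induction hspan x using Submodule.span_induction with
    | mem w hw =>
      obtain ⟨a, rfl⟩ := hw
      induction hspan y using Submodule.span_induction with
      | mem w hw =>
        obtain ⟨b, rfl⟩ := hw
        induction hspan z using Submodule.span_induction with
        | mem w hw =>
          obtain ⟨c, rfl⟩ := hw
          rcases a with i | i <;> rcases b with j | j <;> rcases c with k | k <;>
            simp only [h1, h2, h3, h4, hLL, hLI, hIL, hII, map_smul, map_zero,
              LinearMap.smul_apply, LinearMap.zero_apply, lie_smul, smul_lie,
              smul_zero, zero_smul, lie_zero, zero_lie, smul_smul, add_zero,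
              zero_add] <;>
            push_cast <;> ring_nf <;> module
        | zero => simp
        | add u v _ _ hu hv =>
          simp only [map_add, lie_add, add_lie, LinearMap.add_apply] at *
          rw [← hu, ← hv]; abel
        | smul c u _ hu =>
          simp only [map_smul, lie_smul, smul_lie, LinearMap.smul_apply] at *
          rw [← smul_add, hu]
      | zero => simp
      | add u v _ _ hu hv =>
        simp only [map_add, lie_add, add_lie, LinearMap.add_apply] at *
        rw [← hu, ← hv]; abel
      | smul c u _ hu =>
        simp only [map_smul, lie_smul, smul_lie, LinearMap.smul_apply] at *
        rw [← smul_add, hu]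
    | zero => simp
    | add u v _ _ hu hv =>
      simp only [map_add, lie_add, add_lie, LinearMap.add_apply] at *
      rw [← hu, ← hv]; abel
    | smul c u _ hu =>
      simp only [map_smul, lie_smul, smul_lie, LinearMap.smul_apply] at *
      rw [← smul_add, hu]
  · intro x y z
    simp only [one_smul]
    induction hspan x using Submodule.span_induction with
    | mem w hw =>
      obtain ⟨a, rfl⟩ := hw
      induction hspan y using Submodule.span_induction with
      | mem w hw =>
        obtain ⟨b, rfl⟩ := hw
        induction hspan z using Submodule.span_induction with
        | mem w hw =>
          obtain ⟨c, rfl⟩ := hw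
          rcases a with i | i <;> rcases b with j | j <;> rcases c with k | k <;>
            simp only [h1, h2, h3, h4, hLL, hLI, hIL, hII, map_smul, map_zero,
              LinearMap.smul_apply, LinearMap.zero_apply, lie_smul, smul_lie,
              smul_zero, zero_smul, lie_zero, zero_lie, smul_smul, add_zero,
              zero_add] <;>
            push_cast <;> ring_nf <;> module
        | zero => simp
        | add u v _ _ hu hv =>
          simp only [map_add, lie_add, add_lie, LinearMap.add_apply] at *
          rw [← hu, ← hv]; abel
        | smul c u _ hu =>
          simp only [map_smul, lie_smul, smul_lie, LinearMap.smul_apply] at *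
          rw [← smul_add, hu]
      | zero => simp
      | add u v _ _ hu hv =>
        simp only [map_add, lie_add, add_lie, LinearMap.add_apply] at *
        rw [← hu, ← hv]; abel
      | smul c u _ hu =>
        simp only [map_smul, lie_smul, smul_lie, LinearMap.smul_apply] at *
        rw [← smul_add, hu]
    | zero => simp
    | add u v _ _ hu hv =>
      simp only [map_add, lie_add, add_lie, LinearMap.add_apply] at *
      rw [← hu, ← hv]; abel
    | smul c u _ hu =>
      simp only [map_smul, lie_smul, smul_lie, LinearMap.smul_apply] at *
      rw [← smul_add, hu]
  · have hsk : f = -f.flip := by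
      refine B.ext fun a => B.ext fun b => ?_
      rcases a with i | i <;> rcases b with j | j <;>
        simp only [h1, h2, h3, h4, LinearMap.neg_apply, LinearMap.flip_apply,
          neg_zero] <;> push_cast <;> ring_nf <;> module
    intro x y
    have := LinearMap.congr_fun (LinearMap.congr_fun hsk x) y
    simpa using this
end

section
/- Every commuting linear map of the Witt algebra is a complex scalar multiple of the identity map. -/
theorem stmt17 {W : Type*} [LieRing W] [LieAlgebra ℂ W]
    (B : Module.Basis ℤ ℂ W)
    (hB : ∀ m n : ℤ, ⁅B m, B n⁆ = ((m : ℂ) - n) • B (m + n))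
    (φ : W →ₗ[ℂ] W) (hφ : ∀ x : W, ⁅φ x, x⁆ = 0) :
    ∃ c : ℂ, ∀ x : W, φ x = c • x := by
  -- polarization
  have comm : ∀ x y : W, ⁅φ x, y⁆ = ⁅x, φ y⁆ := by
    intro x y
    have h := hφ (x + y)
    simp only [map_add, add_lie, lie_add, hφ x, hφ y] at h
    have : ⁅φ x, y⁆ + ⁅φ y, x⁆ = 0 := by linear_combination (norm := abel_nf) h
    rw [← lie_skew x (φ y)]
    linear_combination (norm := abel_nf) this
  -- key coefficient formula
  have key : ∀ (m j : ℤ) (x : W),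
      B.repr ⁅x, B m⁆ (j + m) = ((j : ℂ) - m) * B.repr x j := by
    intro m j
    let f : W →ₗ[ℂ] ℂ :=
      { toFun := fun x => B.repr ⁅x, B m⁆ (j + m)
        map_add' := by intro a b; simp [add_lie]
        map_smul' := by intro c a; simp [smul_lie] }
    let g : W →ₗ[ℂ] ℂ :=
      { toFun := fun x => ((j : ℂ) - m) * B.repr x j
        map_add' := by intro a b; simp; ring
        map_smul' := by intro c a; simp; ring }
    have hfg : f = g := by
      apply B.ext
      intro k
      show B.repr ⁅B k, B m⁆ (j + m) = ((j : ℂ) - m) * B.repr (B k) j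
      rw [hB k m]
      by_cases hkj : k = j
      · subst hkj; simp
      · have : k + m ≠ j + m := by omega
        simp [Module.Basis.repr_self, Finsupp.single_apply, hkj, this]
    intro x
    exact DFunLike.congr_fun hfg x
  -- off-diagonal coefficients vanish
  have diag : ∀ m k : ℤ, k ≠ m → B.repr (φ (B m)) k = 0 := by
    intro m k hk
    have h := key m k (φ (B m))
    rw [hφ (B m)] at h
    simp at h
    rcases h with h | h
    · exact absurd (by exact_mod_cast sub_eq_zero.mp h) hk
    · exact h
  set c : ℂ := B.repr (φ (B 0)) 0 with hc
  -- diagonal coefficients are constant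
  have const : ∀ m : ℤ, B.repr (φ (B m)) m = c := by
    intro m
    by_cases hm : m = 0
    · subst hm; rfl
    · have h := comm (B m) (B 0)
      have l := key 0 m (φ (B m))
      have r := key m 0 (φ (B 0))
      have hlr : ⁅B m, φ (B 0)⁆ = -⁅φ (B 0), B m⁆ := by rw [← lie_skew]
      rw [h, hlr] at l
      simp only [map_neg, Finsupp.neg_apply, show m + (0:ℤ) = 0 + m by ring, r] at l
      have hm' : (m : ℂ) ≠ 0 := Int.cast_ne_zero.mpr hm
      have hmc : (m : ℂ) * B.repr (φ (B m)) m = (m : ℂ) * c := by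
        push_cast at l ⊢
        linear_combination -l
      exact mul_left_cancel₀ hm' hmc
  refine ⟨c, ?_⟩
  have hφeq : φ = c • (LinearMap.id : W →ₗ[ℂ] W) := by
    apply B.ext
    intro m
    have : B.repr (φ (B m)) = B.repr (c • B m) := by
      ext k
      by_cases hk : k = m
      · subst hk; simp [const k]
      · simp [diag m k hk, Finsupp.single_apply, hk, Ne.symm hk]
    have := B.repr.injective this
    simpa using this
  intro x
  rw [hφeq]
  simp
end
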